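/- arXiv:1911.03204 — 14 statements merged into one kernel-verified Lean document; each statement's English description precedes it below -/
import Mathlib

section
/- Let F be a finite family of subsets of a finite set V and ε > 0 a rational. Then there exists a distribution π on F (a function π: F → ℚ≥0 with ∑_{X∈F} π(X) = 1) such that for every v ∈ V, ∑_{X∈F, v∈X} π(X) ≤ ε, if and only if for every nonnegative weight function w: V → ℚ≥0 there exists X ∈ F with ∑_{v∈X} w(v) ≤ ε · ∑_{v∈V} w(v). -/
/-!
Averaging `∑_{v ∈ X} w v` against `π` and exchanging the order of summation gives the forward
direction. Conversely, if the linear program `π ≥ 0`, `∑ π X = 1`, `∑_{X ∋ v} π X ≤ ε` is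
infeasible, Farkas' lemma yields `(y₀, y)` with `y ≤ 0`, `y₀ + ∑_{v ∈ X} y v ≤ 0` for all
`X ∈ F` and `y₀ + ε ∑ y v > 0`, so the weight `w = -y` has `∑_{v ∈ X} w v > ε ∑ w v` for every
`X ∈ F`. Farkas' lemma itself goes by induction on the number of generators: when the
certificate `y` of the smaller cone fails on the new generator `a₀`, project everything along
`a₀` onto `ker y` and recurse.
-/

open Finset Matrix

section Farkas

variable {𝕜 ι J : Type*} [Field 𝕜] [LinearOrder 𝕜] [IsStrictOrderedRing 𝕜] [Fintype ι]

lemma dotProduct_self_pos_of_ne_zero {b : ι → 𝕜} (hb : b ≠ 0) : 0 < b ⬝ᵥ b :=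
  (Fintype.sum_nonneg fun i => mul_self_nonneg (b i)).lt_of_ne' (mt dotProduct_self_eq_zero.1 hb)

lemma sub_smul_dotProduct_eq_dotProduct_sub_smul (y z a x : ι → 𝕜) :
    (z - (z ⬝ᵥ a / (y ⬝ᵥ a)) • y) ⬝ᵥ x = z ⬝ᵥ (x - (y ⬝ᵥ x / (y ⬝ᵥ a)) • a) := by
  simp only [sub_dotProduct, dotProduct_sub, smul_dotProduct, dotProduct_smul, smul_eq_mul]
  ring

theorem mem_hull_image_or_exists_separating (s : Finset J) (a : J → ι → 𝕜) (b : ι → 𝕜) :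
    b ∈ PointedCone.hull 𝕜 (a '' s) ∨ ∃ y, (∀ j ∈ s, y ⬝ᵥ a j ≤ 0) ∧ 0 < y ⬝ᵥ b := by
  induction s using Finset.cons_induction generalizing a b with
  | empty =>
    by_cases hb : b = 0
    · simp [hb]
    · exact .inr ⟨b, by simp, dotProduct_self_pos_of_ne_zero hb⟩
  | cons j₀ s hj₀ ih =>
    rw [coe_cons, Set.image_insert_eq]
    set C := PointedCone.hull 𝕜 (insert (a j₀) (a '' s))
    have ha₀ : a j₀ ∈ C := PointedCone.subset_hull (Set.mem_insert _ _)
    have hsub : a '' s ⊆ insert (a j₀) (a '' s) := Set.subset_insert _ _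
    rcases ih a b with hb | ⟨y, hy, hyb⟩
    · exact .inl (Submodule.span_mono hsub hb)
    obtain hya | hya := le_or_gt (y ⬝ᵥ a j₀) 0
    · exact .inr ⟨y, (forall_mem_cons _ _).2 ⟨hya, hy⟩, hyb⟩
    let P : (ι → 𝕜) → ι → 𝕜 := fun x => x - (y ⬝ᵥ x / (y ⬝ᵥ a j₀)) • a j₀
    rcases ih (P ∘ a) (P b) with hPb | ⟨z, hz, hzb⟩
    · have hPa : PointedCone.hull 𝕜 ((P ∘ a) '' s) ≤ C := by
        refine Submodule.span_le.2 ?_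
        rintro _ ⟨j, hj, rfl⟩
        have hcoef : 0 ≤ -(y ⬝ᵥ a j / (y ⬝ᵥ a j₀)) :=
          neg_nonneg.2 (div_nonpos_of_nonpos_of_nonneg (hy j hj) hya.le)
        simpa [P, sub_eq_add_neg] using
          add_mem (Submodule.subset_span (hsub ⟨j, hj, rfl⟩)) (PointedCone.smul_mem _ hcoef ha₀)
      have := add_mem (hPa hPb) (PointedCone.smul_mem _ (div_nonneg hyb.le hya.le) ha₀)
      exact .inl (by simpa [P] using this)
    · refine .inr ⟨z - (z ⬝ᵥ a j₀ / (y ⬝ᵥ a j₀)) • y, ?_, ?_⟩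
      · simp only [forall_mem_cons, sub_smul_dotProduct_eq_dotProduct_sub_smul]
        exact ⟨by simp [div_self hya.ne'], hz⟩
      · rwa [sub_smul_dotProduct_eq_dotProduct_sub_smul]

end Farkas

section CoverProgram

variable {R V : Type*} [CommSemiring R] [Fintype V]

/- The program in equality form: row `none` is `∑ π X = 1`, row `some v` is
`∑_{X ∋ v} π X + σ v = ε`; column `inl X` carries `π X` and column `inr v` the slack `σ v`. -/
def coverRhs (ε : R) : Option V → R := fun i => i.elim 1 fun _ => ε

lemma dotProduct_coverRhs (y : Option V → R) (ε : R) :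
    y ⬝ᵥ coverRhs ε = y none + ε * ∑ v, y (some v) := by
  simp [coverRhs, dotProduct, Fintype.sum_option, mul_sum, mul_comm]

variable [DecidableEq V]

def coverColumn : Finset V ⊕ V → Option V → R
  | .inl X => fun i => i.elim 1 fun v => if v ∈ X then 1 else 0
  | .inr v => Pi.single (some v) 1

lemma dotProduct_coverColumn_inl (y : Option V → R) (X : Finset V) :
    y ⬝ᵥ coverColumn (.inl X) = y none + ∑ v ∈ X, y (some v) := by
  simp [coverColumn, dotProduct, Fintype.sum_option, mul_ite]

lemma dotProduct_coverColumn_inr (y : Option V → R) (v : V) :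
    y ⬝ᵥ coverColumn (.inr v) = y (some v) := by
  simp [coverColumn]

lemma sum_mul_sum_eq_sum_sum_filter_mul (F : Finset (Finset V)) (π : Finset V → R) (w : V → R) :
    ∑ X ∈ F, π X * ∑ v ∈ X, w v = ∑ v, (∑ X ∈ F.filter (fun X => v ∈ X), π X) * w v := by
  simp_rw [mul_sum, sum_mul]
  exact sum_comm' (by simp [and_comm])

end CoverProgram

section FractionalCover

variable {𝕜 V : Type*} [Field 𝕜] [LinearOrder 𝕜] [IsStrictOrderedRing 𝕜] [Fintype V] [DecidableEq V]

lemma exists_mem_sum_le_of_load_le (F : Finset (Finset V)) (ε : 𝕜) (π : Finset V → 𝕜)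
    (hπ : ∀ X ∈ F, 0 ≤ π X) (hπF : ∑ X ∈ F, π X = 1)
    (hload : ∀ v, ∑ X ∈ F.filter (fun X => v ∈ X), π X ≤ ε) (w : V → 𝕜) (hw : ∀ v, 0 ≤ w v) :
    ∃ X ∈ F, ∑ v ∈ X, w v ≤ ε * ∑ v, w v := by
  have hF : F.Nonempty := nonempty_of_sum_ne_zero (by rw [hπF]; exact one_ne_zero)
  obtain ⟨X₀, hX₀, hmin⟩ := F.exists_min_image (fun X => ∑ v ∈ X, w v) hF
  refine ⟨X₀, hX₀, ?_⟩
  calc ∑ v ∈ X₀, w v = ∑ X ∈ F, π X * ∑ v ∈ X₀, w v := by rw [← sum_mul, hπF, one_mul]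
    _ ≤ ∑ X ∈ F, π X * ∑ v ∈ X, w v :=
      sum_le_sum fun X hX => mul_le_mul_of_nonneg_left (hmin X hX) (hπ X hX)
    _ = ∑ v, (∑ X ∈ F.filter (fun X => v ∈ X), π X) * w v :=
      sum_mul_sum_eq_sum_sum_filter_mul F π w
    _ ≤ ∑ v, ε * w v := sum_le_sum fun v _ => mul_le_mul_of_nonneg_right (hload v) (hw v)
    _ = ε * ∑ v, w v := (mul_sum _ _ _).symm

lemma exists_load_le_of_mem_hull (F : Finset (Finset V)) (ε : 𝕜)
    (h : coverRhs ε ∈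
      PointedCone.hull 𝕜 (coverColumn '' (F.disjSum (univ : Finset V) : Set (Finset V ⊕ V)))) :
    ∃ π : Finset V → 𝕜, (∀ X, 0 ≤ π X) ∧ (∑ X ∈ F, π X = 1) ∧
      ∀ v : V, ∑ X ∈ F.filter (fun X => v ∈ X), π X ≤ ε := by
  obtain ⟨c, hc⟩ := (Submodule.mem_span_image_finset_iff_exists_fun' _).1 h
  simp only [sum_disjSum, ← Nonneg.coe_smul] at hc
  have hrow := congrFun hc
  simp only [Pi.add_apply, Finset.sum_apply, Pi.smul_apply, smul_eq_mul] at hrow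
  refine ⟨fun X => c (.inl X), fun X => (c _).2, by simpa [coverColumn, coverRhs] using hrow none,
    fun v => ?_⟩
  have hv := hrow (some v)
  simp only [coverColumn, coverRhs, Option.elim_some, mul_ite, mul_one, mul_zero, Pi.single_apply,
    Option.some.injEq, sum_ite_eq, mem_univ, if_true] at hv
  rw [sum_filter]
  linarith [(c (.inr v)).2]

lemma not_exists_separating_coverRhs (F : Finset (Finset V)) (ε : 𝕜)
    (h : ∀ w : V → 𝕜, (∀ v, 0 ≤ w v) → ∃ X ∈ F, ∑ v ∈ X, w v ≤ ε * ∑ v : V, w v) :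
    ¬ ∃ y, (∀ j ∈ F.disjSum univ, y ⬝ᵥ coverColumn j ≤ 0) ∧ 0 < y ⬝ᵥ coverRhs ε := by
  rintro ⟨y, hy, hyb⟩
  have hX := fun X hX => hy (.inl X) (inl_mem_disjSum.2 hX)
  have hv := fun v => hy (.inr v) (inr_mem_disjSum.2 (mem_univ v))
  simp only [dotProduct_coverColumn_inl, dotProduct_coverColumn_inr] at hX hv
  obtain ⟨X, hXF, hXw⟩ := h (fun v => -y (some v)) fun v => neg_nonneg.2 (hv v)
  have := hX X hXF
  rw [dotProduct_coverRhs] at hyb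
  simp only [sum_neg_distrib, mul_neg] at hXw
  linarith

end FractionalCover

theorem stmt_0_general {V : Type*} [Fintype V] [DecidableEq V]
    (F : Finset (Finset V)) (ε : ℚ) :
    (∃ π : Finset V → ℚ, (∀ X, 0 ≤ π X) ∧ (∑ X ∈ F, π X = 1) ∧
      ∀ v : V, ∑ X ∈ F.filter (fun X => v ∈ X), π X ≤ ε) ↔
    (∀ w : V → ℚ, (∀ v, 0 ≤ w v) →
      ∃ X ∈ F, ∑ v ∈ X, w v ≤ ε * ∑ v : V, w v) := by
  constructor
  · rintro ⟨π, hπ, hπF, hload⟩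
    exact exists_mem_sum_le_of_load_le F ε π (fun X _ => hπ X) hπF hload
  · intro h
    rcases mem_hull_image_or_exists_separating (F.disjSum univ) coverColumn (coverRhs ε) with
      hmem | hsep
    · exact exists_load_le_of_mem_hull F ε hmem
    · exact absurd hsep (not_exists_separating_coverRhs F ε h)

theorem stmt_0 {V : Type*} [Fintype V] [DecidableEq V]
    (F : Finset (Finset V)) (ε : ℚ) (hε : 0 < ε) :
    (∃ π : Finset V → ℚ, (∀ X, 0 ≤ π X) ∧ (∑ X ∈ F, π X = 1) ∧
      ∀ v : V, ∑ X ∈ F.filter (fun X => v ∈ X), π X ≤ ε) ↔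
    (∀ w : V → ℚ, (∀ v, 0 ≤ w v) →
      ∃ X ∈ F, ∑ v ∈ X, w v ≤ ε * ∑ v : V, w v) :=
  stmt_0_general F ε
end

section
/- Let A be an m×n rational matrix and b ∈ ℚ^m. Then exactly one of the following holds: (1) there exist x_1,…,x_n ∈ ℚ≥0 with ∑_i x_i = 1 and ∑_i A_{i,j} x_i ≥ b_j for all j = 1,…,m; or (2) there exist y_1,…,y_m ∈ ℚ≥0 such that ∑_j A_{i,j} y_j < ∑_j b_j y_j for all i = 1,…,n. -/
private def dotq {l : ℕ} (f g : Fin l → ℚ) : ℚ := ∑ j, f j * g j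

private lemma dotq_sub_smul {l : ℕ} (f g h : Fin l → ℚ) (c : ℚ) :
    dotq f (fun j => g j - c * h j) = dotq f g - c * dotq f h := by
  simp only [dotq, mul_sub, Finset.sum_sub_distrib, Finset.mul_sum]
  congr 1
  apply Finset.sum_congr rfl
  intro j _; ring

private lemma dotq_sub_smul_left {l : ℕ} (g h u : Fin l → ℚ) (c : ℚ) :
    dotq (fun j => g j - c * h j) u = dotq g u - c * dotq h u := by
  simp only [dotq, sub_mul, Finset.sum_sub_distrib, Finset.mul_sum]
  congr 1
  apply Finset.sum_congr rfl
  intro j _; ring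

private theorem farkas (l : ℕ) : ∀ (k : ℕ) (a : Fin k → Fin l → ℚ) (b : Fin l → ℚ),
    (∃ lam : Fin k → ℚ, (∀ i, 0 ≤ lam i) ∧ ∀ j, b j = ∑ i, lam i * a i j) ∨
    (∃ u : Fin l → ℚ, (∀ i, 0 ≤ dotq (a i) u) ∧ dotq b u < 0) := by
  intro k
  induction k with
  | zero =>
    intro a b
    by_cases hb : ∀ j, b j = 0
    · exact Or.inl ⟨Fin.elim0, fun i => i.elim0, by simp [hb]⟩
    · push_neg at hb
      obtain ⟨j0, hj0⟩ := hb
      refine Or.inr ⟨fun j => -(b j), fun i => i.elim0, ?_⟩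
      have h1 : dotq b (fun j => -(b j)) = -∑ j, (b j)^2 := by
        simp [dotq, sq, Finset.sum_neg_distrib]
      have h2 : 0 < ∑ j, (b j)^2 :=
        Finset.sum_pos' (fun j _ => sq_nonneg _) ⟨j0, Finset.mem_univ j0, by positivity⟩
      rw [h1]; linarith
  | succ k ih =>
    intro a b
    rcases ih (fun i => a i.castSucc) b with ⟨lam, hlam, hb⟩ | ⟨u, hu, hbu⟩
    · refine Or.inl ⟨Fin.snoc lam 0, ?_, ?_⟩
      · intro i
        refine Fin.lastCases ?_ ?_ i <;> simp [Fin.snoc_castSucc, hlam]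
      · intro j
        rw [Fin.sum_univ_castSucc]
        simp [Fin.snoc_castSucc, hb j]
    · by_cases hlast : 0 ≤ dotq (a (Fin.last k)) u
      · refine Or.inr ⟨u, ?_, hbu⟩
        intro i
        exact Fin.lastCases hlast (fun i => hu i) i
      · push_neg at hlast
        set D := dotq (a (Fin.last k)) u with hD
        have hDne : D ≠ 0 := ne_of_lt hlast
        set a' : Fin k → Fin l → ℚ :=
          fun i j => a i.castSucc j - (dotq (a i.castSucc) u / D) * a (Fin.last k) j with ha'
        set b' : Fin l → ℚ := fun j => b j - (dotq b u / D) * a (Fin.last k) j with hb'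
        rcases ih a' b' with ⟨lam, hlam, hbeq⟩ | ⟨v, hv, hbv⟩
        · set μ := (dotq b u - ∑ i, lam i * dotq (a i.castSucc) u) / D with hμ
          have hμ0 : 0 ≤ μ := by
            apply le_of_lt
            apply div_pos_of_neg_of_neg
            · have h1 : 0 ≤ ∑ i, lam i * dotq (a i.castSucc) u :=
                Finset.sum_nonneg fun i _ => mul_nonneg (hlam i) (hu i)
              linarith
            · exact hlast
          refine Or.inl ⟨Fin.snoc lam μ, ?_, ?_⟩
          · intro i
            refine Fin.lastCases ?_ ?_ i <;> simp [Fin.snoc_castSucc, hμ0, hlam]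
          · intro j
            rw [Fin.sum_univ_castSucc]
            simp only [Fin.snoc_castSucc, Fin.snoc_last]
            have hthis := hbeq j
            simp only [hb', ha'] at hthis
            rw [Finset.sum_congr rfl (fun i _ => mul_sub (lam i) _ _),
              Finset.sum_sub_distrib] at hthis
            have expand : ∑ i, lam i * (dotq (a i.castSucc) u / D * a (Fin.last k) j)
                = (∑ i, lam i * dotq (a i.castSucc) u) / D * a (Fin.last k) j := by
              rw [Finset.sum_div, Finset.sum_mul]
              exact Finset.sum_congr rfl fun i _ => by ring
            rw [expand] at hthis
            rw [hμ, sub_div, sub_mul]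
            linarith
        · set c := dotq (a (Fin.last k)) v / D with hc
          refine Or.inr ⟨fun j => v j - c * u j, ?_, ?_⟩
          · intro i
            refine Fin.lastCases ?_ ?_ i
            · rw [dotq_sub_smul, hc, ← hD, div_mul_cancel₀ _ hDne, sub_self]
            · intro i
              rw [dotq_sub_smul]
              have h1 := hv i
              rw [show a' i = fun j =>
                  a i.castSucc j - dotq (a i.castSucc) u / D * a (Fin.last k) j from rfl,
                dotq_sub_smul_left] at h1
              have heq : c * dotq (a i.castSucc) u
                  = dotq (a i.castSucc) u / D * dotq (a (Fin.last k)) v := by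
                rw [hc]; ring
              linarith
          · rw [dotq_sub_smul]
            have h1 := hbv
            rw [show b' = fun j => b j - dotq b u / D * a (Fin.last k) j from rfl,
              dotq_sub_smul_left] at h1
            have heq : c * dotq b u = dotq b u / D * dotq (a (Fin.last k)) v := by
              rw [hc]; ring
            linarith

/-- Farkas' lemma, variant 1. Here `A i j` is the entry `A_{i,j}` with
`i ∈ {1,…,n}` and `j ∈ {1,…,m}`. -/
theorem stmt_1 (m n : ℕ) (A : Fin n → Fin m → ℚ) (b : Fin m → ℚ) :
    Xor'
      (∃ x : Fin n → ℚ, (∀ i, 0 ≤ x i) ∧ (∑ i, x i = 1) ∧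
        ∀ j, b j ≤ ∑ i, A i j * x i)
      (∃ y : Fin m → ℚ, (∀ j, 0 ≤ y j) ∧
        ∀ i, ∑ j, A i j * y j < ∑ j, b j * y j) := by
  set P := (∃ x : Fin n → ℚ, (∀ i, 0 ≤ x i) ∧ (∑ i, x i = 1) ∧
        ∀ j, b j ≤ ∑ i, A i j * x i) with hP
  set Q := (∃ y : Fin m → ℚ, (∀ j, 0 ≤ y j) ∧
        ∀ i, ∑ j, A i j * y j < ∑ j, b j * y j) with hQ
  have excl : ¬ (P ∧ Q) := by
    rintro ⟨⟨x, hx0, hx1, hxA⟩, ⟨y, hy0, hyA⟩⟩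
    set S := ∑ j, b j * y j with hS
    have h1 : S ≤ ∑ i, x i * ∑ j, A i j * y j := by
      calc S ≤ ∑ j, (∑ i, A i j * x i) * y j :=
            Finset.sum_le_sum fun j _ => mul_le_mul_of_nonneg_right (hxA j) (hy0 j)
        _ = ∑ i, x i * ∑ j, A i j * y j := by
            simp_rw [Finset.sum_mul, Finset.mul_sum]
            rw [Finset.sum_comm]
            exact Finset.sum_congr rfl fun j _ =>
              Finset.sum_congr rfl fun i _ => by ring
    have h2 : ∑ i, x i * ∑ j, A i j * y j < ∑ i, x i * S := by
      have hne : ∃ i ∈ Finset.univ, 0 < x i := by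
        by_contra h
        push_neg at h
        have : ∑ i, x i = 0 := Finset.sum_eq_zero fun i hi =>
          le_antisymm (h i hi) (hx0 i)
        rw [this] at hx1; norm_num at hx1
      obtain ⟨i0, hi0m, hi0⟩ := hne
      apply Finset.sum_lt_sum
      · intro i _
        exact mul_le_mul_of_nonneg_left (le_of_lt (hyA i)) (hx0 i)
      · exact ⟨i0, hi0m, by
          exact mul_lt_mul_of_pos_left (hyA i0) hi0⟩
    have h3 : ∑ i, x i * S = S := by rw [← Finset.sum_mul, hx1, one_mul]
    rw [h3] at h2
    linarith
  have total : P ∨ Q := by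
    set col : Fin (n + m) → Fin (m + 1) → ℚ :=
      Fin.addCases (fun i => Fin.snoc (A i) 1)
        (fun s j' => if j' = s.castSucc then -1 else 0) with hcol
    set bhat : Fin (m + 1) → ℚ := Fin.snoc b 1 with hbhat
    rcases farkas (m + 1) (n + m) col bhat with ⟨lam, hlam, heq⟩ | ⟨u, hu, hbu⟩
    · left
      refine ⟨fun i => lam (Fin.castAdd m i), fun i => hlam _, ?_, ?_⟩
      · have := heq (Fin.last m)
        rw [Fin.sum_univ_add] at this
        simp only [hcol, Fin.addCases_left, Fin.addCases_right, hbhat,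
          Fin.snoc_last] at this
        have hz : ∀ s : Fin m, (Fin.last m : Fin (m+1)) ≠ s.castSucc :=
          fun s => (Fin.castSucc_lt_last s).ne'
        simp only [if_neg (hz _), mul_zero, Finset.sum_const_zero, add_zero,
          mul_one] at this
        exact this.symm
      · intro j
        have := heq j.castSucc
        rw [Fin.sum_univ_add] at this
        simp only [hcol, Fin.addCases_left, Fin.addCases_right, hbhat,
          Fin.snoc_castSucc] at this
        have hsum2 : ∑ s : Fin m,
            lam (Fin.natAdd n s) * (if (j.castSucc : Fin (m+1)) = s.castSucc then (-1:ℚ) else 0)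
            = -lam (Fin.natAdd n j) := by
          rw [Finset.sum_eq_single j]
          · simp
          · intro s _ hs
            rw [if_neg, mul_zero]
            exact fun h => hs (Fin.castSucc_injective m h).symm
          · simp
        rw [hsum2] at this
        have hl := hlam (Fin.natAdd n j)
        have hcomm : ∑ i, lam (Fin.castAdd m i) * A i j
            = ∑ i, A i j * lam (Fin.castAdd m i) :=
          Finset.sum_congr rfl fun i _ => mul_comm _ _
        linarith [hcomm ▸ this]
    · right
      refine ⟨fun j => -(u j.castSucc), fun j => ?_, fun i => ?_⟩
      · have := hu (Fin.natAdd n j)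
        simp only [hcol, Fin.addCases_right, dotq] at this
        rw [Finset.sum_eq_single j.castSucc] at this
        · simpa using this
        · intro s _ hs
          rw [if_neg hs, zero_mul]
        · simp
      · have hAi := hu (Fin.castAdd m i)
        simp only [hcol, Fin.addCases_left, dotq] at hAi
        rw [Fin.sum_univ_castSucc] at hAi
        simp only [Fin.snoc_castSucc, Fin.snoc_last, one_mul] at hAi
        have hbq := hbu
        simp only [hbhat, dotq] at hbq
        rw [Fin.sum_univ_castSucc] at hbq
        simp only [Fin.snoc_castSucc, Fin.snoc_last, one_mul] at hbq
        have e1 : ∑ j, A i j * -(u j.castSucc) = -∑ j, A i j * u j.castSucc := by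
          simp [mul_neg]
        have e2 : ∑ j, b j * -(u j.castSucc) = -∑ j, b j * u j.castSucc := by
          simp [mul_neg]
        rw [e1, e2]
        linarith
  rcases total with hp | hq
  · exact Or.inl ⟨hp, fun hq => excl ⟨hp, hq⟩⟩
  · by_cases hp : P
    · exact Or.inl ⟨hp, fun hq => excl ⟨hp, hq⟩⟩
    · exact Or.inr ⟨hq, hp⟩
end

section
/- Let A be an m×n rational matrix and b ∈ ℚ^m. Then exactly one of the following holds: (1) there exist x_1,…,x_n ∈ ℚ≥0 with ∑_i x_i = 1 and ∑_i A_{i,j} x_i ≤ b_j for all j = 1,…,m; or (2) there exist y_1,…,y_m ∈ ℚ≥0 such that ∑_j A_{i,j} y_j > ∑_j b_j y_j for all i = 1,…,n. -/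
open Finset

section FMaux

variable {ι : Type} [Fintype ι] [DecidableEq ι]

/-- Fourier–Motzkin combination coefficients. -/
def fmCoeff (a : ι → ℚ) (p : ι × ι ⊕ ι) (i : ι) : ℚ :=
  match p with
  | Sum.inl (i₁, i₂) =>
      if 0 < a i₁ ∧ a i₂ < 0 then
        (if i = i₁ then -a i₂ else 0) + (if i = i₂ then a i₁ else 0)
      else 0
  | Sum.inr i₁ => if a i₁ = 0 then (if i = i₁ then 1 else 0) else 0

lemma fmCoeff_nonneg (a : ι → ℚ) (p : ι × ι ⊕ ι) (i : ι) : 0 ≤ fmCoeff a p i := by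
  rcases p with ⟨i₁, i₂⟩ | i₁ <;> simp only [fmCoeff]
  · by_cases h : 0 < a i₁ ∧ a i₂ < 0
    · rw [if_pos h]
      have h1 := h.1
      have h2 := h.2
      split_ifs <;> linarith
    · rw [if_neg h]
  · by_cases h : a i₁ = 0
    · rw [if_pos h]
      split_ifs <;> norm_num
    · rw [if_neg h]

lemma fm_sum_inl (a : ι → ℚ) {i₁ i₂ : ι} (h1 : 0 < a i₁) (h2 : a i₂ < 0) (f : ι → ℚ) :
    ∑ i, fmCoeff a (Sum.inl (i₁, i₂)) i * f i = (-a i₂) * f i₁ + a i₁ * f i₂ := by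
  simp [fmCoeff, if_pos (And.intro h1 h2), add_mul, Finset.sum_add_distrib, ite_mul,
    Finset.sum_ite_eq']

lemma fm_sum_inl_zero (a : ι → ℚ) {i₁ i₂ : ι} (h : ¬(0 < a i₁ ∧ a i₂ < 0)) (f : ι → ℚ) :
    ∑ i, fmCoeff a (Sum.inl (i₁, i₂)) i * f i = 0 := by
  simp [fmCoeff, if_neg h]

lemma fm_sum_inr (a : ι → ℚ) {i₁ : ι} (h : a i₁ = 0) (f : ι → ℚ) :
    ∑ i, fmCoeff a (Sum.inr i₁) i * f i = f i₁ := by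
  simp [fmCoeff, if_pos h, ite_mul, Finset.sum_ite_eq']

lemma fm_sum_inr_zero (a : ι → ℚ) {i₁ : ι} (h : ¬ a i₁ = 0) (f : ι → ℚ) :
    ∑ i, fmCoeff a (Sum.inr i₁) i * f i = 0 := by
  simp [fmCoeff, if_neg h]

lemma fm_swap {q : ℕ} (w : ι → ℚ) (G : ι → Fin q → ℚ) (u : Fin q → ℚ) :
    ∑ k, (∑ i, w i * G i k) * u k = ∑ i, w i * (∑ k, G i k * u k) := by
  simp_rw [Finset.sum_mul, Finset.mul_sum, mul_assoc]
  exact Finset.sum_comm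

lemma fm_swap' {κ : Type} [Fintype κ] (w : κ → ℚ) (coe : κ → ι → ℚ) (f : ι → ℚ) :
    ∑ i, (∑ p, w p * coe p i) * f i = ∑ p, w p * (∑ i, coe p i * f i) := by
  simp_rw [Finset.sum_mul, Finset.mul_sum, mul_assoc]
  exact Finset.sum_comm

end FMaux

theorem farkas_core : ∀ (q : ℕ) {ι : Type} [Fintype ι] [DecidableEq ι]
    (M : ι → Fin q → ℚ) (c : ι → ℚ),
    (∃ u : Fin q → ℚ, ∀ i, ∑ k, M i k * u k ≤ c i) ∨
    (∃ v : ι → ℚ, (∀ i, 0 ≤ v i) ∧ (∀ k, ∑ i, v i * M i k = 0) ∧ ∑ i, v i * c i < 0) := by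
  intro q
  induction q with
  | zero =>
    intro ι _ _ M c
    by_cases h : ∀ i, 0 ≤ c i
    · exact Or.inl ⟨0, fun i => by simpa using h i⟩
    · right
      push_neg at h
      obtain ⟨i₀, hi₀⟩ := h
      refine ⟨fun i => if i = i₀ then 1 else 0, fun i => by positivity, fun k => k.elim0, ?_⟩
      simp [ite_mul, Finset.sum_ite_eq', hi₀]
  | succ q ih =>
    intro ι _ _ M c
    set a : ι → ℚ := fun i => M i (Fin.last q) with ha
    rcases ih (fun p k => ∑ i, fmCoeff a p i * M i k.castSucc)
        (fun p => ∑ i, fmCoeff a p i * c i) with ⟨u', hu'⟩ | ⟨v', hv0, hvM, hvc⟩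
    · -- feasible case
      left
      set r : ι → ℚ := fun i => ∑ k : Fin q, M i k.castSucc * u' k with hr
      have hu : ∀ p, ∑ i, fmCoeff a p i * r i ≤ ∑ i, fmCoeff a p i * c i := by
        intro p
        have := hu' p
        rwa [fm_swap] at this
      have hineq : ∀ (i₁ i₂ : ι), 0 < a i₁ → a i₂ < 0 →
          (-a i₂) * r i₁ + a i₁ * r i₂ ≤ (-a i₂) * c i₁ + a i₁ * c i₂ := by
        intro i₁ i₂ h1 h2
        have h3 := hu (Sum.inl (i₁, i₂))
        rwa [fm_sum_inl a h1 h2, fm_sum_inl a h1 h2] at h3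
      have hzero : ∀ i : ι, a i = 0 → r i ≤ c i := by
        intro i hi
        have h3 := hu (Sum.inr i)
        rwa [fm_sum_inr a hi, fm_sum_inr a hi] at h3
      set g : ι → ℚ := fun i => (c i - r i) / a i with hg
      set L : Finset ι := Finset.univ.filter (fun i => a i < 0) with hLdef
      set U : Finset ι := Finset.univ.filter (fun i => 0 < a i) with hUdef
      have hgle : ∀ i₂ ∈ L, ∀ i₁ ∈ U, g i₂ ≤ g i₁ := by
        intro i₂ hi₂ i₁ hi₁
        rw [hLdef, Finset.mem_filter] at hi₂
        rw [hUdef, Finset.mem_filter] at hi₁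
        have h1 := hi₁.2
        have h2 := hi₂.2
        have key := hineq i₁ i₂ h1 h2
        show (c i₂ - r i₂) / a i₂ ≤ (c i₁ - r i₁) / a i₁
        rw [div_le_iff_of_neg h2, div_mul_eq_mul_div, div_le_iff₀ h1]
        nlinarith
      obtain ⟨t, htL, htU⟩ : ∃ t : ℚ, (∀ i ∈ L, g i ≤ t) ∧ (∀ i ∈ U, t ≤ g i) := by
        rcases L.eq_empty_or_nonempty with hLe | hLn
        · rcases U.eq_empty_or_nonempty with hUe | hUn
          · exact ⟨0, by simp [hLe], by simp [hUe]⟩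
          · exact ⟨U.inf' hUn g, by simp [hLe], fun i hi => Finset.inf'_le g hi⟩
        · refine ⟨L.sup' hLn g, fun i hi => Finset.le_sup' g hi, fun i hi => ?_⟩
          exact Finset.sup'_le hLn g (fun i₂ hi₂ => hgle i₂ hi₂ i hi)
      refine ⟨Fin.snoc u' t, fun i => ?_⟩
      have hsnoc : ∑ k, M i k * (Fin.snoc u' t : Fin (q+1) → ℚ) k = r i + a i * t := by
        rw [Fin.sum_univ_castSucc]
        simp [hr, ha]
      rw [hsnoc]
      rcases lt_trichotomy (a i) 0 with hai | hai | hai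
      · have hm := htL i (by rw [hLdef, Finset.mem_filter]; exact ⟨Finset.mem_univ i, hai⟩)
        have h4 : a i * t ≤ a i * g i := mul_le_mul_of_nonpos_left hm (le_of_lt hai)
        have h5 : a i * g i = c i - r i := by
          show a i * ((c i - r i) / a i) = c i - r i
          rw [mul_comm, div_mul_cancel₀ _ (ne_of_lt hai)]
        linarith
      · have := hzero i hai
        rw [hai]
        linarith
      · have hm := htU i (by rw [hUdef, Finset.mem_filter]; exact ⟨Finset.mem_univ i, hai⟩)
        have h4 : a i * t ≤ a i * g i := mul_le_mul_of_nonneg_left hm (le_of_lt hai)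
        have h5 : a i * g i = c i - r i := by
          show a i * ((c i - r i) / a i) = c i - r i
          rw [mul_comm, div_mul_cancel₀ _ (ne_of_gt hai)]
        linarith
    · -- infeasible case
      right
      refine ⟨fun i => ∑ p, v' p * fmCoeff a p i, fun i => ?_, fun k => ?_, ?_⟩
      · exact Finset.sum_nonneg fun p _ => mul_nonneg (hv0 p) (fmCoeff_nonneg a p i)
      · rw [fm_swap']
        induction k using Fin.lastCases with
        | last => ?_
        | cast k' => ?_
        · -- last column: each full combined row vanishes there
          rw [Finset.sum_eq_zero]
          rintro (⟨i₁, i₂⟩ | i₁) -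
          · by_cases hp : 0 < a i₁ ∧ a i₂ < 0
            · rw [fm_sum_inl a hp.1 hp.2]
              show v' _ * (-a i₂ * a i₁ + a i₁ * a i₂) = 0
              ring
            · rw [fm_sum_inl_zero a hp, mul_zero]
          · by_cases hp : a i₁ = 0
            · rw [fm_sum_inr a hp]
              show v' _ * a i₁ = 0
              rw [hp, mul_zero]
            · rw [fm_sum_inr_zero a hp, mul_zero]
        · exact hvM k'
      · rw [fm_swap']
        exact hvc
/-- Farkas' lemma, variant 2. Here `A i j` is the entry `A_{i,j}` with
`i ∈ {1,…,n}` and `j ∈ {1,…,m}`. -/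
theorem stmt_2 (m n : ℕ) (A : Fin n → Fin m → ℚ) (b : Fin m → ℚ) :
    Xor'
      (∃ x : Fin n → ℚ, (∀ i, 0 ≤ x i) ∧ (∑ i, x i = 1) ∧
        ∀ j, ∑ i, A i j * x i ≤ b j)
      (∃ y : Fin m → ℚ, (∀ j, 0 ≤ y j) ∧
        ∀ i, ∑ j, b j * y j < ∑ j, A i j * y j) := by
  set P := (∃ x : Fin n → ℚ, (∀ i, 0 ≤ x i) ∧ (∑ i, x i = 1) ∧
      ∀ j, ∑ i, A i j * x i ≤ b j) with hP
  set Q := (∃ y : Fin m → ℚ, (∀ j, 0 ≤ y j) ∧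
      ∀ i, ∑ j, b j * y j < ∑ j, A i j * y j) with hQ
  have hnot : ¬ (P ∧ Q) := by
    rintro ⟨⟨x, hx1, hx2, hx3⟩, ⟨y, hy1, hy2⟩⟩
    have hcpos : ∀ i, 0 < ∑ j, (A i j - b j) * y j := by
      intro i
      have := hy2 i
      have e : ∑ j, (A i j - b j) * y j = ∑ j, A i j * y j - ∑ j, b j * y j := by
        rw [← Finset.sum_sub_distrib]
        exact Finset.sum_congr rfl fun j _ => by ring
      rw [e]
      linarith
    have hTle : ∑ j, (∑ i, (A i j - b j) * x i) * y j ≤ 0 := by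
      apply Finset.sum_nonpos
      intro j _
      apply mul_nonpos_of_nonpos_of_nonneg _ (hy1 j)
      have e : ∑ i, (A i j - b j) * x i = (∑ i, A i j * x i) - b j := by
        have e1 : ∑ i, (A i j - b j) * x i = ∑ i, A i j * x i - ∑ i, b j * x i := by
          rw [← Finset.sum_sub_distrib]
          exact Finset.sum_congr rfl fun i _ => by ring
        rw [e1, ← Finset.mul_sum, hx2, mul_one]
      rw [e]
      linarith [hx3 j]
    have hswap : ∑ j, (∑ i, (A i j - b j) * x i) * y j
        = ∑ i, (∑ j, (A i j - b j) * y j) * x i := by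
      simp_rw [Finset.sum_mul]
      rw [Finset.sum_comm]
      exact Finset.sum_congr rfl fun i _ => Finset.sum_congr rfl fun j _ => by ring
    obtain ⟨i₀, hi₀⟩ : ∃ i, 0 < x i := by
      by_contra hcon
      push_neg at hcon
      have : ∑ i, x i ≤ 0 := Finset.sum_nonpos fun i _ => hcon i
      rw [hx2] at this
      norm_num at this
    have hTpos : 0 < ∑ i, (∑ j, (A i j - b j) * y j) * x i := by
      apply Finset.sum_pos' (fun i _ => mul_nonneg (le_of_lt (hcpos i)) (hx1 i))
      exact ⟨i₀, Finset.mem_univ i₀, mul_pos (hcpos i₀) hi₀⟩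
    rw [hswap] at hTle
    linarith
  have hor : P ∨ Q := by
    classical
    rcases farkas_core n (ι := Fin m ⊕ Unit ⊕ Fin n)
        (fun r => match r with
          | Sum.inl j => fun i => A i j - b j
          | Sum.inr (Sum.inl _) => fun i => -1
          | Sum.inr (Sum.inr i') => fun i => if i = i' then -1 else 0)
        (fun r => match r with
          | Sum.inl j => 0
          | Sum.inr (Sum.inl _) => -1
          | Sum.inr (Sum.inr i') => 0) with ⟨u, hu⟩ | ⟨v, hv0, hvM, hvc⟩
    · left
      have hunn : ∀ i, 0 ≤ u i := by
        intro i
        have h : ∑ k, (if k = i then (-1:ℚ) else 0) * u k ≤ 0 := hu (Sum.inr (Sum.inr i))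
        simp [ite_mul, Finset.sum_ite_eq'] at h
        linarith
      have hs1 : (1:ℚ) ≤ ∑ i, u i := by
        have h : ∑ k, (-1:ℚ) * u k ≤ -1 := hu (Sum.inr (Sum.inl ()))
        have e : ∑ k : Fin n, (-1:ℚ) * u k = -∑ k : Fin n, u k := by
          rw [← Finset.sum_neg_distrib]
          exact Finset.sum_congr rfl fun k _ => by ring
        linarith
      have hspos : (0:ℚ) < ∑ i, u i := lt_of_lt_of_le one_pos hs1
      refine ⟨fun i => u i / (∑ i', u i'), fun i => div_nonneg (hunn i) (le_of_lt hspos),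
        ?_, fun j => ?_⟩
      · rw [← Finset.sum_div, div_self (ne_of_gt hspos)]
      · have hrow : ∑ k, (A k j - b j) * u k ≤ 0 := hu (Sum.inl j)
        have e : ∑ k, (A k j - b j) * u k = ∑ k, A k j * u k - b j * ∑ k, u k := by
          rw [Finset.mul_sum, ← Finset.sum_sub_distrib]
          exact Finset.sum_congr rfl fun k _ => by ring
        rw [e] at hrow
        have : ∑ i, A i j * (u i / (∑ i', u i')) = (∑ i, A i j * u i) / (∑ i', u i') := by
          rw [Finset.sum_div]
          exact Finset.sum_congr rfl fun i _ => by ring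
        rw [this, div_le_iff₀ hspos]
        linarith
    · right
      set y : Fin m → ℚ := fun j => v (Sum.inl j) with hy
      set t : ℚ := v (Sum.inr (Sum.inl ())) with ht
      set s : Fin n → ℚ := fun i => v (Sum.inr (Sum.inr i)) with hs
      have htpos : 0 < t := by
        have := hvc
        rw [Fintype.sum_sum_type, Fintype.sum_sum_type] at this
        simp at this
        linarith
      refine ⟨y, fun j => hv0 (Sum.inl j), fun i => ?_⟩
      have hcol := hvM i
      rw [Fintype.sum_sum_type, Fintype.sum_sum_type] at hcol
      simp only [Finset.univ_unique, Finset.sum_singleton, mul_ite, mul_neg, mul_one,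
        mul_zero] at hcol
      rw [Finset.sum_ite_eq] at hcol
      simp at hcol
      have hsnn : 0 ≤ s i := hv0 (Sum.inr (Sum.inr i))
      have e : ∑ j, y j * (A i j - b j) = ∑ j, A i j * y j - ∑ j, b j * y j := by
        rw [← Finset.sum_sub_distrib]
        exact Finset.sum_congr rfl fun j _ => by ring
      rw [e] at hcol
      linarith
  rcases hor with hp | hq
  · exact Or.inl ⟨hp, fun hq => hnot ⟨hp, hq⟩⟩
  · exact Or.inr ⟨hq, fun hp => hnot ⟨hp, hq⟩⟩
end

section
/- Let G be a finite connected simple graph with 2|E(G)| ≥ (2+δ)|V(G)| and girth strictly greater than 2g. Let (A_1,…,A_m) be a partition of V(G) into parts of size at least g inducing connected subgraphs, with m maximal among all such partitions. Then each G[A_i] is a tree. -/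
open SimpleGraph

namespace StmtAux

variable {V : Type} [Fintype V] [DecidableEq V] (G : SimpleGraph V)

lemma conn_singleton (u : V) : (G.induce {u}).Connected := by
  have h := (Walk.nil : G.Walk u u).connected_induce_support
  have hset : {w | w ∈ (Walk.nil : G.Walk u u).support} = ({u} : Set V) := by
    ext y; simp
  rw [hset] at h
  exact h

lemma conn_take : ∀ {u v : V} (p : G.Walk u v) (k : ℕ), 1 ≤ k →
    (G.induce {w | w ∈ p.support.take k}).Connected := by
  intro u v p
  induction p with
  | nil =>
    rename_i z
    intro k hk
    have hset : {w | w ∈ (Walk.nil : G.Walk z z).support.take k} = ({z} : Set V) := by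
      cases k with
      | zero => omega
      | succ k => simp
    rw [hset]; exact conn_singleton G z
  | @cons a b c h q ih =>
    intro k hk
    match k with
    | 1 =>
      have hset : {w | w ∈ (Walk.cons h q).support.take 1} = ({a} : Set V) := by simp
      rw [hset]; exact conn_singleton G a
    | (j+2) =>
      have hset : {w | w ∈ (Walk.cons h q).support.take (j+2)} =
          ({a} : Set V) ∪ {w | w ∈ q.support.take (j+1)} := by
        ext y
        simp [Walk.support_cons]
      rw [hset]
      have hb : b ∈ {w | w ∈ q.support.take (j+1)} := by
        have hq : q.support = b :: q.support.tail := q.support_eq_cons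
        rw [Set.mem_setOf_eq, hq, List.take_succ_cons]
        exact List.mem_cons_self
      exact connected_induce_union (conn_singleton G a).preconnected (ih (j+1) (by omega)).preconnected rfl hb h

lemma conn_drop : ∀ {u v : V} (p : G.Walk u v) (k : ℕ), k ≤ p.length →
    (G.induce {w | w ∈ p.support.drop k}).Connected := by
  intro u v p
  induction p with
  | nil =>
    rename_i z
    intro k hk
    have hk0 : k = 0 := by simpa using hk
    subst hk0
    exact (Walk.nil : G.Walk z z).connected_induce_support
  | @cons a b c h q ih =>
    intro k hk
    cases k with
    | zero => rw [List.drop_zero]; exact (Walk.cons h q).connected_induce_support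
    | succ j =>
      have hset : {w | w ∈ (Walk.cons h q).support.drop (j+1)} =
          {w | w ∈ q.support.drop j} := by
        simp [Walk.support_cons]
      rw [hset]
      exact ih j (by simpa [Walk.length_cons] using hk)

lemma exists_adj_of_walk {α : Type*} {H : SimpleGraph α} :
    ∀ {u v : α}, (q : H.Walk u v) → u ≠ v → ∃ x, H.Adj u x := by
  intro u v q
  cases q with
  | nil => intro h; exact absurd rfl h
  | cons h q => intro _; exact ⟨_, h⟩

lemma noncut (A W : Finset V) (hWA : W ⊆ A)
    (hWconn : (G.induce (W : Set V)).Connected)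
    (hAconn : (G.induce (A : Set V)).Connected)
    (hne : (A \ W).Nonempty) :
    ∃ v ∈ A \ W, (G.induce ((A.erase v : Finset V) : Set V)).Connected := by
  obtain ⟨⟨w₀, hw₀⟩⟩ := hWconn.nonempty
  have hw₀W : w₀ ∈ W := hw₀
  have hw₀A : w₀ ∈ (A : Set V) := hWA hw₀W
  set H := G.induce (A : Set V) with hH
  let f : V → ℕ := fun x => if h : x ∈ (A : Set V) then H.dist ⟨w₀, hw₀A⟩ ⟨x, h⟩ else 0
  obtain ⟨v, hvAW, hvmax⟩ := Finset.exists_max_image (A \ W) f hne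
  refine ⟨v, hvAW, ?_⟩
  rw [Finset.mem_sdiff] at hvAW
  obtain ⟨hvA, hvW⟩ := hvAW
  have hvA' : v ∈ (A : Set V) := hvA
  have hw₀v : w₀ ≠ v := fun h => hvW (h ▸ hw₀W)
  have hw₀e : w₀ ∈ ((A.erase v : Finset V) : Set V) := by
    simp only [Finset.coe_erase, Set.mem_diff, Finset.mem_coe, Set.mem_singleton_iff]
    exact ⟨hWA hw₀W, hw₀v⟩
  apply induce_connected_of_patches w₀ hw₀e
  intro x hx
  simp only [Finset.coe_erase, Set.mem_diff, Finset.mem_coe, Set.mem_singleton_iff] at hx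
  obtain ⟨hxA, hxv⟩ := hx
  by_cases hxW : x ∈ W
  · refine ⟨(W : Set V), ?_, hw₀W, hxW, hWconn.preconnected _ _⟩
    intro y hy
    simp only [Finset.coe_erase, Set.mem_diff, Finset.mem_coe, Set.mem_singleton_iff]
    exact ⟨hWA hy, fun h => hvW (h ▸ hy)⟩
  · have hxA' : x ∈ (A : Set V) := hxA
    have hreach : H.Reachable ⟨w₀, hw₀A⟩ ⟨x, hxA'⟩ := hAconn.preconnected _ _
    obtain ⟨p, hp⟩ := hreach.exists_walk_length_eq_dist
    have hvnot : (⟨v, hvA'⟩ : (A : Set V)) ∉ p.support := by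
      intro hmem
      have h1 : H.dist ⟨w₀, hw₀A⟩ ⟨v, hvA'⟩ ≤ (p.takeUntil _ hmem).length :=
        SimpleGraph.dist_le _
      have h2 : 1 ≤ (p.dropUntil _ hmem).length := by
        by_contra hcon
        push_neg at hcon
        have h0 : (p.dropUntil _ hmem).length = 0 := by omega
        have := Walk.eq_of_length_eq_zero h0
        exact hxv (congrArg Subtype.val this.symm)
      have h3 : (p.takeUntil _ hmem).length + (p.dropUntil _ hmem).length = p.length := by
        have := congrArg Walk.length (p.take_spec hmem)
        rwa [Walk.length_append] at this
      have h4 : f x ≤ f v := hvmax x (Finset.mem_sdiff.mpr ⟨hxA, hxW⟩)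
      simp only [f, dif_pos hxA', dif_pos hvA'] at h4
      omega
    let emb : G.induce (A : Set V) ↪g G := SimpleGraph.Embedding.induce (A : Set V)
    let p' : G.Walk w₀ x := p.map emb.toHom
    refine ⟨{w | w ∈ p'.support}, ?_, p'.start_mem_support, p'.end_mem_support,
      (p'.connected_induce_support).preconnected _ _⟩
    intro y hy
    simp only [Set.mem_setOf_eq] at hy
    have hy' : y ∈ (p.map emb.toHom).support := hy
    rw [Walk.support_map] at hy'
    obtain ⟨⟨y', hy'A⟩, hy'sup, rfl⟩ := List.mem_map.mp hy'
    simp only [Finset.coe_erase, Set.mem_diff, Finset.mem_coe, Set.mem_singleton_iff]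
    refine ⟨hy'A, ?_⟩
    intro heq
    apply hvnot
    have : (⟨y', hy'A⟩ : (A : Set V)) = ⟨v, hvA'⟩ := Subtype.ext heq
    exact this ▸ hy'sup

lemma grow (g : ℕ) :
    ∀ (n : ℕ) (A W : Finset V), A.card ≤ n →
    (G.induce (A : Set V)).Connected → W ⊆ A → W.Nonempty →
    (G.induce (W : Set V)).Connected →
    (∃ B ⊆ W, g ≤ B.card ∧ g ≤ (W \ B).card ∧
      (G.induce (B : Set V)).Connected ∧ (G.induce ((W \ B : Finset V) : Set V)).Connected) →
    ∃ B ⊆ A, g ≤ B.card ∧ g ≤ (A \ B).card ∧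
      (G.induce (B : Set V)).Connected ∧ (G.induce ((A \ B : Finset V) : Set V)).Connected := by
  intro n
  induction n with
  | zero =>
    intro A W hcard _ hWA hWne _ _
    obtain ⟨w, hw⟩ := hWne
    have : 0 < A.card := Finset.card_pos.mpr ⟨w, hWA hw⟩
    omega
  | succ n ih =>
    intro A W hcard hAconn hWA hWne hWconn hWgood
    by_cases hAW : W = A
    · subst hAW; exact hWgood
    · have hssub : (A \ W).Nonempty := by
        rw [Finset.sdiff_nonempty]
        intro h
        exact hAW (Finset.Subset.antisymm hWA h)
      obtain ⟨v, hvAW, hconn'⟩ := noncut G A W hWA hWconn hAconn hssub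
      rw [Finset.mem_sdiff] at hvAW
      obtain ⟨hvA, hvW⟩ := hvAW
      have hWsub : W ⊆ A.erase v := fun y hy =>
        Finset.mem_erase.mpr ⟨fun h => hvW (h ▸ hy), hWA hy⟩
      have hcard' : (A.erase v).card ≤ n := by
        have h1 := Finset.card_erase_of_mem hvA
        have h2 : 0 < A.card := Finset.card_pos.mpr ⟨v, hvA⟩
        omega
      obtain ⟨B, hBsub, hBg, hCg, hBconn, hCconn⟩ :=
        ih (A.erase v) W hcard' hconn' hWsub hWne hWconn hWgood
      -- find a neighbor of v inside A.erase v
      obtain ⟨w, hw⟩ := hWne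
      have hwv : w ≠ v := fun h => hvW (h ▸ hw)
      have hwA : w ∈ (A : Set V) := hWA hw
      have hvA' : v ∈ (A : Set V) := hvA
      obtain ⟨q⟩ := hAconn.preconnected ⟨v, hvA'⟩ ⟨w, hwA⟩
      have hne' : (⟨v, hvA'⟩ : (A : Set V)) ≠ ⟨w, hwA⟩ := by
        intro h
        exact hwv (congrArg Subtype.val h).symm
      obtain ⟨⟨x, hxA⟩, hadj⟩ := exists_adj_of_walk q hne'
      have hGadj : G.Adj v x := hadj
      have hxv : x ≠ v := hGadj.ne'
      have hxe : x ∈ A.erase v := Finset.mem_erase.mpr ⟨hxv, hxA⟩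
      have hveq : ∀ B' : Finset V, B' ⊆ A.erase v →
          A \ insert v B' = (A.erase v) \ B' := by
        intro B' hB'
        ext y
        simp only [Finset.mem_sdiff, Finset.mem_insert, Finset.mem_erase, not_or]
        constructor
        · rintro ⟨hyA, hyv, hyB⟩
          exact ⟨⟨hyv, hyA⟩, hyB⟩
        · rintro ⟨⟨hyv, hyA⟩, hyB⟩
          exact ⟨hyA, hyv, hyB⟩
      by_cases hxB : x ∈ B
      · refine ⟨insert v B, ?_, ?_, ?_, ?_, ?_⟩
        · intro y hy
          rcases Finset.mem_insert.mp hy with rfl | hyB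
          · exact hvA
          · exact Finset.mem_of_mem_erase (hBsub hyB)
        · exact le_trans hBg (Finset.card_le_card (Finset.subset_insert _ _))
        · rw [hveq B hBsub]; exact hCg
        · have hset : ((insert v B : Finset V) : Set V) = ({v} : Set V) ∪ (B : Set V) := by
            rw [Finset.coe_insert, Set.insert_eq]
          rw [hset]
          exact connected_induce_union (conn_singleton G v).preconnected hBconn.preconnected rfl hxB hGadj
        · rw [hveq B hBsub]; exact hCconn
      · have hxC : x ∈ (A.erase v) \ B := Finset.mem_sdiff.mpr ⟨hxe, hxB⟩
        have hvnB : v ∉ B := fun h => (Finset.mem_erase.mp (hBsub h)).1 rfl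
        have hsd : A \ B = insert v ((A.erase v) \ B) := by
          ext y
          simp only [Finset.mem_sdiff, Finset.mem_insert, Finset.mem_erase]
          constructor
          · rintro ⟨hyA, hyB⟩
            by_cases hyv : y = v
            · exact Or.inl hyv
            · exact Or.inr ⟨⟨hyv, hyA⟩, hyB⟩
          · rintro (rfl | ⟨⟨hyv, hyA⟩, hyB⟩)
            · exact ⟨hvA, hvnB⟩
            · exact ⟨hyA, hyB⟩
        refine ⟨B, hBsub.trans (Finset.erase_subset _ _), hBg, ?_, hBconn, ?_⟩
        · rw [hsd, Finset.card_insert_of_notMem (by simp)]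
          omega
        · rw [hsd]
          have hset : ((insert v ((A.erase v) \ B) : Finset V) : Set V) =
              ({v} : Set V) ∪ (((A.erase v) \ B : Finset V) : Set V) := by
            rw [Finset.coe_insert, Set.insert_eq]
          rw [hset]
          exact connected_induce_union (conn_singleton G v).preconnected hCconn.preconnected rfl hxC hGadj

lemma good_of_path (g : ℕ) (hg : 1 ≤ g) {u v : V} (p : G.Walk u v)
    (hnd : p.support.Nodup) (hlen : 2 * g ≤ p.support.length) :
    ∃ B ⊆ p.support.toFinset, g ≤ B.card ∧ g ≤ (p.support.toFinset \ B).card ∧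
      (G.induce (B : Set V)).Connected ∧
      (G.induce ((p.support.toFinset \ B : Finset V) : Set V)).Connected := by
  have hndt : (p.support.take g).Nodup := (List.take_sublist g _).nodup hnd
  have hndd : (p.support.drop g).Nodup := (List.drop_sublist g _).nodup hnd
  have hdisj : List.Disjoint (p.support.take g) (p.support.drop g) := by
    have h := hnd
    rw [← List.take_append_drop g p.support] at h
    exact List.disjoint_of_nodup_append h
  have hsd : p.support.toFinset \ (p.support.take g).toFinset =
      (p.support.drop g).toFinset := by
    ext y
    simp only [Finset.mem_sdiff, List.mem_toFinset]
    constructor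
    · rintro ⟨hy, hyt⟩
      rw [← List.take_append_drop g p.support, List.mem_append] at hy
      rcases hy with hy | hy
      · exact absurd hy hyt
      · exact hy
    · intro hy
      refine ⟨List.drop_subset _ _ hy, fun hyt => hdisj hyt hy⟩
  refine ⟨(p.support.take g).toFinset, ?_, ?_, ?_, ?_, ?_⟩
  · intro y hy
    rw [List.mem_toFinset] at hy ⊢
    exact List.take_subset _ _ hy
  · rw [List.toFinset_card_of_nodup hndt, List.length_take]
    omega
  · rw [hsd, List.toFinset_card_of_nodup hndd, List.length_drop]
    omega
  · have hcoe : (((p.support.take g).toFinset : Finset V) : Set V) =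
        {w | w ∈ p.support.take g} := by
      rw [List.coe_toFinset]
    rw [hcoe]
    exact conn_take G p g hg
  · rw [hsd]
    have hcoe : (((p.support.drop g).toFinset : Finset V) : Set V) =
        {w | w ∈ p.support.drop g} := by
      rw [List.coe_toFinset]
    rw [hcoe]
    have hlg : g ≤ p.length := by
      have := p.length_support
      omega
    exact conn_drop G p g hlg

lemma cycle_path {a : V} (c : G.Walk a a) (hc : c.IsCycle) :
    ∃ (b : V) (q : G.Walk b a), q.support.Nodup ∧ q.support.length = c.length ∧
      ∀ y ∈ q.support, y ∈ c.support := by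
  cases c with
  | nil => exact absurd rfl hc.ne_nil
  | @cons _ b _ h q =>
    refine ⟨b, q, ?_, ?_, ?_⟩
    · have h1 := hc.support_nodup
      simpa [Walk.support_cons] using h1
    · rw [Walk.length_support, Walk.length_cons]
    · intro y hy
      rw [Walk.support_cons]
      exact List.mem_cons_of_mem _ hy

end StmtAux

open StmtAux in
/-- In a connected graph with `2|E| ≥ (2+δ)|V|` and girth `> 2g`, in any
partition of the vertex set into connected parts of size at least `g` with a
maximal number of parts, every part induces a tree (an acyclic subgraph). -/
theorem stmt_4 {V : Type} [Fintype V] [DecidableEq V]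
    (G : SimpleGraph V) (δ : ℝ) (hδ : 0 < δ) (g : ℕ) (hg : 1 ≤ g)
    (hconn : G.Connected)
    (hdeg : (2 + δ) * (Fintype.card V : ℝ) ≤ 2 * (G.edgeSet.ncard : ℝ))
    (hgirth : ((2 * g : ℕ) : ℕ∞) < G.girth)
    (P : Finpartition (Finset.univ : Finset V))
    (hP : ∀ A ∈ P.parts, g ≤ A.card ∧ (G.induce (A : Set V)).Connected)
    (hmax : ∀ Q : Finpartition (Finset.univ : Finset V),
      (∀ A ∈ Q.parts, g ≤ A.card ∧ (G.induce (A : Set V)).Connected) →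
      Q.parts.card ≤ P.parts.card) :
    ∀ A ∈ P.parts, (G.induce (A : Set V)).IsAcyclic := by
  classical
  intro A hA
  by_contra hcyc
  have hAconn := (hP A hA).2
  simp only [SimpleGraph.IsAcyclic] at hcyc
  push_neg at hcyc
  obtain ⟨a, c, hc⟩ := hcyc
  -- map the cycle to G
  let emb : G.induce (A : Set V) ↪g G := SimpleGraph.Embedding.induce (A : Set V)
  have hc' : (c.map emb.toHom).IsCycle := hc.map emb.injective
  -- the cycle is long
  have hlen : 2 * g < (c.map emb.toHom).length := by
    have h1 : G.egirth ≤ ((c.map emb.toHom).length : ℕ∞) :=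
      le_egirth.mp le_rfl _ _ hc'
    have h2 : 2 * g < G.girth := by exact_mod_cast hgirth
    have h3 : G.girth ≤ (c.map emb.toHom).length := by
      have := ENat.toNat_le_toNat h1 (by simp)
      simpa [SimpleGraph.girth] using this
    omega
  -- support of the cycle lies in A
  have hsupA : ∀ y ∈ (c.map emb.toHom).support, y ∈ A := by
    intro y hy
    rw [Walk.support_map] at hy
    obtain ⟨⟨y', hy'⟩, _, rfl⟩ := List.mem_map.mp hy
    exact hy'
  -- extract a long path
  obtain ⟨b, q, hqnd, hqlen, hqsup⟩ := cycle_path G (c.map emb.toHom) hc'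
  set W : Finset V := q.support.toFinset with hW
  have hWA : W ⊆ A := by
    intro y hy
    rw [hW, List.mem_toFinset] at hy
    exact hsupA y (hqsup y hy)
  have hWne : W.Nonempty := ⟨b, by rw [hW, List.mem_toFinset]; exact q.start_mem_support⟩
  have hWconn : (G.induce (W : Set V)).Connected := by
    have hcoe : ((W : Finset V) : Set V) = {w | w ∈ q.support} := by
      rw [hW, List.coe_toFinset]
    rw [hcoe]
    exact q.connected_induce_support
  have hWgood := good_of_path G g hg q hqnd (by omega)
  rw [← hW] at hWgood
  obtain ⟨B, hBsub, hBg, hCg, hBconn, hCconn⟩ :=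
    grow G g A.card A W le_rfl hAconn hWA hWne hWconn hWgood
  -- build a bigger partition
  set C : Finset V := A \ B with hC
  have hBne : B.Nonempty := Finset.card_pos.mp (by omega)
  have hCne : C.Nonempty := Finset.card_pos.mp (by omega)
  have hdisjBC : Disjoint B C := Finset.disjoint_sdiff
  have hBC : B ∪ C = A := Finset.union_sdiff_of_subset hBsub
  have hCsub : C ⊆ A := Finset.sdiff_subset
  have hBnotin : ∀ P' ∈ P.parts.erase A, B ≠ P' := by
    intro P' hP' heq
    obtain ⟨h1, h2⟩ := Finset.mem_erase.mp hP'
    have hd : Disjoint A P' := P.disjoint hA h2 (Ne.symm h1)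
    obtain ⟨x, hx⟩ := hBne
    exact (Finset.disjoint_left.mp hd (hBsub hx)) (heq ▸ hx)
  have hCnotin : ∀ P' ∈ P.parts.erase A, C ≠ P' := by
    intro P' hP' heq
    obtain ⟨h1, h2⟩ := Finset.mem_erase.mp hP'
    have hd : Disjoint A P' := P.disjoint hA h2 (Ne.symm h1)
    obtain ⟨x, hx⟩ := hCne
    exact (Finset.disjoint_left.mp hd (hCsub hx)) (heq ▸ hx)
  have hBneC : B ≠ C := by
    intro h
    obtain ⟨x, hx⟩ := hBne
    exact (Finset.disjoint_left.mp hdisjBC hx) (h ▸ hx)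
  set parts' : Finset (Finset V) := insert B (insert C (P.parts.erase A)) with hparts'
  have hpd : (parts' : Set (Finset V)).PairwiseDisjoint id := by
    intro x hx y hy hxy
    simp only [hparts', Finset.coe_insert, Set.mem_insert_iff, Finset.mem_coe] at hx hy
    have haux : ∀ P' ∈ P.parts.erase A, Disjoint A P' := by
      intro P' hP'
      obtain ⟨h1, h2⟩ := Finset.mem_erase.mp hP'
      exact P.disjoint hA h2 (Ne.symm h1)
    simp only [Function.onFun, id]
    rcases hx with rfl | rfl | hx <;> rcases hy with rfl | rfl | hy
    · exact absurd rfl hxy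
    · exact hdisjBC
    · exact Finset.disjoint_of_subset_left hBsub (haux _ hy)
    · exact hdisjBC.symm
    · exact absurd rfl hxy
    · exact Finset.disjoint_of_subset_left hCsub (haux _ hy)
    · exact (Finset.disjoint_of_subset_left hBsub (haux _ hx)).symm
    · exact (Finset.disjoint_of_subset_left hCsub (haux _ hx)).symm
    · exact P.disjoint (Finset.mem_of_mem_erase hx) (Finset.mem_of_mem_erase hy) hxy
  have hsup : parts'.sup id = Finset.univ := by
    have h2 : insert A (P.parts.erase A) = P.parts := Finset.insert_erase hA
    have h3 : parts'.sup id = B ⊔ (C ⊔ (P.parts.erase A).sup id) := by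
      simp [hparts']
    rw [h3, ← sup_assoc]
    have h4 : B ⊔ C = A := by
      rw [Finset.sup_eq_union]; exact hBC
    rw [h4]
    have h5 : A ⊔ (P.parts.erase A).sup id = (insert A (P.parts.erase A)).sup id := by
      simp
    rw [h5, h2, P.sup_parts]
  have hbot : ⊥ ∉ parts' := by
    simp only [hparts', Finset.mem_insert, not_or]
    refine ⟨?_, ?_, fun h => P.bot_notMem (Finset.mem_of_mem_erase h)⟩
    · intro h
      rw [Finset.bot_eq_empty] at h
      exact hBne.ne_empty h.symm
    · intro h
      rw [Finset.bot_eq_empty] at h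
      exact hCne.ne_empty h.symm
  let Q : Finpartition (Finset.univ : Finset V) :=
    ⟨parts', Finset.supIndep_iff_pairwiseDisjoint.mpr hpd, hsup, hbot⟩
  have hQp : Q.parts = parts' := rfl
  have hQcond : ∀ A' ∈ Q.parts, g ≤ A'.card ∧ (G.induce (A' : Set V)).Connected := by
    intro A' hA'
    rw [hQp, hparts'] at hA'
    rcases Finset.mem_insert.mp hA' with rfl | hA'
    · exact ⟨hBg, hBconn⟩
    rcases Finset.mem_insert.mp hA' with rfl | hA'
    · exact ⟨hCg, hCconn⟩
    · exact hP _ (Finset.mem_of_mem_erase hA')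
  have hcard : Q.parts.card = P.parts.card + 1 := by
    have hBni : B ∉ insert C (P.parts.erase A) := by
      simp only [Finset.mem_insert, not_or]
      exact ⟨hBneC, fun h => hBnotin _ h rfl⟩
    have hCni : C ∉ P.parts.erase A := fun h => hCnotin _ h rfl
    have h1 : 1 ≤ P.parts.card := Finset.card_pos.mpr ⟨A, hA⟩
    rw [hQp, hparts',
      Finset.card_insert_of_notMem hBni, Finset.card_insert_of_notMem hCni,
      Finset.card_erase_of_mem hA]
    omega
  have := hmax Q hQcond
  omega
end

section
/- Let V_1, V_2 be finite sets and w: V_1 × V_2 → [0,1] a weight function. Suppose the bipartite weighted graph is ε-homogeneous of density d, i.e. for all W_1 ⊆ V_1 and W_2 ⊆ V_2, |∑_{x∈W_1, y∈W_2} w(x,y) − d·|W_1|·|W_2|| ≤ ε·|V_1|·|V_2|. Then for all functions f: V_1 → [0,1] and g: V_2 → [0,1], |∑_{x∈V_1} ∑_{y∈V_2} f(x)·g(y)·w(x,y) − d·(∑_x f(x))·(∑_y g(y))| ≤ ε·|V_1|·|V_2|. -/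
open Finset

lemma aux_lin {V : Type} [Fintype V] (a c : V → ℝ)
    (hc : ∀ x, c x ∈ Set.Icc (0:ℝ) 1)
    (B : ℝ) (hB : ∀ W : Finset V, |∑ x ∈ W, a x| ≤ B) :
    |∑ x : V, c x * a x| ≤ B := by
  rw [abs_le]
  constructor
  · have h1 : ∑ x ∈ univ.filter (fun x => a x < 0), a x ≤ ∑ x : V, c x * a x := by
      rw [← Finset.sum_filter_add_sum_filter_not univ (fun x => a x < 0)
        (fun x => c x * a x)]
      have h3 : ∑ x ∈ univ.filter (fun x => a x < 0), a x ≤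
          ∑ x ∈ univ.filter (fun x => a x < 0), c x * a x := by
        apply Finset.sum_le_sum
        intro i hi
        simp only [mem_filter] at hi
        nlinarith [(hc i).1, (hc i).2, hi.2]
      have h2 : (0:ℝ) ≤ ∑ x ∈ univ.filter (fun x => ¬ a x < 0), c x * a x := by
        apply Finset.sum_nonneg
        intro i hi
        simp only [mem_filter, not_lt] at hi
        exact mul_nonneg (hc i).1 hi.2
      linarith
    have h4 := hB (univ.filter (fun x => a x < 0))
    have h5 := neg_abs_le (∑ x ∈ univ.filter (fun x => a x < 0), a x)
    linarith
  · have h1 : ∑ x : V, c x * a x ≤ ∑ x ∈ univ.filter (fun x => 0 < a x), a x := by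
      rw [← Finset.sum_filter_add_sum_filter_not univ (fun x => 0 < a x)
        (fun x => c x * a x)]
      have h3 : ∑ x ∈ univ.filter (fun x => 0 < a x), c x * a x ≤
          ∑ x ∈ univ.filter (fun x => 0 < a x), a x := by
        apply Finset.sum_le_sum
        intro i hi
        simp only [mem_filter] at hi
        nlinarith [(hc i).1, (hc i).2, hi.2]
      have h2 : ∑ x ∈ univ.filter (fun x => ¬ 0 < a x), c x * a x ≤ 0 := by
        apply Finset.sum_nonpos
        intro i hi
        simp only [mem_filter, not_lt] at hi
        exact mul_nonpos_of_nonneg_of_nonpos (hc i).1 hi.2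
      linarith
    have h4 := hB (univ.filter (fun x => 0 < a x))
    have h5 := le_abs_self (∑ x ∈ univ.filter (fun x => 0 < a x), a x)
    linarith


/-- If a `[0,1]`-weighted bipartite graph is `ε`-homogeneous of density `d`,
then the homogeneity estimate extends from subsets to `[0,1]`-valued
functions. -/
theorem stmt_5 {V₁ V₂ : Type} [Fintype V₁] [Fintype V₂]
    [Nonempty V₁] [Nonempty V₂]
    (w : V₁ → V₂ → ℝ) (hw : ∀ x y, w x y ∈ Set.Icc (0 : ℝ) 1)
    (ε d : ℝ) (hε : 0 < ε)
    (hd : d = (∑ x : V₁, ∑ y : V₂, w x y) /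
      ((Fintype.card V₁ : ℝ) * (Fintype.card V₂ : ℝ)))
    (hhom : ∀ (W₁ : Finset V₁) (W₂ : Finset V₂),
      |(∑ x ∈ W₁, ∑ y ∈ W₂, w x y) - d * W₁.card * W₂.card| ≤
        ε * (Fintype.card V₁ : ℝ) * (Fintype.card V₂ : ℝ))
    (f : V₁ → ℝ) (g : V₂ → ℝ)
    (hf : ∀ x, f x ∈ Set.Icc (0 : ℝ) 1) (hg : ∀ y, g y ∈ Set.Icc (0 : ℝ) 1) :
    |(∑ x : V₁, ∑ y : V₂, f x * g y * w x y) -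
        d * (∑ x : V₁, f x) * (∑ y : V₂, g y)| ≤
      ε * (Fintype.card V₁ : ℝ) * (Fintype.card V₂ : ℝ) := by
  have key : (∑ x : V₁, ∑ y : V₂, f x * g y * w x y) -
      d * (∑ x : V₁, f x) * (∑ y : V₂, g y) =
      ∑ x : V₁, f x * ((∑ y : V₂, g y * w x y) - d * ∑ y : V₂, g y) := by
    have e1 : d * (∑ x : V₁, f x) * (∑ y : V₂, g y) =
        ∑ x : V₁, f x * (d * ∑ y : V₂, g y) := by
      rw [← Finset.sum_mul]; ring
    rw [e1, ← Finset.sum_sub_distrib]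
    apply Finset.sum_congr rfl
    intro x _
    rw [mul_sub]
    congr 1
    rw [Finset.mul_sum]
    exact Finset.sum_congr rfl fun y _ => by ring
  rw [key]
  apply aux_lin _ f hf
  intro W₁
  have key2 : ∑ x ∈ W₁, ((∑ y : V₂, g y * w x y) - d * ∑ y : V₂, g y) =
      ∑ y : V₂, g y * ((∑ x ∈ W₁, w x y) - d * W₁.card) := by
    rw [Finset.sum_sub_distrib]
    simp only [mul_sub, Finset.sum_sub_distrib]
    congr 1
    · rw [Finset.sum_comm]
      apply Finset.sum_congr rfl; intro y _
      rw [Finset.mul_sum]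
    · rw [Finset.sum_const, ← Finset.sum_mul]
      push_cast
      ring
  rw [key2]
  apply aux_lin _ g hg
  intro W₂
  have key3 : ∑ y ∈ W₂, ((∑ x ∈ W₁, w x y) - d * W₁.card) =
      (∑ x ∈ W₁, ∑ y ∈ W₂, w x y) - d * W₁.card * W₂.card := by
    rw [Finset.sum_sub_distrib, Finset.sum_comm, Finset.sum_const]
    push_cast
    ring
  rw [key3]
  exact hhom W₁ W₂
end

section
/- Let V_1, V_2 be finite sets and w: V_1 × V_2 → [0,1] an ε-homogeneous weight function of density d (meaning: for all W_1 ⊆ V_1, W_2 ⊆ V_2, |∑_{x∈W_1, y∈W_2} w(x,y) − d|W_1||W_2|| ≤ ε|V_1||V_2|). Then for every g: V_2 → [0,1], the number of vertices x ∈ V_1 for which |∑_{y∈V_2} g(y)·w(x,y) − d·∑_y g(y)| > √ε·|V_2| is at most 2√ε·|V_1|. -/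
open Finset

lemma weighted_sum_bound {V : Type} [Fintype V] (a g : V → ℝ) (C : ℝ)
    (hg : ∀ y, g y ∈ Set.Icc (0 : ℝ) 1)
    (h : ∀ W : Finset V, |∑ y ∈ W, a y| ≤ C) :
    |∑ y : V, g y * a y| ≤ C := by
  classical
  rw [abs_le]
  constructor
  · have hN := (abs_le.mp (h (Finset.univ.filter (fun y => a y < 0)))).1
    have hle : ∑ y ∈ Finset.univ.filter (fun y => a y < 0), a y
        ≤ ∑ y : V, g y * a y := by
      rw [← Finset.sum_filter_add_sum_filter_not Finset.univ (fun y => a y < 0)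
        (fun y => g y * a y)]
      have h1 : ∑ y ∈ Finset.univ.filter (fun y => a y < 0), a y ≤
          ∑ y ∈ Finset.univ.filter (fun y => a y < 0), g y * a y := by
        apply Finset.sum_le_sum
        intro y hy
        have hya := (Finset.mem_filter.mp hy).2
        have := mul_le_mul_of_nonpos_right (hg y).2 hya.le
        linarith
      have h2 : (0:ℝ) ≤ ∑ y ∈ Finset.univ.filter (fun y => ¬ a y < 0), g y * a y := by
        apply Finset.sum_nonneg
        intro y hy
        have hya := (Finset.mem_filter.mp hy).2
        exact mul_nonneg (hg y).1 (not_lt.mp hya)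
      linarith
    linarith
  · have hP := (abs_le.mp (h (Finset.univ.filter (fun y => 0 ≤ a y)))).2
    have hle : ∑ y : V, g y * a y ≤
        ∑ y ∈ Finset.univ.filter (fun y => 0 ≤ a y), a y := by
      rw [← Finset.sum_filter_add_sum_filter_not Finset.univ (fun y => 0 ≤ a y)
        (fun y => g y * a y)]
      have h1 : ∑ y ∈ Finset.univ.filter (fun y => 0 ≤ a y), g y * a y ≤
          ∑ y ∈ Finset.univ.filter (fun y => 0 ≤ a y), a y := by
        apply Finset.sum_le_sum
        intro y hy
        have hya := (Finset.mem_filter.mp hy).2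
        exact mul_le_of_le_one_left hya (hg y).2
      have h2 : ∑ y ∈ Finset.univ.filter (fun y => ¬ 0 ≤ a y), g y * a y ≤ 0 := by
        apply Finset.sum_nonpos
        intro y hy
        have hya := (Finset.mem_filter.mp hy).2
        exact mul_nonpos_of_nonneg_of_nonpos (hg y).1 (not_le.mp hya).le
      linarith
    linarith

/-- If a `[0,1]`-weighted bipartite graph is `ε`-homogeneous of density `d`,
then for every `g : V₂ → [0,1]`, all but at most `2√ε·|V₁|` vertices `x ∈ V₁`
satisfy `∑_y g(y)·w(x,y) = d·‖g‖₁ ± √ε·|V₂|`. -/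
theorem stmt_6 {V₁ V₂ : Type} [Fintype V₁] [Fintype V₂]
    [Nonempty V₁] [Nonempty V₂]
    (w : V₁ → V₂ → ℝ) (hw : ∀ x y, w x y ∈ Set.Icc (0 : ℝ) 1)
    (ε d : ℝ) (hε : 0 < ε)
    (hhom : ∀ (W₁ : Finset V₁) (W₂ : Finset V₂),
      |(∑ x ∈ W₁, ∑ y ∈ W₂, w x y) - d * W₁.card * W₂.card| ≤
        ε * (Fintype.card V₁ : ℝ) * (Fintype.card V₂ : ℝ))
    (g : V₂ → ℝ) (hg : ∀ y, g y ∈ Set.Icc (0 : ℝ) 1) :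
    (({x : V₁ |
        Real.sqrt ε * (Fintype.card V₂ : ℝ) <
          |(∑ y : V₂, g y * w x y) - d * (∑ y : V₂, g y)|}).ncard : ℝ) ≤
      2 * Real.sqrt ε * (Fintype.card V₁ : ℝ) := by
  classical
  set n₁ : ℝ := (Fintype.card V₁ : ℝ) with hn₁
  set n₂ : ℝ := (Fintype.card V₂ : ℝ) with hn₂
  have hn₂pos : (0:ℝ) < n₂ := by
    rw [hn₂]; exact_mod_cast Fintype.card_pos
  have hspos : (0:ℝ) < Real.sqrt ε := Real.sqrt_pos.mpr hε
  set s : ℝ := Real.sqrt ε with hs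
  have hss : s * s = ε := Real.mul_self_sqrt hε.le
  set f : V₁ → ℝ := fun x => (∑ y : V₂, g y * w x y) - d * (∑ y : V₂, g y) with hfdef
  -- key estimate: sums of f over any W₁ are small
  have key : ∀ W₁ : Finset V₁, |∑ x ∈ W₁, f x| ≤ ε * n₁ * n₂ := by
    intro W₁
    have hpt : ∀ x, f x = ∑ y : V₂, g y * (w x y - d) := by
      intro x
      simp only [hfdef, mul_sub, Finset.sum_sub_distrib, Finset.mul_sum]
      congr 1
      apply Finset.sum_congr rfl
      intro y _
      ring
    have hswap : ∑ x ∈ W₁, f x = ∑ y : V₂, g y * (∑ x ∈ W₁, (w x y - d)) := by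
      rw [Finset.sum_congr rfl (fun x _ => hpt x), Finset.sum_comm]
      apply Finset.sum_congr rfl
      intro y _
      rw [Finset.mul_sum]
    rw [hswap]
    apply weighted_sum_bound _ _ _ hg
    intro W₂
    have heq : ∑ y ∈ W₂, ∑ x ∈ W₁, (w x y - d) =
        (∑ x ∈ W₁, ∑ y ∈ W₂, w x y) - d * W₁.card * W₂.card := by
      rw [Finset.sum_comm]
      simp only [Finset.sum_sub_distrib, Finset.sum_const, nsmul_eq_mul]
      ring
    rw [heq]
    exact hhom W₁ W₂
  -- the bad sets
  set Bp : Finset V₁ := Finset.univ.filter (fun x => s * n₂ < f x) with hBp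
  set Bm : Finset V₁ := Finset.univ.filter (fun x => f x < -(s * n₂)) with hBm
  have hBpcard : (Bp.card : ℝ) ≤ s * n₁ := by
    have h1 : (Bp.card : ℝ) * (s * n₂) ≤ ∑ x ∈ Bp, f x := by
      calc (Bp.card : ℝ) * (s * n₂) = ∑ _x ∈ Bp, (s * n₂) := by
            rw [Finset.sum_const, nsmul_eq_mul]
        _ ≤ ∑ x ∈ Bp, f x := by
            apply Finset.sum_le_sum
            intro x hx
            exact ((Finset.mem_filter.mp hx).2).le
    have h2 := (abs_le.mp (key Bp)).2
    have h3 : (Bp.card : ℝ) * (s * n₂) ≤ (s * n₁) * (s * n₂) := by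
      have : ε * n₁ * n₂ = (s * n₁) * (s * n₂) := by rw [← hss]; ring
      linarith [this ▸ (le_trans h1 h2)]
    exact le_of_mul_le_mul_right h3 (by positivity)
  have hBmcard : (Bm.card : ℝ) ≤ s * n₁ := by
    have h1 : ∑ x ∈ Bm, f x ≤ -((Bm.card : ℝ) * (s * n₂)) := by
      calc ∑ x ∈ Bm, f x ≤ ∑ _x ∈ Bm, (-(s * n₂)) := by
            apply Finset.sum_le_sum
            intro x hx
            exact ((Finset.mem_filter.mp hx).2).le
        _ = -((Bm.card : ℝ) * (s * n₂)) := by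
            rw [Finset.sum_const, nsmul_eq_mul]; ring
    have h2 := (abs_le.mp (key Bm)).1
    have h3 : (Bm.card : ℝ) * (s * n₂) ≤ (s * n₁) * (s * n₂) := by
      have : ε * n₁ * n₂ = (s * n₁) * (s * n₂) := by rw [← hss]; ring
      linarith
    exact le_of_mul_le_mul_right h3 (by positivity)
  -- the bad set is contained in Bp ∪ Bm
  have hsub : (Finset.univ.filter (fun x => s * n₂ < |f x|)) ⊆ Bp ∪ Bm := by
    intro x hx
    have hx' := (Finset.mem_filter.mp hx).2
    rcases lt_or_ge (f x) 0 with h | h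
    · apply Finset.mem_union_right
      rw [hBm, Finset.mem_filter]
      refine ⟨Finset.mem_univ _, ?_⟩
      rw [abs_of_neg h] at hx'
      linarith
    · apply Finset.mem_union_left
      rw [hBp, Finset.mem_filter]
      refine ⟨Finset.mem_univ _, ?_⟩
      rwa [abs_of_nonneg h] at hx'
  have hncard : ({x : V₁ | s * n₂ < |f x|}).ncard =
      (Finset.univ.filter (fun x => s * n₂ < |f x|)).card := by
    rw [Set.ncard_eq_toFinset_card']
    congr 1
    ext x
    simp
  calc (({x : V₁ | s * n₂ < |f x|}).ncard : ℝ)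
      = ((Finset.univ.filter (fun x => s * n₂ < |f x|)).card : ℝ) := by
        rw [hncard]
    _ ≤ ((Bp ∪ Bm).card : ℝ) := by exact_mod_cast Finset.card_le_card hsub
    _ ≤ (Bp.card : ℝ) + (Bm.card : ℝ) := by exact_mod_cast Finset.card_union_le _ _
    _ ≤ 2 * s * n₁ := by linarith
end

section
/- Let σ be a finite signature and let 𝔸, 𝔹, ℂ be σ-structures (finite domains with nonnegative rational valued functions f^𝔸: A^{ar(f)} → ℚ≥0 for each symbol f). If ω is an overcast from 𝔸 to 𝔹 (a distribution on maps g: A → B such that for each symbol f and each tuple x ∈ B^{ar(f)}, E_{g∼ω} ∑_{y ∈ g^{-1}(x)} f^𝔸(y) ≥ f^𝔹(x)), then opt(𝔸,ℂ) ≥ opt(𝔹,ℂ), where opt(𝔸,ℂ) = max over maps h: A → C of ∑_{f,x} f^𝔸(x)·f^ℂ(h(x)). -/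
/-- `opt(𝔸,ℂ)`: the maximum over maps `h : A → C` of
`∑_{f,x} f^𝔸(x)·f^ℂ(h∘x)`, for valued structures over a finite signature `σ`
with arities `ar`. -/
noncomputable def valOpt {σ : Type} [Fintype σ] (ar : σ → ℕ)
    {A C : Type} [Fintype A] [DecidableEq A] [Fintype C] [Nonempty C]
    (FA : (f : σ) → (Fin (ar f) → A) → ℚ)
    (FC : (f : σ) → (Fin (ar f) → C) → ℚ) : ℚ :=
  Finset.univ.sup' Finset.univ_nonempty
    (fun h : A → C => ∑ f : σ, ∑ x : Fin (ar f) → A, FA f x * FC f (fun i => h (x i)))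

/-- If there is an overcast from `𝔸` to `𝔹`, then `opt(𝔸,ℂ) ≥ opt(𝔹,ℂ)` for
every structure `ℂ`. -/
theorem stmt_9 {σ : Type} [Fintype σ] (ar : σ → ℕ)
    {A B C : Type} [Fintype A] [DecidableEq A] [Fintype B] [DecidableEq B] [Fintype C]
    [Nonempty A] [Nonempty B] [Nonempty C]
    (FA : (f : σ) → (Fin (ar f) → A) → ℚ)
    (FB : (f : σ) → (Fin (ar f) → B) → ℚ)
    (FC : (f : σ) → (Fin (ar f) → C) → ℚ)
    (hFA : ∀ f x, 0 ≤ FA f x) (hFB : ∀ f x, 0 ≤ FB f x)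
    (hFC : ∀ f x, 0 ≤ FC f x)
    (ω : (A → B) → ℚ) (hω0 : ∀ g, 0 ≤ ω g) (hω1 : ∑ g : A → B, ω g = 1)
    (hover : ∀ (f : σ) (x : Fin (ar f) → B),
      FB f x ≤ ∑ g : A → B, ω g *
        ∑ y ∈ Finset.univ.filter (fun y : Fin (ar f) → A => (fun i => g (y i)) = x),
          FA f y) :
    valOpt ar FB FC ≤ valOpt ar FA FC := by
  rw [valOpt]
  apply Finset.sup'_le
  intro h _
  have key : ∀ g : A → B,
      (∑ f : σ, ∑ y : Fin (ar f) → A, FA f y * FC f (fun i => h (g (y i))))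
        ≤ valOpt ar FA FC := by
    intro g
    rw [valOpt]
    exact Finset.le_sup'
      (fun h' : A → C => ∑ f : σ, ∑ x : Fin (ar f) → A, FA f x * FC f (fun i => h' (x i)))
      (Finset.mem_univ (fun a => h (g a)))
  calc ∑ f : σ, ∑ x : Fin (ar f) → B, FB f x * FC f (fun i => h (x i))
      ≤ ∑ f : σ, ∑ x : Fin (ar f) → B,
          (∑ g : A → B, ω g *
            ∑ y ∈ Finset.univ.filter
              (fun y : Fin (ar f) → A => (fun i => g (y i)) = x), FA f y)
          * FC f (fun i => h (x i)) := by
        refine Finset.sum_le_sum fun f _ => Finset.sum_le_sum fun x _ => ?_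
        exact mul_le_mul_of_nonneg_right (hover f x) (hFC f _)
    _ = ∑ g : A → B, ω g *
          ∑ f : σ, ∑ y : Fin (ar f) → A, FA f y * FC f (fun i => h (g (y i))) := by
        have step : ∀ f : σ,
            (∑ x : Fin (ar f) → B,
              (∑ g : A → B, ω g *
                ∑ y ∈ Finset.univ.filter
                  (fun y : Fin (ar f) → A => (fun i => g (y i)) = x), FA f y)
              * FC f (fun i => h (x i)))
            = ∑ g : A → B, ω g *
                ∑ y : Fin (ar f) → A, FA f y * FC f (fun i => h (g (y i))) := by
          intro f
          simp_rw [Finset.sum_mul]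
          rw [Finset.sum_comm]
          refine Finset.sum_congr rfl fun g _ => ?_
          rw [Finset.mul_sum]
          rw [← Finset.sum_fiberwise (g := fun y : Fin (ar f) → A => fun i => g (y i))
            (f := fun y => ω g * (FA f y * FC f (fun i => h (g (y i)))))]
          refine Finset.sum_congr rfl fun x _ => ?_
          rw [Finset.mul_sum, Finset.sum_mul]
          refine Finset.sum_congr rfl fun y hy => ?_
          have hxy : (fun i => g (y i)) = x := (Finset.mem_filter.mp hy).2
          rw [← hxy]
          ring
        simp_rw [step]
        rw [Finset.sum_comm]
        exact Finset.sum_congr rfl fun g _ => (Finset.mul_sum _ _ _).symm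
    _ ≤ ∑ g : A → B, ω g * valOpt ar FA FC :=
        Finset.sum_le_sum fun g _ => mul_le_mul_of_nonneg_left (key g) (hω0 g)
    _ = valOpt ar FA FC := by rw [← Finset.sum_mul, hω1, one_mul]
end

section
/- Let G be a nonempty finite bipartite simple graph with no isolated structure constraints, and let λ = |E(G)|. Then for every weighted graph ℂ (a finite set C with a symmetric weight function w^ℂ: C × C → ℚ≥0), the maximum over maps h: V(G) → C of ∑_{{u,v} ∈ E(G)} w^ℂ(h(u), h(v)) equals λ times the maximum over maps h': {1,2} → C of w^ℂ(h'(1), h'(2)). -/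
/-! Each edge contributes at most `opt(K₂, ℂ)`. Conversely, if the pair `g : Fin 2 → C`
attains `opt(K₂, ℂ)` and `c` is a proper 2-colouring of `G`, then every edge of `G` sees both
colours, so `g ∘ c` earns exactly `opt(K₂, ℂ)` on each edge. -/

open Finset

variable {V C β : Type*}

lemma Sym2.lift_comp_le_sup'_pair [Fintype C] [Nonempty C] [SemilatticeSup β]
    (w : C → C → β) (hsymm : ∀ a b, w a b = w b a) (h : V → C) (e : Sym2 V) :
    Sym2.lift ⟨fun u v => w (h u) (h v), fun _ _ => hsymm _ _⟩ e ≤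
      univ.sup' univ_nonempty (fun p : Fin 2 → C => w (p 0) (p 1)) := by
  induction e using Sym2.ind with
  | _ u v => simpa using le_sup' (fun p : Fin 2 → C => w (p 0) (p 1)) (mem_univ ![h u, h v])

lemma eq_apply_zero_one_of_ne (w : C → C → β) (hsymm : ∀ a b, w a b = w b a) (g : Fin 2 → C)
    {i j : Fin 2} (hij : i ≠ j) : w (g i) (g j) = w (g 0) (g 1) := by
  fin_cases i <;> fin_cases j <;> simp_all

lemma SimpleGraph.Coloring.lift_comp_eq_of_mem_edgeSet {G : SimpleGraph V}
    (c : G.Coloring (Fin 2)) (w : C → C → β) (hsymm : ∀ a b, w a b = w b a) (g : Fin 2 → C)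
    {e : Sym2 V} (he : e ∈ G.edgeSet) :
    Sym2.lift ⟨fun u v => w (g (c u)) (g (c v)), fun _ _ => hsymm _ _⟩ e = w (g 0) (g 1) := by
  induction e using Sym2.ind with
  | _ u v => exact eq_apply_zero_one_of_ne w hsymm g (c.valid he)

theorem stmt_12_general {V : Type} [Fintype V] [DecidableEq V]
    (G : SimpleGraph V) [DecidableRel G.Adj]
    (hbip : G.Colorable 2)
    {C : Type} [Fintype C] [Nonempty C]
    (w : C → C → ℚ) (hsymm : ∀ a b, w a b = w b a) :
    Finset.univ.sup' Finset.univ_nonempty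
        (fun h : V → C =>
          ∑ e ∈ G.edgeFinset,
            Sym2.lift ⟨fun u v => w (h u) (h v), fun u v => hsymm _ _⟩ e) =
      (G.edgeFinset.card : ℚ) *
        Finset.univ.sup' Finset.univ_nonempty
          (fun h' : Fin 2 → C => w (h' 0) (h' 1)) := by
  obtain ⟨c⟩ := hbip
  obtain ⟨g, -, hg⟩ := exists_mem_eq_sup' univ_nonempty (fun p : Fin 2 → C => w (p 0) (p 1))
  refine le_antisymm (sup'_le _ _ fun h _ => ?_) ?_
  · rw [← nsmul_eq_mul]
    exact sum_le_card_nsmul _ _ _ fun e _ => Sym2.lift_comp_le_sup'_pair w hsymm h e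
  · calc (G.edgeFinset.card : ℚ) * _
        = ∑ e ∈ G.edgeFinset,
            Sym2.lift ⟨fun u v => w (g (c u)) (g (c v)), fun _ _ => hsymm _ _⟩ e := by
          rw [sum_congr rfl fun e he => c.lift_comp_eq_of_mem_edgeSet w hsymm g
            (G.mem_edgeFinset.mp he), sum_const, nsmul_eq_mul, hg]
      _ ≤ _ := le_sup' (fun h : V → C => ∑ e ∈ G.edgeFinset,
          Sym2.lift ⟨fun u v => w (h u) (h v), fun _ _ => hsymm _ _⟩ e) (mem_univ (g ∘ c))

/-- A nonempty bipartite graph `G` has, against every weighted graph `ℂ`, the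
same optimum as `|E(G)|` copies of a single edge:
`opt(G, ℂ) = |E(G)| · opt(K₂, ℂ)`. -/
theorem stmt_12 {V : Type} [Fintype V] [DecidableEq V]
    (G : SimpleGraph V) [DecidableRel G.Adj]
    (hbip : G.Colorable 2) (hne : G.edgeFinset.Nonempty)
    {C : Type} [Fintype C] [Nonempty C]
    (w : C → C → ℚ) (hw : ∀ a b, 0 ≤ w a b) (hsymm : ∀ a b, w a b = w b a) :
    Finset.univ.sup' Finset.univ_nonempty
        (fun h : V → C =>
          ∑ e ∈ G.edgeFinset,
            Sym2.lift ⟨fun u v => w (h u) (h v), fun u v => hsymm _ _⟩ e) =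
      (G.edgeFinset.card : ℚ) *
        Finset.univ.sup' Finset.univ_nonempty
          (fun h' : Fin 2 → C => w (h' 0) (h' 1)) :=
  stmt_12_general G hbip w hsymm
end

section
/- Let G be a finite simple graph admitting a proper 3-colouring such that every edge of G lies in exactly one triangle, and let λ = |E(G)|/3. Then for every weighted graph ℂ (finite set C with symmetric w^ℂ: C×C → ℚ≥0), the maximum over maps h: V(G) → C of ∑_{{u,v}∈E(G)} w^ℂ(h(u),h(v)) equals λ times the maximum over maps h': V(K_3) → C of ∑_{{a,b}∈E(K_3)} w^ℂ(h'(a),h'(b)). -/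
/-!
Every edge lies in exactly one triangle, so the triangles partition the edges of `G` three at a
time, and the weight of any `h : V → C` is a sum over the `|E(G)|/3` triangles of `K₃`-weights,
each at most `opt(K₃, ℂ)`. Conversely a proper 3-colouring is a bijection on every triangle, so
composing an optimal map `Fin 3 → C` with it attains `opt(K₃, ℂ)` on all triangles at once.
-/

open Finset

namespace SimpleGraph

variable {V : Type*} {G : SimpleGraph V} [DecidableEq V]

theorem existsUnique_isNClique_three_of_existsUnique_adj
    {u v : V} (huv : G.Adj u v) (hapex : ∃! t, G.Adj u t ∧ G.Adj v t) :
    ∃! T : Finset V, G.IsNClique 3 T ∧ u ∈ T ∧ v ∈ T := by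
  obtain ⟨t, ⟨hut, hvt⟩, ht⟩ := hapex
  have htriple : G.IsNClique 3 {u, v, t} := is3Clique_triple_iff.2 ⟨huv, hut, hvt⟩
  refine ⟨{u, v, t}, ⟨htriple, by simp, by simp⟩, ?_⟩
  rintro T ⟨hT, hu, hv⟩
  obtain ⟨x, hx, hxuv⟩ : ∃ x ∈ T, x ∉ ({u, v} : Finset V) :=
    exists_mem_notMem_of_card_lt_card <| by
      rw [hT.card_eq]; exact (card_le_two).trans_lt (by norm_num)
  simp only [mem_insert, mem_singleton, not_or] at hxuv
  have hxt : x = t := ht x ⟨hT.1 hu hx (Ne.symm hxuv.1), hT.1 hv hx (Ne.symm hxuv.2)⟩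
  subst hxt
  exact (eq_of_subset_of_card_le (by simp [insert_subset_iff, hu, hv, hx])
    (by rw [hT.card_eq, htriple.card_eq])).symm

theorem filter_edgeFinset_mem_sym2_triple [Fintype G.edgeSet] {a b c : V}
    (hab : G.Adj a b) (hac : G.Adj a c) (hbc : G.Adj b c) :
    {e ∈ G.edgeFinset | e ∈ ({a, b, c} : Finset V).sym2} = {s(a, b), s(a, c), s(b, c)} := by
  ext e
  induction e with
  | _ x y =>
    simp only [mem_filter, mem_edgeFinset, mem_edgeSet, mk_mem_sym2_iff, mem_insert,
      mem_singleton, Sym2.eq_iff]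
    constructor
    · rintro ⟨hxy, rfl | rfl | rfl, rfl | rfl | rfl⟩ <;> simp_all
    · rintro ((⟨rfl, rfl⟩ | ⟨rfl, rfl⟩) | (⟨rfl, rfl⟩ | ⟨rfl, rfl⟩) |
        (⟨rfl, rfl⟩ | ⟨rfl, rfl⟩)) <;> simp_all [adj_comm]

theorem sum_filter_edgeFinset_mem_sym2_triple {M : Type*} [AddCommMonoid M]
    [Fintype G.edgeSet] {a b c : V} (hab : G.Adj a b) (hac : G.Adj a c) (hbc : G.Adj b c)
    (f : Sym2 V → M) :
    ∑ e ∈ G.edgeFinset with e ∈ ({a, b, c} : Finset V).sym2, f e =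
      f s(a, b) + f s(a, c) + f s(b, c) := by
  rw [filter_edgeFinset_mem_sym2_triple hab hac hbc, sum_insert, sum_insert, sum_singleton,
    add_assoc]
  · simp [hab.ne, hac.ne]
  · simp [hab.ne, hac.ne, hbc.ne]

variable [Fintype V] [DecidableRel G.Adj]

theorem sum_edgeFinset_eq_sum_cliqueFinset_three {M : Type*} [AddCommMonoid M]
    (huniq : ∀ u v, G.Adj u v → ∃! T : Finset V, G.IsNClique 3 T ∧ u ∈ T ∧ v ∈ T)
    (f : Sym2 V → M) :
    ∑ e ∈ G.edgeFinset, f e =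
      ∑ T ∈ G.cliqueFinset 3, ∑ e ∈ G.edgeFinset with e ∈ T.sym2, f e := by
  rw [sum_comm' (t' := G.edgeFinset) (s' := fun e => {T ∈ G.cliqueFinset 3 | e ∈ T.sym2})
    (fun _ _ => by simp only [mem_filter]; tauto)]
  refine sum_congr rfl fun e he => ?_
  induction e with
  | _ u v =>
    obtain ⟨T, hT, hT'⟩ := huniq u v (mem_edgeFinset.1 he)
    have hfiber : {T ∈ G.cliqueFinset 3 | s(u, v) ∈ T.sym2} = {T} := by
      ext T'
      simp only [mem_filter, mem_cliqueFinset_iff, mk_mem_sym2_iff, mem_singleton]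
      exact ⟨fun hT'' => hT' T' hT'', fun hTT' => hTT' ▸ hT⟩
    rw [hfiber, sum_const, card_singleton, one_smul]

theorem card_edgeFinset_eq_three_mul_card_cliqueFinset
    (huniq : ∀ u v, G.Adj u v → ∃! T : Finset V, G.IsNClique 3 T ∧ u ∈ T ∧ v ∈ T) :
    #G.edgeFinset = 3 * #(G.cliqueFinset 3) := by
  rw [card_eq_sum_ones, sum_edgeFinset_eq_sum_cliqueFinset_three huniq, mul_comm, ← smul_eq_mul,
    ← sum_const]
  refine sum_congr rfl fun T hT => ?_
  obtain ⟨a, b, c, hab, hac, hbc, rfl⟩ := is3Clique_iff.1 (mem_cliqueFinset_iff.1 hT)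
  exact sum_filter_edgeFinset_mem_sym2_triple hab hac hbc _

end SimpleGraph

open SimpleGraph

section Weights

variable {C R : Type*} [AddCommMonoid R]

def k3Weight (w : C → C → R) (x : Fin 3 → C) : R :=
  w (x 0) (x 1) + w (x 0) (x 2) + w (x 1) (x 2)

theorem k3Weight_perm {w : C → C → R} (hsymm : ∀ a b, w a b = w b a) (x : Fin 3 → C)
    {i j k : Fin 3} (hij : i ≠ j) (hik : i ≠ k) (hjk : j ≠ k) :
    k3Weight w ![x i, x j, x k] = k3Weight w x := by
  fin_cases i <;> fin_cases j <;> fin_cases k <;>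
    simp [k3Weight, hsymm (x 1) (x 0), hsymm (x 2) (x 0), hsymm (x 2) (x 1)] at hij hik hjk ⊢ <;>
    abel

variable {V : Type*} {G : SimpleGraph V} [DecidableEq V]

def edgeWeight (w : C → C → R) (hsymm : ∀ a b, w a b = w b a) (h : V → C) : Sym2 V → R :=
  Sym2.lift ⟨fun u v => w (h u) (h v), fun _ _ => hsymm _ _⟩

variable {w : C → C → R} (hsymm : ∀ a b, w a b = w b a)

theorem sum_edgeWeight_triple [Fintype G.edgeSet] {a b c : V}
    (hab : G.Adj a b) (hac : G.Adj a c) (hbc : G.Adj b c) (h : V → C) :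
    ∑ e ∈ G.edgeFinset with e ∈ ({a, b, c} : Finset V).sym2, edgeWeight w hsymm h e =
      k3Weight w ![h a, h b, h c] :=
  G.sum_filter_edgeFinset_mem_sym2_triple hab hac hbc _

variable [Fintype V] [DecidableRel G.Adj]
  (huniq : ∀ u v, G.Adj u v → ∃! T : Finset V, G.IsNClique 3 T ∧ u ∈ T ∧ v ∈ T)
include hsymm huniq

theorem sum_edgeWeight_comp_coloring (col : G.Coloring (Fin 3)) (x : Fin 3 → C) :
    ∑ e ∈ G.edgeFinset, edgeWeight w hsymm (x ∘ col) e =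
      #(G.cliqueFinset 3) • k3Weight w x := by
  rw [G.sum_edgeFinset_eq_sum_cliqueFinset_three huniq, ← sum_const]
  refine sum_congr rfl fun T hT => ?_
  obtain ⟨a, b, c, hab, hac, hbc, rfl⟩ := is3Clique_iff.1 (mem_cliqueFinset_iff.1 hT)
  rw [sum_edgeWeight_triple hsymm hab hac hbc]
  exact k3Weight_perm hsymm x (col.valid hab) (col.valid hac) (col.valid hbc)

theorem sum_edgeWeight_le [LinearOrder R] [IsOrderedAddMonoid R] [Fintype C] [Nonempty C]
    (h : V → C) :
    ∑ e ∈ G.edgeFinset, edgeWeight w hsymm h e ≤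
      #(G.cliqueFinset 3) • univ.sup' univ_nonempty (k3Weight w) := by
  rw [G.sum_edgeFinset_eq_sum_cliqueFinset_three huniq]
  refine sum_le_card_nsmul _ _ _ fun T hT => ?_
  obtain ⟨a, b, c, hab, hac, hbc, rfl⟩ := is3Clique_iff.1 (mem_cliqueFinset_iff.1 hT)
  rw [sum_edgeWeight_triple hsymm hab hac hbc]
  exact le_sup' _ (mem_univ _)

end Weights

theorem stmt_13_general {V : Type} [Fintype V] [DecidableEq V]
    (G : SimpleGraph V) [DecidableRel G.Adj]
    (hcol : G.Colorable 3)
    (htri : ∀ u v, G.Adj u v → ∃! t : V, G.Adj u t ∧ G.Adj v t)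
    {C : Type} [Fintype C] [Nonempty C]
    (w : C → C → ℚ) (hsymm : ∀ a b, w a b = w b a) :
    Finset.univ.sup' Finset.univ_nonempty
        (fun h : V → C =>
          ∑ e ∈ G.edgeFinset,
            Sym2.lift ⟨fun u v => w (h u) (h v), fun u v => hsymm _ _⟩ e) =
      ((G.edgeFinset.card : ℚ) / 3) *
        Finset.univ.sup' Finset.univ_nonempty
          (fun h' : Fin 3 → C =>
            w (h' 0) (h' 1) + w (h' 0) (h' 2) + w (h' 1) (h' 2)) := by
  obtain ⟨col⟩ := hcol
  have huniq := fun u v (huv : G.Adj u v) =>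
    existsUnique_isNClique_three_of_existsUnique_adj huv (htri u v huv)
  have hcard : (#G.edgeFinset : ℚ) / 3 = #(G.cliqueFinset 3) := by
    rw [card_edgeFinset_eq_three_mul_card_cliqueFinset huniq]
    push_cast
    ring
  change univ.sup' _ (fun h => ∑ e ∈ G.edgeFinset, edgeWeight w hsymm h e) =
    _ * univ.sup' _ (k3Weight w)
  rw [hcard, ← nsmul_eq_mul]
  refine le_antisymm (sup'_le _ _ fun h _ => sum_edgeWeight_le hsymm huniq h) ?_
  obtain ⟨x, -, hx⟩ := exists_mem_eq_sup' univ_nonempty (k3Weight w)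
  rw [hx, ← sum_edgeWeight_comp_coloring hsymm huniq col x]
  exact le_sup' (fun h => ∑ e ∈ G.edgeFinset, edgeWeight w hsymm h e) (mem_univ _)

/-- If `G` is 3-colourable and every edge of `G` lies in exactly one triangle,
then against every weighted graph `ℂ`,
`opt(G, ℂ) = (|E(G)|/3) · opt(K₃, ℂ)`. -/
theorem stmt_13 {V : Type} [Fintype V] [DecidableEq V]
    (G : SimpleGraph V) [DecidableRel G.Adj]
    (hcol : G.Colorable 3)
    (htri : ∀ u v, G.Adj u v → ∃! t : V, G.Adj u t ∧ G.Adj v t)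
    {C : Type} [Fintype C] [Nonempty C]
    (w : C → C → ℚ) (hw : ∀ a b, 0 ≤ w a b) (hsymm : ∀ a b, w a b = w b a) :
    Finset.univ.sup' Finset.univ_nonempty
        (fun h : V → C =>
          ∑ e ∈ G.edgeFinset,
            Sym2.lift ⟨fun u v => w (h u) (h v), fun u v => hsymm _ _⟩ e) =
      ((G.edgeFinset.card : ℚ) / 3) *
        Finset.univ.sup' Finset.univ_nonempty
          (fun h' : Fin 3 → C =>
            w (h' 0) (h' 1) + w (h' 0) (h' 2) + w (h' 1) (h' 2)) :=
  stmt_13_general G hcol htri w hsymm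
end

section
/- Let G be a finite simple graph with m edges, n vertices, average degree 2m/n ≥ 100·log₂ k and m ≥ 20·C(k,2), where k ≥ 2. Let 𝔸 be a uniformly random orientation of G (each edge independently oriented in either direction with probability 1/2). Then with positive probability, for every oriented graph D on at most k vertices, every set F of at most m/10 arcs of 𝔸, and every map g: V(G) → V(D), the map g does not send every arc of 𝔸 − F to an arc of D with matching orientation—provided ε = 1/10 and where the failure probability is bounded by 3^{C(k,2)} · 2^{H(1/10)·m} · k^n · 2^{−(9/10)m} < 1. -/
/-!
Fix a linear order on `V`, so that an orientation of `G` is a bit vector `x ∈ {0,1}^E`. If every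
orientation admitted `D`, `F` and `g` as in the statement, then `x` would lie within Hamming
distance `|F| ≤ m/10` of the code word that `(D, g)` predicts on `E`. Thus the `2^m` bit vectors
would be covered by `2^{k²} k^n` Hamming balls of radius `m/10`, each of size at most
`4^{m/10} (5/4)^m`; the hypotheses make `2^{k²} k^n 4^{m/10} 5^m < 8^m`, a contradiction.
-/

open Finset

theorem card_filter_powerset_card_le {α : Type*} (s : Finset α) (t : ℕ) :
    #{S ∈ s.powerset | #S ≤ t} ≤ ∑ i ∈ range (t + 1), (#s).choose i := by
  rw [card_eq_sum_card_fiberwise (f := card) (t := range (t + 1))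
    (fun S hS => mem_range_succ_iff.2 (mem_filter.1 hS).2)]
  gcongr with i
  rw [← card_powersetCard, powersetCard_eq_filter, filter_filter]
  exact card_le_card fun S hS => by simp_all

theorem two_pow_card_le_card_mul_sum_choose {ι β : Type*} [Fintype ι] [DecidableEq ι]
    (B : Finset β) (c : β → ι → Bool) (t : ℕ)
    (hcover : ∀ x : ι → Bool, ∃ b ∈ B, hammingDist x (c b) ≤ t) :
    2 ^ Fintype.card ι ≤ #B * ∑ i ∈ range (t + 1), (Fintype.card ι).choose i := by
  choose b hbB hb using hcover
  calc 2 ^ Fintype.card ι = #(univ : Finset (ι → Bool)) := by simp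
    _ ≤ #(B ×ˢ {S ∈ (univ : Finset ι).powerset | #S ≤ t}) := by
      refine card_le_card_of_injOn (fun x => (b x, ({i | x i ≠ c (b x) i} : Finset ι))) ?_ ?_
      · intro x _
        simpa [mem_product, hbB x, hammingDist] using hb x
      · intro x _ y _ hxy
        simp only [Prod.mk.injEq] at hxy
        obtain ⟨hb, hS⟩ := hxy
        funext i
        have hi := congrArg (i ∈ ·) hS
        simp only [mem_filter, mem_univ, true_and, hb, eq_iff_iff] at hi
        cases hx : x i <;> cases hy : y i <;> cases hc : c (b y) i <;> simp_all
    _ ≤ _ := by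
      rw [card_product]
      gcongr
      simpa using card_filter_powerset_card_le (univ : Finset ι) t

theorem sum_range_choose_mul_pow_le (m t a : ℕ) (ha : 1 ≤ a) :
    (∑ i ∈ range (t + 1), m.choose i) * a ^ m ≤ a ^ t * (1 + a) ^ m := by
  have hterm : ∀ i ≤ t, m.choose i * a ^ m ≤ a ^ t * (1 ^ i * a ^ (m - i) * m.choose i) := by
    intro i hit
    rcases le_or_gt i m with him | him
    · calc m.choose i * a ^ m = a ^ i * (1 ^ i * a ^ (m - i) * m.choose i) := by
            rw [← Nat.add_sub_cancel' him, pow_add, Nat.add_sub_cancel_left]; ring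
        _ ≤ _ := by gcongr
    · simp [Nat.choose_eq_zero_of_lt him]
  calc (∑ i ∈ range (t + 1), m.choose i) * a ^ m
      ≤ a ^ t * ∑ i ∈ range (t + 1), 1 ^ i * a ^ (m - i) * m.choose i := by
        rw [sum_mul, mul_sum]
        exact sum_le_sum fun i hi => hterm i (mem_range_succ_iff.1 hi)
    _ ≤ a ^ t * ∑ i ∈ range (m + 1), 1 ^ i * a ^ (m - i) * m.choose i := by
        refine Nat.mul_le_mul_left _ (sum_le_sum_of_ne_zero fun i _ hi => mem_range_succ_iff.2 ?_)
        by_contra! him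
        simp [Nat.choose_eq_zero_of_lt him] at hi
    _ = a ^ t * (1 + a) ^ m := by rw [add_pow]; rfl

section Orientation

variable {V W : Type*} [LinearOrder V] (G : SimpleGraph V) [DecidableRel G.Adj]

/-- `x e` records whether the edge `e` points from its smaller to its larger endpoint. -/
def orientationOfBits (x : G.edgeSet → Bool) (u v : V) : Bool :=
  if h : G.Adj u v then x ⟨s(u, v), h⟩ == decide (u < v) else false

/-- The bit `orientationOfBits` must carry on `e` for `g` to map the arc on `e` into `D`. -/
def pulledBackBits (D : W → W → Bool) (g : V → W) (e : G.edgeSet) : Bool :=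
  D (g e.1.inf) (g e.1.sup)

variable {G}

theorem adj_of_orientationOfBits {x : G.edgeSet → Bool} {u v : V}
    (h : orientationOfBits G x u v = true) : G.Adj u v := by
  by_contra hadj
  simp [orientationOfBits, hadj] at h

theorem orientationOfBits_swap (x : G.edgeSet → Bool) {u v : V} (h : G.Adj u v) :
    orientationOfBits G x u v = !orientationOfBits G x v u := by
  have hedge : (⟨s(v, u), h.symm⟩ : G.edgeSet) = ⟨s(u, v), h⟩ := Subtype.ext Sym2.eq_swap
  rcases lt_or_gt_of_ne (G.ne_of_adj h) with huv | hvu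
  · simp [orientationOfBits, h, h.symm, hedge, huv, huv.not_gt]
  · simp [orientationOfBits, h, h.symm, hedge, hvu, hvu.not_gt]

theorem orientationOfBits_eq_pulledBackBits {x : G.edgeSet → Bool} {D : W → W → Bool}
    {g : V → W} (hD : ∀ a b, D a b = true → D b a = false) {u v : V}
    (huv : orientationOfBits G x u v = true) (hmap : D (g u) (g v) = true) :
    x ⟨s(u, v), adj_of_orientationOfBits huv⟩ =
      pulledBackBits G D g ⟨s(u, v), adj_of_orientationOfBits huv⟩ := by
  have hadj := adj_of_orientationOfBits huv
  simp only [orientationOfBits, hadj, dite_true, beq_iff_eq] at huv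
  rcases lt_or_gt_of_ne (G.ne_of_adj hadj) with hlt | hgt
  · simp [pulledBackBits, huv, hlt, hlt.le, hmap]
  · simp [pulledBackBits, huv, hgt.le, hgt.not_gt, hD _ _ hmap]

theorem hammingDist_pulledBackBits_le_card [Fintype G.edgeSet] {x : G.edgeSet → Bool}
    {D : W → W → Bool} {g : V → W} (hD : ∀ a b, D a b = true → D b a = false)
    {F : Finset (V × V)}
    (hx : ∀ u v, orientationOfBits G x u v = true → (u, v) ∉ F → D (g u) (g v) = true) :
    hammingDist x (pulledBackBits G D g) ≤ #F := by
  have hmem : ∀ u v (huv : orientationOfBits G x u v = true),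
      x ⟨s(u, v), adj_of_orientationOfBits huv⟩ ≠
        pulledBackBits G D g ⟨s(u, v), adj_of_orientationOfBits huv⟩ → (u, v) ∈ F :=
    fun u v huv hne => by_contra fun hF =>
      hne (orientationOfBits_eq_pulledBackBits hD huv (hx u v huv hF))
  calc hammingDist x (pulledBackBits G D g)
      = #(({e | x e ≠ pulledBackBits G D g e} : Finset G.edgeSet).map
          (Function.Embedding.subtype _)) := (card_map _).symm
    _ ≤ #(F.image fun p => s(p.1, p.2)) := by
      refine card_le_card fun _ he => ?_
      obtain ⟨⟨e, hedge⟩, hne, rfl⟩ := mem_map.1 he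
      replace hne := (mem_filter.1 hne).2
      induction e using Sym2.ind with
      | h u v =>
        have hadj : G.Adj u v := hedge
        rw [mem_image]
        by_cases huv : orientationOfBits G x u v = true
        · exact ⟨(u, v), hmem u v huv hne, rfl⟩
        · have hvu : orientationOfBits G x v u = true := by
            simpa [orientationOfBits_swap x hadj] using huv
          have hswap : (⟨s(v, u), hadj.symm⟩ : G.edgeSet) = ⟨s(u, v), hadj⟩ :=
            Subtype.ext Sym2.eq_swap
          exact ⟨(v, u), hmem v u hvu (by rwa [hswap]), Sym2.eq_swap⟩
    _ ≤ #F := card_image_le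

end Orientation

theorem exists_orientation_far_from_homomorphisms {V W : Type*} [LinearOrder V]
    [Fintype V] [Fintype W] (G : SimpleGraph V) [DecidableRel G.Adj] [Fintype G.edgeSet] (t : ℕ)
    (hcount : 2 ^ (Fintype.card W * Fintype.card W) * Fintype.card W ^ Fintype.card V *
      ∑ i ∈ range (t + 1), (Fintype.card G.edgeSet).choose i < 2 ^ Fintype.card G.edgeSet) :
    ∃ A : V → V → Bool,
      (∀ u v, A u v = true → G.Adj u v) ∧
      (∀ u v, G.Adj u v → A u v = !A v u) ∧
      ∀ D : W → W → Bool, (∀ a b, D a b = true → D b a = false) →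
        ∀ F : Finset (V × V), #F ≤ t →
          ∀ g : V → W,
            ¬ (∀ u v, A u v = true → (u, v) ∉ F → D (g u) (g v) = true) := by
  classical
  by_contra! hcover
  have hball := two_pow_card_le_card_mul_sum_choose
    (univ : Finset ((W → W → Bool) × (V → W))) (fun b => pulledBackBits G b.1 b.2) t
    fun x => by
      obtain ⟨D, hD, F, hF, g, hx⟩ := hcover (orientationOfBits G x)
        (fun _ _ => adj_of_orientationOfBits) (fun _ _ => orientationOfBits_swap x)
      exact ⟨(D, g), mem_univ _, (hammingDist_pulledBackBits_le_card hD hx).trans hF⟩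
  simp only [card_univ, Fintype.card_prod, Fintype.card_fun, Fintype.card_bool, ← pow_mul]
    at hball
  exact hball.not_gt hcount

theorem sq_le_four_mul_choose_two {k : ℕ} (hk : 2 ≤ k) : k * k ≤ 4 * k.choose 2 := by
  obtain ⟨j, rfl⟩ : ∃ j, k = j + 1 := ⟨k - 1, by omega⟩
  have hchoose := Nat.add_one_mul_choose_eq j 1
  rw [Nat.choose_one_right] at hchoose
  nlinarith

theorem pow_le_two_pow_of_logb_le_div {k n m c : ℕ} (hk : 0 < k)
    (h : c * Real.logb 2 k ≤ (m : ℝ) / n) : k ^ (n * c) ≤ 2 ^ m := by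
  rcases n.eq_zero_or_pos with rfl | hn
  · simpa using Nat.one_le_two_pow
  have hlog : Real.logb 2 ((k : ℝ) ^ (n * c)) ≤ m := by
    rw [le_div_iff₀ (by exact_mod_cast hn)] at h
    rw [Real.logb_pow]
    push_cast
    linarith
  rw [Real.logb_le_iff_le_rpow one_lt_two (by positivity), Real.rpow_natCast] at hlog
  exact_mod_cast hlog

theorem two_pow_mul_pow_mul_lt_eight_pow {K k n t m : ℕ} (hK : 5 * K ≤ m)
    (hk : k ^ (n * 50) ≤ 2 ^ m) (ht : 10 * t ≤ m) (hm : m ≠ 0) :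
    2 ^ K * k ^ n * (4 ^ t * 5 ^ m) < 8 ^ m := by
  -- the 50th power clears the fractions `m/5`, `m/50`, `m/10` from the exponents
  refine lt_of_pow_lt_pow_left₀ 50 (Nat.zero_le _) ?_
  calc (2 ^ K * k ^ n * (4 ^ t * 5 ^ m)) ^ 50
      = 2 ^ (K * 50) * k ^ (n * 50) * (4 ^ (t * 50) * 5 ^ (m * 50)) := by
        simp only [mul_pow, ← pow_mul]
    _ ≤ 2 ^ (m * 10) * 2 ^ m * (4 ^ (m * 5) * 5 ^ (m * 50)) := by
        gcongr ?_ * ?_ * (?_ * _)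
        · exact Nat.pow_le_pow_right two_pos (by omega)
        · exact Nat.pow_le_pow_right (by norm_num) (by omega)
    _ = (2 ^ 10 * 2 * (4 ^ 5 * 5 ^ 50)) ^ m := by simp only [mul_pow, ← pow_mul']
    _ < (8 ^ 50) ^ m := Nat.pow_lt_pow_left (by norm_num) hm
    _ = (8 ^ m) ^ 50 := pow_right_comm _ _ _

theorem stmt_15_general {V : Type} [Fintype V] [DecidableEq V]
    (G : SimpleGraph V) [DecidableRel G.Adj] (k : ℕ) (hk : 2 ≤ k)
    (m n : ℕ) (hm : m = G.edgeFinset.card) (hn : n = Fintype.card V)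
    (hdeg : 100 * Real.logb 2 k ≤ (2 * m : ℝ) / n)
    (hm20 : 20 * k.choose 2 ≤ m) :
    ∃ A : V → V → Bool,
      (∀ u v, A u v = true → G.Adj u v) ∧
      (∀ u v, G.Adj u v → A u v = !A v u) ∧
      ∀ D : Fin k → Fin k → Bool, (∀ a b, D a b = true → D b a = false) →
        ∀ F : Finset (V × V), (F.card : ℝ) ≤ (m : ℝ) / 10 →
          ∀ g : V → Fin k,
            ¬ (∀ u v, A u v = true → (u, v) ∉ F → D (g u) (g v) = true) := by
  let : LinearOrder V := LinearOrder.lift' _ (Fintype.equivFin V).injective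
  have hK : 5 * (k * k) ≤ m := by linarith [sq_le_four_mul_choose_two hk]
  have hkn : k ^ (n * 50) ≤ 2 ^ m := by
    refine pow_le_two_pow_of_logb_le_div (by omega) ?_
    rw [mul_div_assoc] at hdeg
    push_cast
    linarith
  have hcount : 2 ^ (k * k) * k ^ n * ∑ i ∈ range (m / 10 + 1), m.choose i < 2 ^ m := by
    refine lt_of_mul_lt_mul_right ?_ (Nat.zero_le (4 ^ m))
    calc 2 ^ (k * k) * k ^ n * (∑ i ∈ range (m / 10 + 1), m.choose i) * 4 ^ m
        ≤ 2 ^ (k * k) * k ^ n * (4 ^ (m / 10) * 5 ^ m) := by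
          rw [mul_assoc]
          exact Nat.mul_le_mul_left _ (sum_range_choose_mul_pow_le m (m / 10) 4 (by norm_num))
      _ < 8 ^ m := two_pow_mul_pow_mul_lt_eight_pow hK hkn (Nat.mul_div_le m 10)
          (by have := Nat.choose_pos hk; omega)
      _ = 2 ^ m * 4 ^ m := by rw [← mul_pow]; norm_num
  obtain ⟨A, hAadj, hAswap, hA⟩ :=
    exists_orientation_far_from_homomorphisms (W := Fin k) G (m / 10)
      (by simpa [hn, hm, G.edgeFinset_card] using hcount)
  refine ⟨A, hAadj, hAswap, fun D hD F hF g => hA D hD F ?_ g⟩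
  rw [Nat.le_div_iff_mul_le (by norm_num)]
  exact_mod_cast (by linarith : (#F * 10 : ℝ) ≤ m)

/-- For a graph `G` with `m ≥ 20·C(k,2)` edges and average degree
`2m/n ≥ 100·log₂ k`, provided the union-bound quantity
`3^{C(k,2)} · 2^{H(1/10)·m} · k^n · 2^{−(9/10)m}` is less than `1`, there exists
an orientation `A` of `G` such that for every oriented graph `D` on at most `k`
vertices, every set `F` of at most `m/10` arcs, and every map `g`, the map `g`
does not send every arc of `A − F` to an arc of `D` with matching
orientation. -/
theorem stmt_15 {V : Type} [Fintype V] [DecidableEq V]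
    (G : SimpleGraph V) [DecidableRel G.Adj] (k : ℕ) (hk : 2 ≤ k)
    (m n : ℕ) (hm : m = G.edgeFinset.card) (hn : n = Fintype.card V)
    (hdeg : 100 * Real.logb 2 k ≤ (2 * m : ℝ) / n)
    (hm20 : 20 * k.choose 2 ≤ m)
    (hprob : (3 : ℝ) ^ (k.choose 2) *
        (2 : ℝ) ^ (((1 / 10 : ℝ) * Real.logb 2 10 +
          (9 / 10 : ℝ) * Real.logb 2 (10 / 9)) * m) *
        (k : ℝ) ^ n * (2 : ℝ) ^ (-(9 / 10 : ℝ) * m) < 1) :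
    ∃ A : V → V → Bool,
      (∀ u v, A u v = true → G.Adj u v) ∧
      (∀ u v, G.Adj u v → A u v = !A v u) ∧
      ∀ D : Fin k → Fin k → Bool, (∀ a b, D a b = true → D b a = false) →
        ∀ F : Finset (V × V), (F.card : ℝ) ≤ (m : ℝ) / 10 →
          ∀ g : V → Fin k,
            ¬ (∀ u v, A u v = true → (u, v) ∉ F → D (g u) (g v) = true) :=
  stmt_15_general G k hk m n hm hn hdeg hm20
end

section
/- Let T be a forest (acyclic simple graph) on vertex set V with k connected components, and let G be a graph on V containing T as a spanning forest, where every edge of G not in T closes a cycle. Orient the edges of G uniformly at random and independently. Then the probability that the resulting orientation admits a homomorphism to the directed 3-cycle C₃ (mapping each arc (u,v) to an arc of C₃) is at most (1/2)^{|E(G)| − |V| + k}. -/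
/-!
An orientation that maps to `C₃` is determined by its restriction to the spanning forest `T`:
a homomorphism `h` to `C₃` is read off along tree paths up to an additive constant, and every
edge `uv` of `G` is then oriented from `u` to `v` exactly when `h v - h u = 1`. Hence at most
`2 ^ |E(T)|` of the `2 ^ |E(G)|` orientations qualify, and `|E(T)| + k ≤ |V|` for a forest
with `k` components.
-/

open SimpleGraph Finset

namespace SimpleGraph

variable {V : Type} {T : SimpleGraph V}

lemma IsAcyclic.eq_penultimate_of_adj_of_dist_lt (hT : T.IsAcyclic) {r u x : V}
    {p : T.Walk r x} (hp : p.IsPath) (hux : T.Adj u x) (hlt : T.dist r u < T.dist r x) :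
    u = p.penultimate := by
  classical
  obtain ⟨q, hq, hqlen⟩ := (p.reachable.trans hux.symm.reachable).exists_path_of_dist
  have hx : x ∉ q.support := fun hx =>
    absurd ((dist_le (q.takeUntil x hx)).trans (q.length_takeUntil_le_length hx)) (by omega)
  exact hT.eq_penultimate_of_adj_end hp hux.symm
    (hT.mem_support_of_ne_mem_support_of_adj_of_isPath hp hq hux.symm hx)

lemma IsAcyclic.card_edgeFinset_add_card_connectedComponent_le [Fintype V] [DecidableRel T.Adj]
    (hT : T.IsAcyclic) :
    #T.edgeFinset + Nat.card T.ConnectedComponent ≤ Fintype.card V := by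
  set root : V → V := fun x => (T.connectedComponentMk x).out
  have hroot_reach (x : V) : T.Reachable (root x) x :=
    ConnectedComponent.exact (Quot.out_eq _)
  have hroot_adj {u x : V} (h : T.Adj u x) : root u = root x := by
    simp only [root, ConnectedComponent.sound h.reachable]
  have hroot_out (c : T.ConnectedComponent) : root c.out = c.out :=
    congrArg Quot.out (Quot.out_eq c)
  -- Send each edge to its endpoint farther from the root: in a forest a vertex has only one
  -- neighbour closer to the root, so this is injective, and it never hits a root.
  have hfar : ∀ e : T.edgeSet, ∃ u x, T.Adj u x ∧ e.1 = s(u, x) ∧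
      T.dist (root x) u < T.dist (root x) x := by
    rintro ⟨e, he⟩
    induction e using Sym2.ind with | _ a b
    have hab : T.Adj a b := he
    rcases (hT.dist_ne_of_adj hab (hroot_reach a)).lt_or_gt with h | h
    · exact ⟨a, b, hab, rfl, hroot_adj hab ▸ h⟩
    · exact ⟨b, a, hab.symm, Sym2.eq_swap, h⟩
  choose near far hadj hedge hlt using hfar
  have hfar_ne_root (e : T.edgeSet) : far e ≠ root (far e) := fun h => by
    have := hlt e; rw [← h, dist_self] at this; omega
  have hΦ : Function.Injective (Sum.elim far (Quot.out : T.ConnectedComponent → V)) := by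
    rintro (e | c) (e' | c') h
    · replace h : far e = far e' := h
      obtain ⟨p, hp, -⟩ := (hroot_reach (far e)).exists_path_of_dist
      have hnear := (hT.eq_penultimate_of_adj_of_dist_lt hp (hadj e) (hlt e)).trans
        (hT.eq_penultimate_of_adj_of_dist_lt hp (h ▸ hadj e') (h ▸ hlt e')).symm
      exact congrArg Sum.inl (Subtype.ext (by rw [hedge, hedge, hnear, h]))
    · replace h : far e = c'.out := h
      exact absurd (h ▸ (hroot_out c').symm) (hfar_ne_root e)
    · replace h : c.out = far e' := h
      exact absurd (h ▸ hroot_out c).symm (hfar_ne_root e')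
    · replace h : c.out = c'.out := h
      exact congrArg Sum.inr (by rw [← Quot.out_eq c, h, Quot.out_eq])
  have := Nat.card_le_card_of_injective _ hΦ
  rwa [Nat.card_sum, Nat.card_eq_fintype_card (α := T.edgeSet), card_edgeSet,
    Nat.card_eq_fintype_card (α := V)] at this

-- `A u v = true` orients the edge `uv` from `u` to `v`; `C₃` is `Fin 3` with arcs `i → i + 1`.
def c3HomOrientations (G : SimpleGraph V) : Set (V → V → Bool) :=
  {A | (∀ u v, A u v = true → G.Adj u v) ∧ (∀ u v, G.Adj u v → A u v = !A v u) ∧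
    ∃ h : V → Fin 3, ∀ u v, A u v = true → h v = h u + 1}

section Orientation

variable {G : SimpleGraph V} {A A' : V → V → Bool} {h h' : V → Fin 3}

lemma sub_eq_ite_of_adj (hskew : ∀ u v, G.Adj u v → A u v = !A v u)
    (hh : ∀ u v, A u v = true → h v = h u + 1) {u v : V} (huv : G.Adj u v) :
    h v - h u = if A u v then 1 else -1 := by
  cases hA : A u v with
  | true => rw [hh u v hA]; simp
  | false =>
    have hvu : A v u = true := by simpa [hA] using (hskew u v huv).symm
    rw [hh v u hvu]; simp

lemma eq_decide_sub_eq_one_of_adj (hskew : ∀ u v, G.Adj u v → A u v = !A v u)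
    (hh : ∀ u v, A u v = true → h v = h u + 1) {u v : V} (huv : G.Adj u v) :
    A u v = decide (h v - h u = 1) := by
  rw [sub_eq_ite_of_adj hskew hh huv]
  cases A u v <;> decide

lemma sub_eq_sub_of_walk (hTG : T ≤ G)
    (hskew : ∀ u v, G.Adj u v → A u v = !A v u) (hh : ∀ u v, A u v = true → h v = h u + 1)
    (hskew' : ∀ u v, G.Adj u v → A' u v = !A' v u)
    (hh' : ∀ u v, A' u v = true → h' v = h' u + 1)
    (hAA' : ∀ u v, T.Adj u v → A u v = A' u v) {a b : V} (p : T.Walk a b) :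
    h b - h a = h' b - h' a := by
  induction p with
  | nil => simp
  | @cons a c b hac p ih =>
    have hstep : h c - h a = h' c - h' a := by
      rw [sub_eq_ite_of_adj hskew hh (hTG hac), sub_eq_ite_of_adj hskew' hh' (hTG hac),
        hAA' a c hac]
    calc h b - h a = (h b - h c) + (h c - h a) := by abel
      _ = (h' b - h' c) + (h' c - h' a) := by rw [ih, hstep]
      _ = h' b - h' a := by abel

lemma eq_of_mem_c3HomOrientations (hA : A ∈ c3HomOrientations G)
    (hA' : A' ∈ c3HomOrientations G) (hTG : T ≤ G)
    (hreach : ∀ u v, G.Adj u v → T.Reachable u v)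
    (hAA' : ∀ u v, T.Adj u v → A u v = A' u v) : A = A' := by
  obtain ⟨hGA, hskew, h, hh⟩ := hA
  obtain ⟨hGA', hskew', h', hh'⟩ := hA'
  funext u v
  by_cases huv : G.Adj u v
  · obtain ⟨p⟩ := hreach u v huv
    rw [eq_decide_sub_eq_one_of_adj hskew hh huv, eq_decide_sub_eq_one_of_adj hskew' hh' huv,
      sub_eq_sub_of_walk hTG hskew hh hskew' hh' hAA' p]
  · rw [Bool.eq_false_iff.mpr (mt (hGA u v) huv), Bool.eq_false_iff.mpr (mt (hGA' u v) huv)]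

lemma eq_of_adj_of_forall_out_eq (hskew : ∀ u v, T.Adj u v → A u v = !A v u)
    (hskew' : ∀ u v, T.Adj u v → A' u v = !A' v u)
    (hout : ∀ e ∈ T.edgeSet, A e.out.1 e.out.2 = A' e.out.1 e.out.2) {u v : V}
    (huv : T.Adj u v) :
    A u v = A' u v := by
  have he := hout s(u, v) huv
  have hmk : s((s(u, v)).out.1, (s(u, v)).out.2) = s(u, v) := Quot.out_eq _
  rcases Sym2.eq_iff.mp hmk with ⟨h1, h2⟩ | ⟨h1, h2⟩
  · rwa [h1, h2] at he
  · rw [h1, h2] at he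
    rw [hskew u v huv, hskew' u v huv, he]

lemma ncard_c3HomOrientations_le [Fintype V] [DecidableRel T.Adj] (hTG : T ≤ G)
    (hreach : ∀ u v, G.Adj u v → T.Reachable u v) :
    (c3HomOrientations G).ncard ≤ 2 ^ #T.edgeFinset := by
  have hinj : Function.Injective
      fun (A : c3HomOrientations G) (e : T.edgeSet) => A.1 e.1.out.1 e.1.out.2 := by
    intro A A' hAA'
    have hskew := fun u v (huv : T.Adj u v) => A.2.2.1 u v (hTG huv)
    have hskew' := fun u v (huv : T.Adj u v) => A'.2.2.1 u v (hTG huv)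
    exact Subtype.ext <| eq_of_mem_c3HomOrientations A.2 A'.2 hTG hreach fun u v =>
      eq_of_adj_of_forall_out_eq hskew hskew' fun e he => congrFun hAA' ⟨e, he⟩
  have := Nat.card_le_card_of_injective _ hinj
  rwa [Nat.card_coe_set_eq, Nat.card_fun, Nat.card_eq_fintype_card (α := T.edgeSet), card_edgeSet,
    Nat.card_eq_fintype_card, Fintype.card_bool] at this

end Orientation

end SimpleGraph

lemma two_pow_div_two_pow_le_half_rpow {t e n k : ℕ} (h : t + k ≤ n) :
    (2 : ℝ) ^ t / 2 ^ e ≤ (1 / 2 : ℝ) ^ ((e : ℝ) - n + k) := by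
  have htk : (t : ℝ) ≤ n - k := by rw [le_sub_iff_add_le]; exact_mod_cast h
  rw [one_div, Real.inv_rpow zero_le_two, ← Real.rpow_neg zero_le_two, div_eq_mul_inv,
    ← Real.rpow_natCast, ← Real.rpow_natCast, ← Real.rpow_neg zero_le_two,
    ← Real.rpow_add two_pos]
  exact Real.rpow_le_rpow_of_exponent_le one_le_two (by linarith)

theorem stmt_16_general {V : Type} [Fintype V]
    (T G : SimpleGraph V) [DecidableRel T.Adj] [DecidableRel G.Adj]
    (hsub : T ≤ G) (hforest : T.IsAcyclic)
    (k : ℕ) (hk : k = Nat.card T.ConnectedComponent)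
    (hclose : ∀ u v, G.Adj u v → ¬ T.Adj u v → T.Reachable u v) :
    (({A : V → V → Bool |
        (∀ u v, A u v = true → G.Adj u v) ∧
        (∀ u v, G.Adj u v → A u v = !A v u) ∧
        ∃ h : V → Fin 3, ∀ u v, A u v = true → h v = h u + 1}.ncard : ℝ) /
      (2 : ℝ) ^ (G.edgeFinset.card : ℕ)) ≤
      (1 / 2 : ℝ) ^ ((G.edgeFinset.card : ℝ) - (Fintype.card V : ℝ) + k) := by
  have hreach (u v : V) (huv : G.Adj u v) : T.Reachable u v :=
    if hT : T.Adj u v then hT.reachable else hclose u v huv hT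
  have hcount : ((c3HomOrientations G).ncard : ℝ) ≤ 2 ^ #T.edgeFinset := by
    exact_mod_cast ncard_c3HomOrientations_le hsub hreach
  calc ((c3HomOrientations G).ncard : ℝ) / 2 ^ #G.edgeFinset
      ≤ 2 ^ #T.edgeFinset / 2 ^ #G.edgeFinset := by gcongr
    _ ≤ _ := two_pow_div_two_pow_le_half_rpow
        (hk ▸ hforest.card_edgeFinset_add_card_connectedComponent_le)

/-- Let `T` be a spanning forest of `G` with `k` components, such that every
edge of `G` not in `T` closes a cycle (i.e. joins vertices in the same
component of `T`). Orienting the edges of `G` uniformly at random, the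
probability that the resulting orientation admits a homomorphism to the
directed 3-cycle is at most `(1/2)^{|E(G)| − |V| + k}`. -/
theorem stmt_16 {V : Type} [Fintype V] [DecidableEq V]
    (T G : SimpleGraph V) [DecidableRel T.Adj] [DecidableRel G.Adj]
    (hsub : T ≤ G) (hforest : T.IsAcyclic)
    (k : ℕ) (hk : k = Nat.card T.ConnectedComponent)
    (hclose : ∀ u v, G.Adj u v → ¬ T.Adj u v → T.Reachable u v) :
    (({A : V → V → Bool |
        (∀ u v, A u v = true → G.Adj u v) ∧
        (∀ u v, G.Adj u v → A u v = !A v u) ∧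
        ∃ h : V → Fin 3, ∀ u v, A u v = true → h v = h u + 1}.ncard : ℝ) /
      (2 : ℝ) ^ (G.edgeFinset.card : ℕ)) ≤
      (1 / 2 : ℝ) ^ ((G.edgeFinset.card : ℝ) - (Fintype.card V : ℝ) + k) :=
  stmt_16_general T G hsub hforest k hk hclose
end

section
/- Let δ > 0 and let G be a finite simple graph with girth greater than 2g and 2|E(G)| ≥ (2+δ)|V(G)|, and suppose the treewidth of G − F is at most k for some edge set F with |F| ≤ ε|E(G)| where ε = δ/(2(2+δ)) and the girth of G is at least 12k/δ. Then G − F has average degree at least 2 + δ/2 and girth at least 3·(4k/δ), hence by the girth-minor lemma G − F has a minor of average degree greater than 2k, contradicting tw(G−F) ≤ k; therefore no such F exists. In particular: any class of graphs with unbounded girth and average degree at least 2 + δ is not fractionally-treewidth-fragile. -/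
/-- `G` has treewidth at most `k`: there is a tree decomposition all of whose
bags have size at most `k + 1`. -/
def HasTreewidthLE {V : Type} (G : SimpleGraph V) (k : ℕ) : Prop :=
  ∃ (ι : Type) (T : SimpleGraph ι) (B : ι → Finset V),
    T.Connected ∧ T.IsAcyclic ∧
    (∀ v : V, ∃ i, v ∈ B i) ∧
    (∀ u v, G.Adj u v → ∃ i, u ∈ B i ∧ v ∈ B i) ∧
    (∀ (v : V) (i j : ι), v ∈ B i → v ∈ B j →
      ∃ p : T.Walk i j, ∀ x ∈ p.support, v ∈ B x) ∧
    (∀ i, (B i).card ≤ k + 1)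

/-!
Fix `ε < δ / (2 (2 + δ))`, let `k` be the treewidth bound that fragility provides for `ε`,
and take `r ≥ 4k/δ`. With unit weights, a graph `G` of the class with girth at least `8r + 3`
loses at most an `ε`-fraction of its edges to `F`, so `H = G - F` has treewidth at most `k`,
girth at least `8r + 3` and average degree at least `2 + δ/2`. Deleting vertices of degree at most
one preserves all of this, so we may assume that `H` has minimum degree two.

Pick a maximal set `S` of vertices pairwise more than `2r` apart and grow a BFS forest from `S`.
Contracting its trees gives a minor of `H` on `S`, which has at most `k |S|` edges. A non-forest
edge inside a tree, or two non-forest edges between the same two trees, would close a cycle of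
length at most `8r + 2`; hence `|E(H)| ≤ (|V| - |S|) + k |S|`. Each tree contains the `r`-ball
around its root, which has at least `r + 1` vertices by minimum degree and girth, so
`|S| (r + 1) ≤ |V|`. Together with `|E(H)| ≥ (1 + δ/4) |V|` this forces `δ (r + 1) / 2 < 2k`,
contradicting the choice of `r`.
-/

open SimpleGraph Finset

namespace HasTreewidthLE

variable {V W : Type} {G : SimpleGraph V} {k : ℕ}

theorem induce (h : HasTreewidthLE G k) (s : Set V) : HasTreewidthLE (G.induce s) k := by
  classical
  obtain ⟨ι, T, B, hT, hTa, hcov, hadj, hwalk, hcard⟩ := h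
  refine ⟨ι, T, fun i => (B i).subtype (· ∈ s), hT, hTa, fun v => ?_, fun u v huv => ?_,
    fun v i j hi hj => ?_, fun i => ?_⟩
  · simpa using hcov v
  · simpa using hadj u v huv
  · simpa using hwalk v i j (by simpa using hi) (by simpa using hj)
  · exact (card_subtype _ _).trans_le ((card_filter_le _ _).trans (hcard i))

theorem map (h : HasTreewidthLE G k) {f : V → W} (hf : Function.Surjective f)
    (hfib : ∀ u v, f u = f v → ∃ p : G.Walk u v, ∀ x ∈ p.support, f x = f u) :
    HasTreewidthLE (G.map f) k := by
  classical
  obtain ⟨ι, T, B, hT, hTa, hcov, hadj, hwalk, hcard⟩ := h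
  have lift : ∀ {u v : V} (p : G.Walk u v) (i j : ι), u ∈ B i → v ∈ B j →
      ∃ q : T.Walk i j, ∀ x ∈ q.support, ∃ y ∈ p.support, y ∈ B x := by
    intro u v p
    induction p with
    | nil =>
      intro i j hi hj
      obtain ⟨q, hq⟩ := hwalk _ i j hi hj
      exact ⟨q, fun x hx => ⟨_, Walk.start_mem_support _, hq x hx⟩⟩
    | cons hab p ih =>
      intro i j hi hj
      obtain ⟨l, hal, hbl⟩ := hadj _ _ hab
      obtain ⟨q₁, hq₁⟩ := hwalk _ i l hi hal
      obtain ⟨q₂, hq₂⟩ := ih l j hbl hj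
      refine ⟨q₁.append q₂, fun x hx => ?_⟩
      rcases (Walk.mem_support_append_iff _ _).mp hx with hx | hx
      · exact ⟨_, Walk.start_mem_support _, hq₁ x hx⟩
      · obtain ⟨y, hy, hyx⟩ := hq₂ x hx
        exact ⟨y, by simp [hy], hyx⟩
  refine ⟨ι, T, fun i => (B i).image f, hT, hTa, fun w => ?_, fun a b hab => ?_,
    fun w i j hi hj => ?_, fun i => card_image_le.trans (hcard i)⟩
  · obtain ⟨v, rfl⟩ := hf w
    obtain ⟨i, hi⟩ := hcov v
    exact ⟨i, mem_image_of_mem f hi⟩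
  · obtain ⟨-, u, v, huv, rfl, rfl⟩ := hab
    obtain ⟨i, hu, hv⟩ := hadj u v huv
    exact ⟨i, mem_image_of_mem f hu, mem_image_of_mem f hv⟩
  · obtain ⟨u, hu, rfl⟩ := mem_image.mp hi
    obtain ⟨v, hv, hvu⟩ := mem_image.mp hj
    obtain ⟨p, hp⟩ := hfib u v hvu.symm
    obtain ⟨q, hq⟩ := lift p i j hu hv
    refine ⟨q, fun x hx => ?_⟩
    obtain ⟨y, hy, hyx⟩ := hq x hx
    exact mem_image.mpr ⟨y, hyx, hp y hy⟩

end HasTreewidthLE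

namespace SimpleGraph

variable {ι : Type} {T : SimpleGraph ι}

lemma Walk.IsPath.append_geodesic {b c r : ι} {p : T.Walk b c} (hp : p.IsPath)
    {q : T.Walk c r} (hq : q.length = T.dist c r)
    (hfar : ∀ x ∈ p.support, T.dist c r ≤ T.dist x r) : (p.append q).IsPath := by
  classical
  have hq' : q.IsPath := q.isPath_of_length_eq_dist hq
  rw [Walk.isPath_def, Walk.support_append]
  refine hp.support_nodup.append hq'.support_nodup.tail fun x hxp hxq => ?_
  have hxc : x ≠ c := by
    rintro rfl
    exact (List.nodup_cons.mp (Walk.cons_tail_support q ▸ hq'.support_nodup)).1 hxq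
  have hx : x ∈ q.support := List.mem_of_mem_tail hxq
  have := (dist_le (q.dropUntil x hx)).trans_lt (Walk.length_dropUntil_lt_length hx hxc)
  have := hfar x hxp
  omega

lemma exists_isPath_append_geodesic (hT : T.Connected) {X : Set ι}
    (hX : ∀ i j, i ∈ X → j ∈ X → ∃ p : T.Walk i j, ∀ x ∈ p.support, x ∈ X)
    {b c r : ι} (hb : b ∈ X) (hc : MinimalFor (· ∈ X) (T.dist · r) c) :
    ∃ (p : T.Walk b c) (q : T.Walk c r), (∀ x ∈ p.support, x ∈ X) ∧
      q.length = T.dist c r ∧ (p.append q).IsPath := by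
  classical
  obtain ⟨w, hw⟩ := hX b c hb hc.1
  obtain ⟨q, hq⟩ := hT.exists_walk_length_eq_dist c r
  have hsupp : ∀ x ∈ w.bypass.support, x ∈ X :=
    fun x hx => hw x (w.support_bypass_subset_support hx)
  exact ⟨w.bypass, q, hsupp, hq,
    w.bypass_isPath.append_geodesic hq fun x hx => hc.le (hsupp x hx)⟩

end SimpleGraph

namespace HasTreewidthLE

variable {V : Type} {G : SimpleGraph V} {k : ℕ}

theorem card_edgeFinset_le [Fintype V] [DecidableRel G.Adj] (h : HasTreewidthLE G k) :
    #G.edgeFinset ≤ k * Fintype.card V := by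
  classical
  obtain ⟨ι, T, B, hT, hTa, hcov, hadj, hwalk, hcard⟩ := h
  obtain ⟨r⟩ := hT.nonempty
  choose top htop using fun v =>
    exists_minimalFor_of_wellFoundedLT (v ∈ B ·) (T.dist · r) (hcov v)
  -- The tree path from a common bag of `u` and `v` to the root visits `top u` and `top v`,
  -- and all bags on it up to `top v` contain `v`.
  have key : ∀ u v, G.Adj u v → T.dist (top v) r ≤ T.dist (top u) r → v ∈ B (top u) := by
    intro u v huv hle
    obtain ⟨b, hub, hvb⟩ := hadj u v huv
    have path (z : V) (hz : z ∈ B b) :=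
      exists_isPath_append_geodesic hT (X := {i | z ∈ B i}) (hwalk z) hz (htop z)
    obtain ⟨pu, qu, -, -, hPu⟩ := path u hub
    obtain ⟨pv, qv, hpv, hqv, hPv⟩ := path v hvb
    have hP : pu.append qu = pv.append qv :=
      congrArg Subtype.val ((hTa.subsingleton_path _ _).elim ⟨_, hPu⟩ ⟨_, hPv⟩)
    have hmem : top u ∈ (pv.append qv).support :=
      hP ▸ (Walk.mem_support_append_iff _ _).mpr (Or.inl (Walk.end_mem_support _))
    rcases (Walk.mem_support_append_iff _ _).mp hmem with h | h
    · exact hpv _ h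
    · by_contra hv
      have hne : top u ≠ top v := fun he => hv (he ▸ (htop v).1)
      have := (dist_le (qv.dropUntil _ h)).trans_lt (Walk.length_dropUntil_lt_length h hne)
      omega
  calc #G.edgeFinset ≤ #(univ.sigma fun u => (B (top u)).erase u) := by
        refine card_le_card_of_surjOn (fun p => s(p.1, p.2)) fun e he => ?_
        induction e with
        | h u v =>
          have huv : G.Adj u v := mem_edgeFinset.mp he
          rcases le_total (T.dist (top v) r) (T.dist (top u) r) with hle | hle
          · exact ⟨⟨u, v⟩, by simpa using ⟨key u v huv hle, huv.ne'⟩, rfl⟩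
          · exact ⟨⟨v, u⟩, by simpa using ⟨key v u huv.symm hle, huv.ne⟩, Sym2.eq_swap⟩
    _ = ∑ u, #((B (top u)).erase u) := card_sigma _ _
    _ ≤ ∑ _u : V, k := sum_le_sum fun u _ => by
        have := card_erase_of_mem (htop u).1
        have := hcard (top u)
        omega
    _ = k * Fintype.card V := by simp [mul_comm]

end HasTreewidthLE

namespace SimpleGraph

variable {V : Type} {G : SimpleGraph V}

lemma egirth_le_length_add_one {u v : V} (h : G.Adj u v) (p : G.Walk v u)
    (he : s(u, v) ∉ p.edges) : G.egirth ≤ p.length + 1 := by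
  classical
  have hcyc : (Walk.cons h p.bypass).IsCycle :=
    Path.cons_isCycle ⟨_, p.bypass_isPath⟩ h fun h' => he (p.edges_bypass_subset_edges h')
  calc G.egirth ≤ (Walk.cons h p.bypass).length := egirth_le_length hcyc
    _ ≤ p.length + 1 := by simpa using p.length_bypass_le_length

lemma exists_isPath_length_eq [Fintype V] [DecidableRel G.Adj] (hdeg : ∀ v, 2 ≤ G.degree v)
    {n : ℕ} (hn : (n : ℕ∞) < G.egirth) (s : V) :
    ∃ (x : V) (p : G.Walk s x), p.IsPath ∧ p.length = n := by
  classical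
  suffices ∀ t ≤ n, ∃ (x : V) (p : G.Walk s x), p.IsPath ∧ p.length = t from this n le_rfl
  intro t ht
  induction t with
  | zero => exact ⟨s, .nil, .nil, rfl⟩
  | succ t ih =>
    obtain ⟨x, p, hp, rfl⟩ := ih (by omega)
    obtain ⟨y, hy, hyp⟩ := exists_mem_ne
      ((card_neighborFinset_eq_degree G x).symm ▸ hdeg x) p.penultimate
    have hxy : G.Adj x y := (mem_neighborFinset G x y).mp hy
    have hye : s(x, y) ∉ p.edges := fun h => hyp (hp.eq_penultimate_of_mem_edges h)
    have hys : y ∉ p.support := by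
      intro hys
      have hcyc := egirth_le_length_add_one hxy (p.dropUntil y hys)
        fun h => hye (p.edges_dropUntil_subset_edges hys h)
      have hlen : ((p.dropUntil y hys).length + 1 : ℕ∞) ≤ n := by
        exact_mod_cast (p.length_dropUntil_le_length hys).trans_lt (Nat.lt_of_succ_le ht)
      exact (hcyc.trans hlen).not_gt hn
    exact ⟨y, p.concat hxy, hp.concat hys hxy, by simp⟩

variable (G) (S : Finset V) (r : ℕ)

noncomputable def infEdist (v : V) : ℕ∞ := S.inf (G.edist v)

open scoped Classical in
noncomputable def bfsParent (v : V) : V :=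
  if h : ∃ u, G.Adj v u ∧ G.infEdist S u < G.infEdist S v then h.choose else v

noncomputable def bfsEdges [Fintype V] [DecidableEq V] : Finset (Sym2 V) :=
  Sᶜ.image fun v => s(v, G.bfsParent S v)

/-- Each step of `bfsParent` outside `S` brings a vertex strictly closer to `S`, so when every
vertex is within `2 * r` of `S` this is the root in `S` of the BFS tree containing `v`. -/
noncomputable def bfsRoot (v : V) : V := (G.bfsParent S)^[2 * r] v

structure IsSeparatedNet : Prop where
  eq_of_edist_le : ∀ s ∈ S, ∀ t ∈ S, G.edist s t ≤ 2 * r → s = t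
  infEdist_le : ∀ v, G.infEdist S v ≤ 2 * r

variable {G S r}

lemma infEdist_le_edist {v s : V} (hs : s ∈ S) : G.infEdist S v ≤ G.edist v s := inf_le hs

lemma infEdist_eq_zero {v : V} : G.infEdist S v = 0 ↔ v ∈ S := by
  refine ⟨fun h => ?_,
    fun hv => nonpos_iff_eq_zero.mp ((infEdist_le_edist hv).trans edist_self.le)⟩
  rcases S.eq_empty_or_nonempty with rfl | hS
  · simp [infEdist] at h
  obtain ⟨s, hs, hvs⟩ := exists_mem_eq_inf S hS (G.edist v)
  rw [infEdist, hvs, edist_eq_zero_iff] at h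
  exact h ▸ hs

lemma exists_adj_infEdist_lt {v : V} (hv : v ∉ S) (hfin : G.infEdist S v ≠ ⊤) :
    ∃ u, G.Adj v u ∧ G.infEdist S u < G.infEdist S v := by
  have hS : S.Nonempty := nonempty_iff_ne_empty.mpr fun h => hfin (by simp [infEdist, h])
  obtain ⟨s, hs, hvs⟩ := exists_mem_eq_inf S hS (G.edist v)
  rw [← infEdist] at hvs
  obtain ⟨p, hp⟩ := (reachable_of_edist_ne_top (hvs ▸ hfin)).exists_walk_length_eq_edist
  obtain ⟨u, huv, q, rfl⟩ := Walk.exists_eq_cons_of_ne (ne_of_mem_of_not_mem hs hv).symm p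
  refine ⟨u, huv, ?_⟩
  calc G.infEdist S u ≤ q.length := (infEdist_le_edist hs).trans (edist_le q)
    _ < q.length + 1 := by exact_mod_cast Nat.lt_succ_self _
    _ = G.infEdist S v := by rw [hvs, ← hp, Walk.length_cons, Nat.cast_succ]

lemma bfsParent_of_mem {v : V} (hv : v ∈ S) : G.bfsParent S v = v := by
  rw [bfsParent, dif_neg]
  rintro ⟨u, -, hu⟩
  simp [infEdist_eq_zero.mpr hv] at hu

lemma adj_bfsParent {v : V} (hv : v ∉ S) (hfin : G.infEdist S v ≠ ⊤) :
    G.Adj v (G.bfsParent S v) ∧ G.infEdist S (G.bfsParent S v) < G.infEdist S v := by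
  have h := exists_adj_infEdist_lt hv hfin
  rw [bfsParent, dif_pos h]
  exact h.choose_spec

lemma infEdist_bfsParent_le {v : V} (hv : v ∉ S) {j : ℕ} (hj : G.infEdist S v ≤ j + 1) :
    G.infEdist S (G.bfsParent S v) ≤ j :=
  ENat.lt_natCast_add_one_iff.mp <|
    (adj_bfsParent hv (ne_top_of_le_ne_top (by simp) hj)).2.trans_le hj

lemma bfsParent_iterate_mem {j : ℕ} {v : V} (hv : G.infEdist S v ≤ j) :
    (G.bfsParent S)^[j] v ∈ S := by
  induction j generalizing v with
  | zero => exact infEdist_eq_zero.mp (nonpos_iff_eq_zero.mp (by exact_mod_cast hv))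
  | succ j ih =>
    by_cases hvS : v ∈ S
    · rwa [Function.iterate_fixed (bfsParent_of_mem hvS)]
    · rw [Function.iterate_succ_apply]
      exact ih (infEdist_bfsParent_le hvS (by exact_mod_cast hv))

lemma bfsRoot_of_mem {s : V} (hs : s ∈ S) : G.bfsRoot S r s = s :=
  Function.iterate_fixed (bfsParent_of_mem hs) _

lemma exists_isSeparatedNet [Fintype V] [DecidableEq V] (G : SimpleGraph V) (r : ℕ) :
    ∃ S, G.IsSeparatedNet S r := by
  let separated : Finset (Finset V) :=
    univ.filter fun S => ∀ s ∈ S, ∀ t ∈ S, G.edist s t ≤ 2 * r → s = t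
  obtain ⟨S, hS, hmax⟩ := exists_max_image separated card ⟨∅, by simp [separated]⟩
  have hSsep := (mem_filter.mp hS).2
  refine ⟨S, ⟨hSsep, fun v => ?_⟩⟩
  by_contra! hv
  have hvS : v ∉ S := fun h => by simp [infEdist_eq_zero.mpr h] at hv
  have hfar : ∀ s ∈ S, 2 * r < G.edist v s := fun s hs => hv.trans_le (infEdist_le_edist hs)
  have hins : insert v S ∈ separated := by
    simp only [separated, mem_filter, mem_univ, true_and, mem_insert]
    rintro s (rfl | hs) t (rfl | ht) hst
    · rfl
    · exact absurd hst (hfar t ht).not_ge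
    · exact absurd (edist_comm ▸ hst) (hfar s hs).not_ge
    · exact hSsep s hs t ht hst
  have := hmax _ hins
  rw [card_insert_of_notMem hvS] at this
  omega

namespace IsSeparatedNet

variable (hS : G.IsSeparatedNet S r)
include hS

lemma bfsRoot_mem (v : V) : G.bfsRoot S r v ∈ S :=
  bfsParent_iterate_mem (by exact_mod_cast hS.infEdist_le v)

lemma bfsRoot_bfsParent (v : V) : G.bfsRoot S r (G.bfsParent S v) = G.bfsRoot S r v := by
  rw [bfsRoot, ← Function.iterate_succ_apply, Function.iterate_succ_apply']
  exact bfsParent_of_mem (hS.bfsRoot_mem v)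

variable [Fintype V] [DecidableEq V]

lemma exists_walk_bfsRoot {j : ℕ} {v : V} (hv : G.infEdist S v ≤ j) :
    ∃ p : G.Walk v (G.bfsRoot S r v), p.length ≤ j ∧
      (∀ x ∈ p.support, G.bfsRoot S r x = G.bfsRoot S r v) ∧
      ∀ e ∈ p.edges, e ∈ G.bfsEdges S := by
  induction j generalizing v with
  | zero =>
    have hvS := infEdist_eq_zero.mp (nonpos_iff_eq_zero.mp (by exact_mod_cast hv))
    exact ⟨Walk.nil.copy rfl (bfsRoot_of_mem hvS).symm, by simp, by simp, by simp⟩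
  | succ j ih =>
    by_cases hvS : v ∈ S
    · exact ⟨Walk.nil.copy rfl (bfsRoot_of_mem hvS).symm, by simp, by simp, by simp⟩
    have hadj := (adj_bfsParent hvS (ne_top_of_le_ne_top (by simp) hv)).1
    obtain ⟨p, hp, hps, hpe⟩ := ih (infEdist_bfsParent_le hvS (by exact_mod_cast hv))
    refine ⟨Walk.cons hadj (p.copy rfl (hS.bfsRoot_bfsParent v)), by simpa using hp, ?_, ?_⟩
    · simp only [Walk.support_cons, Walk.support_copy, List.mem_cons, forall_eq_or_imp]
      exact ⟨trivial, fun x hx => (hps x hx).trans (hS.bfsRoot_bfsParent v)⟩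
    · simp only [Walk.edges_cons, Walk.edges_copy, List.mem_cons, forall_eq_or_imp]
      exact ⟨mem_image_of_mem _ (mem_compl.mpr hvS), hpe⟩

lemma exists_walk_of_bfsRoot_eq {u v : V} (h : G.bfsRoot S r u = G.bfsRoot S r v) :
    ∃ p : G.Walk u v, p.length ≤ 4 * r ∧
      (∀ x ∈ p.support, G.bfsRoot S r x = G.bfsRoot S r u) ∧
      ∀ e ∈ p.edges, e ∈ G.bfsEdges S := by
  obtain ⟨p, hp, hps, hpe⟩ :=
    hS.exists_walk_bfsRoot (j := 2 * r) (by exact_mod_cast hS.infEdist_le u)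
  obtain ⟨q, hq, hqs, hqe⟩ :=
    hS.exists_walk_bfsRoot (j := 2 * r) (by exact_mod_cast hS.infEdist_le v)
  refine ⟨p.append (q.reverse.copy h.symm rfl), by simp; omega, fun x hx => ?_, fun e he => ?_⟩
  · rcases Walk.mem_support_append_iff _ _ |>.mp hx with hx | hx
    · exact hps x hx
    · simp only [Walk.support_copy, Walk.support_reverse, List.mem_reverse] at hx
      exact (hqs x hx).trans h.symm
  · simp only [Walk.edges_append, Walk.edges_copy, Walk.edges_reverse, List.mem_append,
      List.mem_reverse] at he
    exact he.elim (hpe e) (hqe e)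

lemma bfsRoot_eq_of_edist_le {s v : V} (hs : s ∈ S) (hsv : G.edist s v ≤ r) :
    G.bfsRoot S r v = s := by
  obtain ⟨p, hp, -, -⟩ :=
    hS.exists_walk_bfsRoot ((infEdist_le_edist hs).trans (edist_comm ▸ hsv))
  refine (hS.eq_of_edist_le s hs _ (hS.bfsRoot_mem v) ?_).symm
  calc G.edist s (G.bfsRoot S r v)
      ≤ G.edist s v + G.edist v (G.bfsRoot S r v) := G.edist_triangle
    _ ≤ r + r := add_le_add hsv ((edist_le p).trans (by exact_mod_cast hp))
    _ = 2 * r := (two_mul _).symm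

lemma mem_bfsEdges_of_bfsRoot_eq (hg : (4 * r + 2 : ℕ∞) ≤ G.egirth) {u v : V}
    (huv : G.Adj u v) (h : G.bfsRoot S r u = G.bfsRoot S r v) : s(u, v) ∈ G.bfsEdges S := by
  by_contra hP
  obtain ⟨p, hp, -, hpe⟩ := hS.exists_walk_of_bfsRoot_eq h.symm
  have := hg.trans (egirth_le_length_add_one huv p fun he => hP (hpe _ he))
  norm_cast at this
  omega

lemma eq_of_bfsRoot_eq (hg : (8 * r + 3 : ℕ∞) ≤ G.egirth) {u v u' v' : V} (huv : G.Adj u v)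
    (hu'v' : G.Adj u' v') (hu : G.bfsRoot S r u = G.bfsRoot S r u')
    (hv : G.bfsRoot S r v = G.bfsRoot S r v') (hP : s(u, v) ∉ G.bfsEdges S) :
    s(u, v) = s(u', v') := by
  by_contra hne
  obtain ⟨p, hp, -, hpe⟩ := hS.exists_walk_of_bfsRoot_eq hv
  obtain ⟨q, hq, -, hqe⟩ := hS.exists_walk_of_bfsRoot_eq hu.symm
  have hcyc := egirth_le_length_add_one huv (p.append (Walk.cons hu'v'.symm q)) fun he => by
    simp only [Walk.edges_append, Walk.edges_cons, List.mem_append, List.mem_cons] at he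
    rcases he with he | he | he
    · exact hP (hpe _ he)
    · exact hne (he.trans Sym2.eq_swap)
    · exact hP (hqe _ he)
  have := hg.trans hcyc
  simp only [Walk.length_append, Walk.length_cons] at this
  norm_cast at this
  omega

theorem card_edgeFinset_add_card_le [DecidableRel G.Adj] (hg : (8 * r + 3 : ℕ∞) ≤ G.egirth)
    {k : ℕ} (htw : HasTreewidthLE G k) : #G.edgeFinset + #S ≤ Fintype.card V + k * #S := by
  classical
  let root : V → S := fun v => ⟨G.bfsRoot S r v, hS.bfsRoot_mem v⟩
  have hroot {u v : V} : root u = root v ↔ G.bfsRoot S r u = G.bfsRoot S r v := Subtype.ext_iff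
  have hM : HasTreewidthLE (G.map root) k := by
    refine htw.map (fun s => ⟨s, Subtype.ext (bfsRoot_of_mem s.2)⟩) fun u v huv => ?_
    obtain ⟨p, -, hp, -⟩ := hS.exists_walk_of_bfsRoot_eq (hroot.mp huv)
    exact ⟨p, fun x hx => hroot.mpr (hp x hx)⟩
  have hmaps : ∀ e ∈ G.edgeFinset \ G.bfsEdges S,
      Sym2.map root e ∈ (G.map root).edgeFinset := by
    intro e he
    induction e with
    | h u v =>
      obtain ⟨huv, hP⟩ := mem_sdiff.mp he
      have huv : G.Adj u v := mem_edgeFinset.mp huv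
      have hne : root u ≠ root v := fun h =>
        hP (hS.mem_bfsEdges_of_bfsRoot_eq (le_trans (by norm_cast; omega) hg) huv (hroot.mp h))
      simpa using map_adj_apply' huv hne
  have hinj : Set.InjOn (Sym2.map root) ↑(G.edgeFinset \ G.bfsEdges S) := by
    intro e he e' he' h
    induction e with | h u v => induction e' with | h u' v' =>
    obtain ⟨huv, hP⟩ := mem_sdiff.mp (mem_coe.mp he)
    have huv : G.Adj u v := mem_edgeFinset.mp huv
    have huv' : G.Adj u' v' := mem_edgeFinset.mp (mem_sdiff.mp (mem_coe.mp he')).1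
    simp only [Sym2.map_mk, Sym2.eq_iff, hroot] at h
    rcases h with ⟨hu, hv⟩ | ⟨hu, hv⟩
    · exact hS.eq_of_bfsRoot_eq hg huv huv' hu hv hP
    · exact (hS.eq_of_bfsRoot_eq hg huv huv'.symm hu hv hP).trans Sym2.eq_swap
  calc #G.edgeFinset + #S ≤ #(G.edgeFinset \ G.bfsEdges S) + #(G.bfsEdges S) + #S := by
        gcongr; exact card_le_card_sdiff_add_card
    _ ≤ #(G.map root).edgeFinset + #Sᶜ + #S := by
        gcongr
        · exact card_le_card_of_injOn _ hmaps hinj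
        · exact card_image_le
    _ ≤ k * #S + (Fintype.card V - #S) + #S := by
        gcongr
        · simpa using hM.card_edgeFinset_le
        · exact (card_compl S).le
    _ = Fintype.card V + k * #S := by
        have := card_le_univ S
        omega

theorem card_mul_add_one_le_card [DecidableRel G.Adj] (hdeg : ∀ v, 2 ≤ G.degree v)
    (hg : (r : ℕ∞) < G.egirth) : #S * (r + 1) ≤ Fintype.card V := by
  calc #S * (r + 1) = ∑ _s ∈ S, (r + 1) := by rw [sum_const, smul_eq_mul]
    _ ≤ ∑ s ∈ S, #{v | G.bfsRoot S r v = s} := sum_le_sum fun s hs => ?_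
    _ = Fintype.card V := (card_eq_sum_card_fiberwise fun v _ => hS.bfsRoot_mem v).symm
  obtain ⟨x, p, hp, hlen⟩ := exists_isPath_length_eq hdeg hg s
  calc r + 1 = #p.support.toFinset := by
        rw [List.toFinset_card_of_nodup hp.support_nodup, Walk.length_support, hlen]
    _ ≤ _ := card_le_card fun y hy => by
      rw [List.mem_toFinset] at hy
      refine mem_filter.mpr ⟨mem_univ y, hS.bfsRoot_eq_of_edist_le hs ?_⟩
      exact (edist_le (p.takeUntil y hy)).trans
        (by exact_mod_cast hlen ▸ p.length_takeUntil_le_length hy)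

end IsSeparatedNet

variable {r k : ℕ} {δ : ℝ}

theorem not_hasTreewidthLE_of_two_le_degree [Fintype V] [Nonempty V] [DecidableRel G.Adj]
    (hdeg : ∀ v, 2 ≤ G.degree v) (hg : (8 * r + 3 : ℕ∞) ≤ G.egirth)
    (hE : (2 + δ) * Fintype.card V ≤ 2 * #G.edgeFinset) (hr : 2 * k ≤ δ * (r + 1)) :
    ¬ HasTreewidthLE G k := by
  classical
  intro htw
  obtain ⟨S, hS⟩ := G.exists_isSeparatedNet r
  have hSpos : (1 : ℝ) ≤ #S := by
    exact_mod_cast card_pos.mpr ⟨_, hS.bfsRoot_mem (Classical.arbitrary V)⟩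
  have hedges : (#G.edgeFinset + #S : ℝ) ≤ Fintype.card V + k * #S := by
    exact_mod_cast hS.card_edgeFinset_add_card_le hg htw
  have hcells : (#S * (r + 1) : ℝ) ≤ Fintype.card V := by
    exact_mod_cast hS.card_mul_add_one_le_card hdeg (lt_of_lt_of_le (by norm_cast; omega) hg)
  have hδ : 0 ≤ δ :=
    nonneg_of_mul_nonneg_left ((by positivity : (0 : ℝ) ≤ 2 * k).trans hr) (by positivity)
  nlinarith [mul_le_mul_of_nonneg_left hcells hδ,
    mul_le_mul_of_nonneg_right hr (by positivity : (0 : ℝ) ≤ #S)]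

theorem not_hasTreewidthLE_of_egirth {V : Type} [Fintype V] [Nonempty V] {G : SimpleGraph V}
    [DecidableRel G.Adj] (hg : (8 * r + 3 : ℕ∞) ≤ G.egirth)
    (hE : (2 + δ) * Fintype.card V ≤ 2 * #G.edgeFinset) (hr : 2 * k ≤ δ * (r + 1)) :
    ¬ HasTreewidthLE G k := by
  induction h : Fintype.card V using Nat.strong_induction_on generalizing V with
  | _ n ih =>
  by_cases hdeg : ∀ v, 2 ≤ G.degree v
  · exact not_hasTreewidthLE_of_two_le_degree hdeg hg hE hr
  -- Deleting a vertex of degree at most one keeps all hypotheses.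
  push Not at hdeg
  obtain ⟨v, hv⟩ := hdeg
  classical
  have hδ : 0 ≤ δ :=
    nonneg_of_mul_nonneg_left ((by positivity : (0 : ℝ) ≤ 2 * k).trans hr) (by positivity)
  have hdeg_le : G.degree v ≤ #G.edgeFinset :=
    card_incidenceFinset_eq_degree G v ▸ card_le_card (G.incidenceFinset_subset v)
  have hedges : #(G.induce {v}ᶜ).edgeFinset + G.degree v = #G.edgeFinset := by
    rw [card_edgeFinset_induce_compl_singleton, card_edgeFinset_deleteIncidenceSet]
    omega
  have hcard : Fintype.card ({v}ᶜ : Set V) + 1 = n := by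
    rw [Fintype.card_compl_set, Set.card_singleton, ← h]
    have := Fintype.card_pos (α := V)
    omega
  have hn : 2 ≤ n := by
    by_contra! hn
    have hchoose : #G.edgeFinset ≤ n.choose 2 := h ▸ card_edgeFinset_le_card_choose_two
    rw [Nat.choose_eq_zero_of_lt hn, Nat.le_zero] at hchoose
    rw [hchoose, h, ← hcard] at hE
    push_cast at hE
    nlinarith
  have : Nonempty ({v}ᶜ : Set V) := Fintype.card_pos_iff.mp (by omega)
  have hE' : (2 + δ) * Fintype.card ({v}ᶜ : Set V) ≤ 2 * #(G.induce {v}ᶜ).edgeFinset := by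
    rw [h, ← hcard, ← hedges] at hE
    push_cast at hE
    have : (G.degree v : ℝ) ≤ 1 := by exact_mod_cast Nat.le_of_lt_succ hv
    nlinarith
  exact fun htw => ih _ (by omega) (hg.trans (Embedding.induce _).isContained.egirth_le) hE' rfl
    (htw.induce _)

lemma one_sub_mul_ncard_le_ncard_edgeSet_deleteEdges [Finite V] (G : SimpleGraph V)
    {F : Set (Sym2 V)} {ε : ℝ} (hF : (F.ncard : ℝ) ≤ ε * G.edgeSet.ncard) :
    (1 - ε) * G.edgeSet.ncard ≤ (G.deleteEdges F).edgeSet.ncard := by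
  have hsub : G.edgeSet ⊆ (G.deleteEdges F).edgeSet ∪ F := fun e he => by
    by_cases heF : e ∈ F
    · exact Or.inr heF
    · exact Or.inl (by simp [edgeSet_deleteEdges, he, heF])
  have : G.edgeSet.ncard ≤ (G.deleteEdges F).edgeSet.ncard + F.ncard :=
    (Set.ncard_le_ncard hsub (Set.toFinite _)).trans (Set.ncard_union_le _ _)
  have : (G.edgeSet.ncard : ℝ) ≤ (G.deleteEdges F).edgeSet.ncard + F.ncard := by
    exact_mod_cast this
  linarith

end SimpleGraph

theorem stmt_17_general (δ : ℝ) (hδ : 0 < δ) {I : Type} (Vty : I → Type)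
    [∀ i, Fintype (Vty i)]
    (Gr : ∀ i, SimpleGraph (Vty i))
    (hgirth : ∀ n : ℕ, ∃ i, (n : ℕ∞) ≤ (Gr i).girth)
    (hdeg : ∀ i,
      (2 + δ) * (Fintype.card (Vty i) : ℝ) ≤ 2 * ((Gr i).edgeSet.ncard : ℝ)) :
    ¬ (∀ ε : ℚ, 0 < ε → ∃ k : ℕ, ∀ i, ∀ w : Sym2 (Vty i) → ℚ,
        (∀ e, 0 ≤ w e) →
        ∃ F : Set (Sym2 (Vty i)), F ⊆ (Gr i).edgeSet ∧
          (∑ᶠ e ∈ F, w e) ≤ ε * (∑ᶠ e ∈ (Gr i).edgeSet, w e) ∧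
          HasTreewidthLE ((Gr i).deleteEdges F) k) := by
  intro hfrag
  classical
  -- `ε (2 + δ) < δ / 2` keeps the average degree of `G - F` at least `2 + δ / 2`,
  -- and `r = ⌈4k/δ⌉` gives `2k ≤ (δ / 2) (r + 1)`.
  obtain ⟨ε, hε0, hεδ⟩ := exists_rat_btwn (by positivity : (0 : ℝ) < δ / (2 * (2 + δ)))
  obtain ⟨k, hk⟩ := hfrag ε (by exact_mod_cast hε0)
  obtain ⟨i, hi⟩ := hgirth (8 * ⌈4 * k / δ⌉₊ + 3)
  obtain ⟨F, -, hFw, htw⟩ := hk i (fun _ => 1) fun _ => zero_le_one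
  have hF : (F.ncard : ℝ) ≤ ε * (Gr i).edgeSet.ncard := by
    have hsum (s : Set (Sym2 (Vty i))) : ∑ᶠ e ∈ s, (1 : ℚ) = s.ncard := by
      rw [← finsum_one, Nat.cast_finsum_mem (Set.toFinite s), Nat.cast_one]
    rw [hsum, hsum] at hFw
    exact_mod_cast hFw
  have : Nonempty (Vty i) := by
    have : ¬ (Gr i).IsAcyclic := fun h => by simp [girth_eq_zero.mpr h] at hi
    obtain ⟨a, -⟩ := exists_egirth_eq_length.mpr this
    exact ⟨a⟩
  refine not_hasTreewidthLE_of_egirth (r := ⌈4 * k / δ⌉₊) (δ := δ / 2) ?_ ?_ ?_ htw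
  · exact_mod_cast hi.trans <|
      (ENat.natCast_toNat_le_self _).trans (egirth_anti (deleteEdges_le F))
  · have hε : (ε : ℝ) * (2 + δ) ≤ δ / 2 := by
      rw [lt_div_iff₀ (by positivity)] at hεδ
      linarith
    have hE := (Gr i).one_sub_mul_ncard_le_ncard_edgeSet_deleteEdges hF
    rw [← Set.ncard_coe_finset, coe_edgeFinset]
    nlinarith [hdeg i, mul_le_mul_of_nonneg_right hε (Nat.cast_nonneg' (Fintype.card (Vty i)))]
  · have := Nat.le_ceil (4 * k / δ)
    rw [div_le_iff₀ hδ] at this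
    linarith

/-- Any class of graphs with unbounded girth and average degree at least
`2 + δ` is not fractionally-treewidth-fragile. -/
theorem stmt_17 (δ : ℝ) (hδ : 0 < δ) {I : Type} (Vty : I → Type)
    [∀ i, Fintype (Vty i)] [∀ i, DecidableEq (Vty i)]
    (Gr : ∀ i, SimpleGraph (Vty i))
    (hgirth : ∀ n : ℕ, ∃ i, (n : ℕ∞) ≤ (Gr i).girth)
    (hdeg : ∀ i,
      (2 + δ) * (Fintype.card (Vty i) : ℝ) ≤ 2 * ((Gr i).edgeSet.ncard : ℝ)) :
    ¬ (∀ ε : ℚ, 0 < ε → ∃ k : ℕ, ∀ i, ∀ w : Sym2 (Vty i) → ℚ,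
        (∀ e, 0 ≤ w e) →
        ∃ F : Set (Sym2 (Vty i)), F ⊆ (Gr i).edgeSet ∧
          (∑ᶠ e ∈ F, w e) ≤ ε * (∑ᶠ e ∈ (Gr i).edgeSet, w e) ∧
          HasTreewidthLE ((Gr i).deleteEdges F) k) :=
  stmt_17_general δ hδ Vty Gr hgirth hdeg
end

section
/- Let σ be a finite signature and 𝔸, 𝔹 clean σ-structures (no tuple with repeated entries has positive value) on domains of equal size, and let φ: A → B be a bijection. Define d = ∑_{f∈σ} (∑_{x∈A^{ar(f)}} |f^𝔸(x) − f^𝔹(φ∘x)|) / min(‖𝔸_f‖₁, ‖𝔹_f‖₁), where ‖𝔸_f‖₁ = ∑_x f^𝔸(x) > 0. Let C_σ = max_{f∈σ} ar(f)^{ar(f)}. Then there exists an overcast from 𝔸 to (1/(1 + C_σ·d))·𝔹; consequently opt(𝔸, ℂ) ≥ (1/(1 + C_σ·d))·opt(𝔹, ℂ) for every σ-structure ℂ. -/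
private lemma one_le_pow_self (k : ℕ) : 1 ≤ k ^ k := by
  cases k with
  | zero => simp
  | succ m => exact Nat.one_le_pow _ _ (Nat.succ_pos m)

private lemma pow_self_pos_q (k : ℕ) : 0 < (k : ℚ) ^ k := by
  cases k with
  | zero => simp
  | succ m => positivity

private lemma sum_delta_mul {G : Type} [Fintype G] [DecidableEq G] (a : G) (S : G → ℚ) (t : ℚ) :
    ∑ g : G, t * (if g = a then 1 else 0) * S g = t * S a := by
  rw [Finset.sum_eq_single a]
  · simp
  · intro b _ hb; simp [hb]
  · intro h; exact absurd (Finset.mem_univ a) h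

private lemma count_ge {A : Type} [Fintype A] [DecidableEq A] {k : ℕ} (hk : 0 < k)
    (y : Fin k → A) (hy : Function.Injective y) :
    k ^ (Fintype.card A - k) ≤
      (Finset.univ.filter (fun u : A → Fin k => ∀ i, u (y i) = i)).card := by
  classical
  have key : Fintype.card ({a : A // ∀ i, y i ≠ a} → Fin k)
      ≤ Fintype.card {u : A → Fin k // ∀ i, u (y i) = i} := by
    refine Fintype.card_le_of_injective (fun v =>
      ⟨fun a => if h : ∃ i, y i = a then h.choose
        else v ⟨a, fun i hi => h ⟨i, hi⟩⟩, fun i => ?_⟩) ?_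
    · have h : ∃ j, y j = y i := ⟨i, rfl⟩
      simp only [dif_pos h]
      exact hy h.choose_spec
    · intro v v' hvv
      funext a
      have h2 := congrFun (congrArg Subtype.val hvv) a.1
      dsimp only at h2
      rw [dif_neg (fun (h : ∃ i, y i = a.1) => a.2 h.choose h.choose_spec),
          dif_neg (fun (h : ∃ i, y i = a.1) => a.2 h.choose h.choose_spec)] at h2
      exact h2
  have hcompl : Fintype.card A - k ≤ Fintype.card {a : A // ∀ i, y i ≠ a} := by
    have hsur : Fintype.card {a : A // ∃ i, y i = a} ≤ k := by
      have := Fintype.card_le_of_surjective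
        (fun i : Fin k => (⟨y i, ⟨i, rfl⟩⟩ : {a : A // ∃ i, y i = a}))
        (fun a => ⟨a.2.choose, Subtype.ext a.2.choose_spec⟩)
      simpa using this
    have hcsc := Fintype.card_subtype_compl (p := fun a : A => ∃ i, y i = a)
    have hequiv : Fintype.card {a : A // ∀ i, y i ≠ a}
        = Fintype.card {a : A // ¬∃ i, y i = a} := by
      apply Fintype.card_congr
      apply Equiv.subtypeEquivRight
      intro a
      exact Iff.intro (fun h => fun hex => h hex.choose hex.choose_spec)
        (fun h i hi => h ⟨i, hi⟩)
    calc Fintype.card A - k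
        ≤ Fintype.card A - Fintype.card {a : A // ∃ i, y i = a} :=
          Nat.sub_le_sub_left hsur _
      _ = Fintype.card {a : A // ¬∃ i, y i = a} := hcsc.symm
      _ = Fintype.card {a : A // ∀ i, y i ≠ a} := hequiv.symm
  calc k ^ (Fintype.card A - k)
      ≤ Fintype.card ({a : A // ∀ i, y i ≠ a} → Fin k) := by
        rw [Fintype.card_fun, Fintype.card_fin]
        exact Nat.pow_le_pow_right hk hcompl
    _ ≤ Fintype.card {u : A → Fin k // ∀ i, u (y i) = i} := key
    _ = (Finset.univ.filter (fun u : A → Fin k => ∀ i, u (y i) = i)).card :=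
        Fintype.card_subtype _

private lemma exists_good {A B : Type} [Fintype A] [DecidableEq A] [Fintype B]
    [DecidableEq B] [Nonempty A] [Nonempty B] {k : ℕ} (F : (Fin k → A) → ℚ) (hF : ∀ y, 0 ≤ F y)
    (hclean : ∀ y, F y ≠ 0 → Function.Injective y)
    (hpos : 0 < ∑ y, F y) (x : Fin k → B) :
    ∃ g : A → B, (∑ y, F y) / (k : ℚ) ^ k ≤
      ∑ y ∈ Finset.univ.filter (fun y : Fin k → A => (fun i => g (y i)) = x), F y := by
  classical
  rcases Nat.eq_zero_or_pos k with hk | hk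
  · subst hk
    refine ⟨fun _ => Classical.arbitrary B, ?_⟩
    rw [Finset.filter_true_of_mem (fun y _ => Subsingleton.elim _ _)]
    simp
  · have hne : Nonempty (Fin k) := ⟨⟨0, hk⟩⟩
    obtain ⟨y0, hy0⟩ : ∃ y, F y ≠ 0 := by
      by_contra h; push_neg at h
      rw [Finset.sum_eq_zero (fun y _ => h y)] at hpos
      exact lt_irrefl 0 hpos
    have hkn : k ≤ Fintype.card A := by
      have := Fintype.card_le_of_injective y0 (hclean y0 hy0)
      simpa using this
    set n := Fintype.card A with hn
    have swap : ∑ u : A → Fin k, ∑ y ∈ Finset.univ.filter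
          (fun y : Fin k → A => (fun i => x (u (y i))) = x), F y
        = ∑ y : Fin k → A, ((Finset.univ.filter
            (fun u : A → Fin k => (fun i => x (u (y i))) = x)).card : ℚ) * F y := by
      simp_rw [Finset.sum_filter]
      rw [Finset.sum_comm]
      refine Finset.sum_congr rfl fun y _ => ?_
      rw [← Finset.sum_filter, Finset.sum_const, nsmul_eq_mul]
    have per_y : ∀ y : Fin k → A, ((k : ℚ)) ^ (n - k) * F y ≤
        ((Finset.univ.filter
            (fun u : A → Fin k => (fun i => x (u (y i))) = x)).card : ℚ) * F y := by
      intro y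
      rcases eq_or_ne (F y) 0 with h | h
      · simp [h]
      · refine mul_le_mul_of_nonneg_right ?_ (hF y)
        have hsub : (Finset.univ.filter (fun u : A → Fin k => ∀ i, u (y i) = i)) ⊆
            Finset.univ.filter (fun u : A → Fin k => (fun i => x (u (y i))) = x) := by
          intro u hu
          simp only [Finset.mem_filter, Finset.mem_univ, true_and] at hu ⊢
          funext i; rw [hu i]
        have hcard := le_trans (count_ge hk y (hclean y h)) (Finset.card_le_card hsub)
        calc ((k : ℚ)) ^ (n - k) = ((k ^ (n - k) : ℕ) : ℚ) := by push_cast; ring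
          _ ≤ _ := by exact_mod_cast hcard
    have hmain : ∑ u : A → Fin k, (∑ y, F y) / (k : ℚ) ^ k
        ≤ ∑ u : A → Fin k, ∑ y ∈ Finset.univ.filter
            (fun y : Fin k → A => (fun i => x (u (y i))) = x), F y := by
      have hkk : ((k : ℚ)) ^ k ≠ 0 := (pow_self_pos_q k).ne'
      have hpow : ((k : ℚ)) ^ (n - k) * (k : ℚ) ^ k = (k : ℚ) ^ n := by
        rw [← pow_add, Nat.sub_add_cancel hkn]
      calc ∑ u : A → Fin k, (∑ y, F y) / (k : ℚ) ^ k
          = ((k : ℚ) ^ n) * ((∑ y, F y) / (k : ℚ) ^ k) := by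
            rw [Finset.sum_const, Finset.card_univ, Fintype.card_fun, Fintype.card_fin,
              nsmul_eq_mul]
            push_cast; ring
        _ = ((k : ℚ)) ^ (n - k) * (∑ y, F y) := by
            rw [← hpow, mul_assoc, mul_comm ((k:ℚ) ^ k), div_mul_cancel₀ _ hkk]
        _ = ∑ y : Fin k → A, ((k : ℚ)) ^ (n - k) * F y := by rw [← Finset.mul_sum]
        _ ≤ ∑ y : Fin k → A, ((Finset.univ.filter
            (fun u : A → Fin k => (fun i => x (u (y i))) = x)).card : ℚ) * F y :=
            Finset.sum_le_sum fun y _ => per_y y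
        _ = _ := swap.symm
    obtain ⟨u, -, hu⟩ := Finset.exists_le_of_sum_le Finset.univ_nonempty hmain
    exact ⟨fun a => x (u a), hu⟩



/-- Edit distance bounds opt-distance: if `𝔸, 𝔹` are clean structures,
`φ : A ≃ B`, `d` is the (relative) edit distance along `φ` and
`C_σ = max_f ar(f)^{ar(f)}`, then there is an overcast from `𝔸` to
`(1/(1 + C_σ·d))·𝔹`; consequently
`opt(𝔸,ℂ) ≥ (1/(1 + C_σ·d))·opt(𝔹,ℂ)` for every `ℂ`. -/
theorem stmt_18 {σ : Type} [Fintype σ] [Nonempty σ] (ar : σ → ℕ)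
    {A B : Type} [Fintype A] [DecidableEq A] [Fintype B] [DecidableEq B]
    [Nonempty A] [Nonempty B]
    (φ : A ≃ B)
    (FA : (f : σ) → (Fin (ar f) → A) → ℚ)
    (FB : (f : σ) → (Fin (ar f) → B) → ℚ)
    (hFA : ∀ f x, 0 ≤ FA f x) (hFB : ∀ f x, 0 ≤ FB f x)
    (hcleanA : ∀ f x, FA f x ≠ 0 → Function.Injective x)
    (hcleanB : ∀ f x, FB f x ≠ 0 → Function.Injective x)
    (hnormA : ∀ f : σ, 0 < ∑ x : Fin (ar f) → A, FA f x)
    (hnormB : ∀ f : σ, 0 < ∑ x : Fin (ar f) → B, FB f x)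
    (d : ℚ)
    (hd : d = ∑ f : σ,
      (∑ x : Fin (ar f) → A, |FA f x - FB f (fun i => φ (x i))|) /
        min (∑ x : Fin (ar f) → A, FA f x) (∑ x : Fin (ar f) → B, FB f x))
    (Cσ : ℚ)
    (hC : Cσ = ((Finset.univ.sup' Finset.univ_nonempty
      (fun f : σ => (ar f) ^ (ar f)) : ℕ) : ℚ)) :
    (∃ ω : (A → B) → ℚ, (∀ g, 0 ≤ ω g) ∧ (∑ g : A → B, ω g = 1) ∧
      ∀ (f : σ) (x : Fin (ar f) → B),
        (1 / (1 + Cσ * d)) * FB f x ≤ ∑ g : A → B, ω g *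
          ∑ y ∈ Finset.univ.filter
            (fun y : Fin (ar f) → A => (fun i => g (y i)) = x), FA f y) ∧
    (∀ (C : Type) [Fintype C] [Nonempty C]
        (FC : (f : σ) → (Fin (ar f) → C) → ℚ), (∀ f x, 0 ≤ FC f x) →
      (1 / (1 + Cσ * d)) * valOpt ar FB FC ≤ valOpt ar FA FC) := by
  classical
  have hd0 : 0 ≤ d := by
    rw [hd]
    exact Finset.sum_nonneg fun f _ => div_nonneg
      (Finset.sum_nonneg fun x _ => abs_nonneg _)
      (le_min (hnormA f).le (hnormB f).le)
  have hCσ0 : 0 ≤ Cσ := by rw [hC]; positivity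
  have hden : 0 < 1 + Cσ * d := by nlinarith
  set c : ℚ := 1 / (1 + Cσ * d) with hcdef
  have hc0 : 0 < c := by rw [hcdef]; positivity
  have hc1 : c * (1 + Cσ * d) = 1 := by rw [hcdef]; field_simp
  set e : (f : σ) → (Fin (ar f) → B) → ℚ :=
    fun f x => max (FB f x - FA f (fun i => φ.symm (x i))) 0 with hedef
  have he0 : ∀ f x, 0 ≤ e f x := fun f x => le_max_right _ _
  set w : (f : σ) → (Fin (ar f) → B) → ℚ :=
    fun f x => c * e f x * ((ar f : ℚ) ^ ar f) / (∑ y : Fin (ar f) → A, FA f y) with hwdef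
  have hw0 : ∀ f x, 0 ≤ w f x := fun f x => div_nonneg
    (mul_nonneg (mul_nonneg hc0.le (he0 f x)) (pow_self_pos_q (ar f)).le) (hnormA f).le
  have key : ∀ (f : σ) (x : Fin (ar f) → B), ∃ g : A → B,
      (∑ y : Fin (ar f) → A, FA f y) / (ar f : ℚ) ^ (ar f) ≤ ∑ y ∈ Finset.univ.filter
        (fun y : Fin (ar f) → A => (fun i => g (y i)) = x), FA f y :=
    fun f x => exists_good (FA f) (hFA f) (hcleanA f) (hnormA f) x
  set gsel : (f : σ) → (Fin (ar f) → B) → (A → B) := fun f x => (key f x).choose with hgdef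
  have hgsel : ∀ f x, (∑ y : Fin (ar f) → A, FA f y) / (ar f : ℚ) ^ (ar f) ≤
      ∑ y ∈ Finset.univ.filter
        (fun y : Fin (ar f) → A => (fun i => gsel f x (y i)) = x), FA f y :=
    fun f x => (key f x).choose_spec
  set W : ℚ := ∑ f : σ, ∑ x : Fin (ar f) → B, w f x with hWdef
  have hWle : W ≤ c * (Cσ * d) := by
    rw [hWdef, hd]
    simp only [Finset.mul_sum]
    refine Finset.sum_le_sum fun f _ => ?_
    have hsum : ∑ x : Fin (ar f) → B, w f x
        = c * (((ar f : ℚ) ^ ar f) * ((∑ x : Fin (ar f) → B, e f x)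
            / (∑ y : Fin (ar f) → A, FA f y))) := by
      simp only [hwdef]
      have hrw : c * (((ar f : ℚ) ^ ar f) * ((∑ x : Fin (ar f) → B, e f x)
            / (∑ y : Fin (ar f) → A, FA f y)))
          = (∑ x : Fin (ar f) → B, e f x) *
            (c * ((ar f : ℚ) ^ ar f) / (∑ y : Fin (ar f) → A, FA f y)) := by ring
      rw [hrw, Finset.sum_mul]
      exact Finset.sum_congr rfl fun x _ => by ring
    have hEbound : (∑ x : Fin (ar f) → B, e f x)
        ≤ ∑ z : Fin (ar f) → A, |FA f z - FB f (fun i => φ (z i))| := by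
      have hre : ∑ x : Fin (ar f) → B, e f x
          = ∑ z : Fin (ar f) → A, e f (fun i => φ (z i)) :=
        (Fintype.sum_equiv (Equiv.arrowCongr (Equiv.refl (Fin (ar f))) φ)
          (fun z : Fin (ar f) → A => e f (fun i => φ (z i)))
          (fun x : Fin (ar f) → B => e f x) (fun z => rfl)).symm
      rw [hre]
      refine Finset.sum_le_sum fun z _ => ?_
      simp only [hedef]
      have h1 : (fun i => φ.symm (φ (z i))) = z := by
        funext i; exact φ.symm_apply_apply _
      rw [h1, abs_sub_comm]
      exact max_le (le_abs_self _) (abs_nonneg _)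
    have hKC : ((ar f : ℚ)) ^ (ar f) ≤ Cσ := by
      rw [hC]
      have h := Finset.le_sup' (fun f : σ => (ar f) ^ (ar f)) (Finset.mem_univ f)
      exact_mod_cast h
    rw [hsum]
    refine mul_le_mul_of_nonneg_left ?_ hc0.le
    have hminpos : 0 < min (∑ x : Fin (ar f) → A, FA f x) (∑ x : Fin (ar f) → B, FB f x) :=
      lt_min (hnormA f) (hnormB f)
    rw [← mul_div_assoc, ← mul_div_assoc]
    exact div_le_div₀ (mul_nonneg hCσ0 (Finset.sum_nonneg fun z _ => abs_nonneg _))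
      (mul_le_mul hKC hEbound (Finset.sum_nonneg fun x _ => he0 f x) hCσ0)
      hminpos (min_le_left _ _)
  have hW0 : 0 ≤ W := by
    rw [hWdef]
    exact Finset.sum_nonneg fun f _ => Finset.sum_nonneg fun x _ => hw0 f x
  have h1W : c ≤ 1 - W := by
    have h2 : c + c * (Cσ * d) = 1 := by rw [← hc1]; ring
    linarith
  set ω : (A → B) → ℚ := fun g => (1 - W) * (if g = ⇑φ then 1 else 0) +
    ∑ f : σ, ∑ x : Fin (ar f) → B, w f x * (if g = gsel f x then 1 else 0) with hωdef
  have hω0 : ∀ g, 0 ≤ ω g := by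
    intro g
    simp only [hωdef]
    refine add_nonneg (mul_nonneg (by linarith) ?_) (Finset.sum_nonneg fun f _ =>
      Finset.sum_nonneg fun x _ => mul_nonneg (hw0 f x) ?_)
    all_goals split <;> norm_num
  have hdelta : ∀ (a : A → B), ∑ g : A → B, (if g = a then (1:ℚ) else 0) = 1 := by
    intro a
    rw [Finset.sum_ite_eq' Finset.univ a (fun _ => (1:ℚ))]
    simp
  have hsum1 : ∑ g : A → B, ω g = 1 := by
    simp only [hωdef]
    rw [Finset.sum_add_distrib, ← Finset.mul_sum, hdelta ⇑φ]
    have h2 : ∑ g : A → B, ∑ f : σ, ∑ x : Fin (ar f) → B,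
        w f x * (if g = gsel f x then 1 else 0) = W := by
      rw [Finset.sum_comm, hWdef]
      refine Finset.sum_congr rfl fun f _ => ?_
      rw [Finset.sum_comm]
      refine Finset.sum_congr rfl fun x _ => ?_
      rw [← Finset.mul_sum, hdelta (gsel f x), mul_one]
    rw [h2]; ring
  have hover : ∀ (f : σ) (x : Fin (ar f) → B), c * FB f x ≤ ∑ g : A → B, ω g *
      ∑ y ∈ Finset.univ.filter (fun y : Fin (ar f) → A => (fun i => g (y i)) = x), FA f y := by
    intro f x
    set S : (A → B) → ℚ := fun g => ∑ y ∈ Finset.univ.filter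
      (fun y : Fin (ar f) → A => (fun i => g (y i)) = x), FA f y with hSdef
    have hS0 : ∀ g, 0 ≤ S g := fun g => Finset.sum_nonneg fun y _ => hFA f y
    have hexp : ∑ g : A → B, ω g * S g = (1 - W) * S ⇑φ +
        ∑ f' : σ, ∑ x' : Fin (ar f') → B, w f' x' * S (gsel f' x') := by
      simp only [hωdef, add_mul, Finset.sum_add_distrib, Finset.sum_mul]
      congr 1
      · exact sum_delta_mul ⇑φ S (1 - W)
      · rw [Finset.sum_comm]
        refine Finset.sum_congr rfl fun f' _ => ?_
        rw [Finset.sum_comm]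
        refine Finset.sum_congr rfl fun x' _ => ?_
        exact sum_delta_mul (gsel f' x') S (w f' x')
    have hSφ : S ⇑φ = FA f (fun i => φ.symm (x i)) := by
      simp only [hSdef]
      rw [Finset.sum_filter, Finset.sum_eq_single (fun i => φ.symm (x i))]
      · have hpos : (fun i => φ ((fun j => φ.symm (x j)) i)) = x := by
          funext i; exact φ.apply_symm_apply _
        rw [if_pos hpos]
      · intro y _ hy
        rw [if_neg]
        intro hcon
        apply hy
        funext i
        have := congrFun hcon i
        simpa using congrArg φ.symm this
      · intro hn; exact absurd (Finset.mem_univ _) hn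
    have h3 : FB f x - FA f (fun i => φ.symm (x i)) ≤ e f x := by
      simp only [hedef]; exact le_max_left _ _
    have hmid : c * FB f x ≤ c * FA f (fun i => φ.symm (x i)) + c * e f x := by
      have := mul_le_mul_of_nonneg_left
        (show FB f x ≤ FA f (fun i => φ.symm (x i)) + e f x by linarith) hc0.le
      linarith
    have hterm : c * e f x ≤ w f x * S (gsel f x) := by
      have hK := (pow_self_pos_q (ar f)).ne'
      have hmA := (hnormA f).ne'
      have heq : w f x * ((∑ y : Fin (ar f) → A, FA f y) / (ar f : ℚ) ^ (ar f))
          = c * e f x := by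
        simp only [hwdef]
        field_simp
      calc c * e f x = _ := heq.symm
        _ ≤ w f x * S (gsel f x) := mul_le_mul_of_nonneg_left (hgsel f x) (hw0 f x)
    have hfirst : c * FA f (fun i => φ.symm (x i)) ≤ (1 - W) * S ⇑φ := by
      rw [hSφ]
      exact mul_le_mul_of_nonneg_right h1W (hFA f _)
    have hdrop : w f x * S (gsel f x) ≤
        ∑ f' : σ, ∑ x' : Fin (ar f') → B, w f' x' * S (gsel f' x') := by
      calc w f x * S (gsel f x)
          ≤ ∑ x' : Fin (ar f) → B, w f x' * S (gsel f x') :=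
            Finset.single_le_sum (fun x' _ => mul_nonneg (hw0 f x') (hS0 _))
              (Finset.mem_univ x)
        _ ≤ _ :=
            Finset.single_le_sum (f := fun f' : σ => ∑ x' : Fin (ar f') → B,
                w f' x' * S (gsel f' x'))
              (fun f' _ => Finset.sum_nonneg fun x' _ => mul_nonneg (hw0 f' x') (hS0 _))
              (Finset.mem_univ f)
    rw [hexp]
    linarith
  refine ⟨⟨ω, hω0, hsum1, hover⟩, ?_⟩
  intro C _ _ FC hFC
  obtain ⟨h, -, hh⟩ := Finset.exists_mem_eq_sup' (Finset.univ_nonempty)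
    (fun h : B → C => ∑ f : σ, ∑ x : Fin (ar f) → B, FB f x * FC f (fun i => h (x i)))
  have hBval : valOpt ar FB FC
      = ∑ f : σ, ∑ x : Fin (ar f) → B, FB f x * FC f (fun i => h (x i)) := by
    rw [valOpt]; exact hh
  rw [hBval]
  have step3 : ∀ g : A → B, ∑ f : σ, ∑ y : Fin (ar f) → A,
      FA f y * FC f (fun i => h (g (y i))) ≤ valOpt ar FA FC := by
    intro g
    exact Finset.le_sup' (fun h' : A → C => ∑ f : σ, ∑ y : Fin (ar f) → A,
      FA f y * FC f (fun i => h' (y i))) (Finset.mem_univ (fun a => h (g a)))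
  calc c * ∑ f : σ, ∑ x : Fin (ar f) → B, FB f x * FC f (fun i => h (x i))
      ≤ ∑ f : σ, ∑ x : Fin (ar f) → B, (∑ g : A → B, ω g *
          ∑ y ∈ Finset.univ.filter (fun y : Fin (ar f) → A => (fun i => g (y i)) = x),
            FA f y) * FC f (fun i => h (x i)) := by
        rw [Finset.mul_sum]
        refine Finset.sum_le_sum fun f _ => ?_
        rw [Finset.mul_sum]
        refine Finset.sum_le_sum fun x _ => ?_
        rw [← mul_assoc]
        exact mul_le_mul_of_nonneg_right (hover f x) (hFC f _)
    _ = ∑ g : A → B, ω g * ∑ f : σ, ∑ y : Fin (ar f) → A,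
          FA f y * FC f (fun i => h (g (y i))) := by
        have e1 : ∀ (f : σ) (x : Fin (ar f) → B), (∑ g : A → B, ω g *
            ∑ y ∈ Finset.univ.filter (fun y : Fin (ar f) → A => (fun i => g (y i)) = x),
              FA f y) * FC f (fun i => h (x i))
            = ∑ g : A → B, ω g * ((∑ y ∈ Finset.univ.filter
                (fun y : Fin (ar f) → A => (fun i => g (y i)) = x), FA f y)
                  * FC f (fun i => h (x i))) := by
          intro f x
          rw [Finset.sum_mul]
          exact Finset.sum_congr rfl fun g _ => by ring
        have e2 : ∀ (g : A → B) (f : σ), ∑ x : Fin (ar f) → B,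
            (∑ y ∈ Finset.univ.filter (fun y : Fin (ar f) → A => (fun i => g (y i)) = x),
              FA f y) * FC f (fun i => h (x i))
            = ∑ y : Fin (ar f) → A, FA f y * FC f (fun i => h (g (y i))) := by
          intro g f
          have e3 : ∀ x : Fin (ar f) → B, (∑ y ∈ Finset.univ.filter
              (fun y : Fin (ar f) → A => (fun i => g (y i)) = x), FA f y)
                * FC f (fun i => h (x i))
              = ∑ y ∈ Finset.univ.filter
                  (fun y : Fin (ar f) → A => (fun i => g (y i)) = x),
                  FA f y * FC f (fun i => h (g (y i))) := by
            intro x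
            rw [Finset.sum_mul]
            refine Finset.sum_congr rfl fun y hy => ?_
            rw [Finset.mem_filter] at hy
            rw [← hy.2]
          calc ∑ x : Fin (ar f) → B, (∑ y ∈ Finset.univ.filter
              (fun y : Fin (ar f) → A => (fun i => g (y i)) = x), FA f y)
                * FC f (fun i => h (x i))
              = ∑ x : Fin (ar f) → B, ∑ y ∈ Finset.univ.filter
                  (fun y : Fin (ar f) → A => (fun i => g (y i)) = x),
                  FA f y * FC f (fun i => h (g (y i))) :=
                Finset.sum_congr rfl fun x _ => e3 x
            _ = _ := Finset.sum_fiberwise_of_maps_to (fun y _ => Finset.mem_univ _) _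
        calc ∑ f : σ, ∑ x : Fin (ar f) → B, (∑ g : A → B, ω g *
              ∑ y ∈ Finset.univ.filter (fun y : Fin (ar f) → A => (fun i => g (y i)) = x),
                FA f y) * FC f (fun i => h (x i))
            = ∑ f : σ, ∑ x : Fin (ar f) → B, ∑ g : A → B, ω g *
                ((∑ y ∈ Finset.univ.filter
                  (fun y : Fin (ar f) → A => (fun i => g (y i)) = x), FA f y)
                    * FC f (fun i => h (x i))) :=
              Finset.sum_congr rfl fun f _ => Finset.sum_congr rfl fun x _ => e1 f x
          _ = ∑ g : A → B, ∑ f : σ, ∑ x : Fin (ar f) → B, ω g *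
                ((∑ y ∈ Finset.univ.filter
                  (fun y : Fin (ar f) → A => (fun i => g (y i)) = x), FA f y)
                    * FC f (fun i => h (x i))) := by
              rw [Finset.sum_comm]
              exact Finset.sum_congr rfl fun f _ => Finset.sum_comm
          _ = _ := by
              refine Finset.sum_congr rfl fun g _ => ?_
              rw [Finset.mul_sum]
              refine Finset.sum_congr rfl fun f _ => ?_
              rw [← Finset.mul_sum, e2 g f]
    _ ≤ ∑ g : A → B, ω g * valOpt ar FA FC :=
        Finset.sum_le_sum fun g _ => mul_le_mul_of_nonneg_left (step3 g) (hω0 g)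
    _ = valOpt ar FA FC := by
        rw [← Finset.sum_mul, hsum1, one_mul]
end

section
/- For every dimension d ∈ ℕ and ε > 0 there is a k = k(d, ε) such that: for every finite sequence of vectors v_1, …, v_n ∈ ℚ≥0^d there is a sequence w_1, …, w_n ∈ ℚ≥0^d such that (a) for each coordinate i ∈ {1,…,d}, ∑_{j=1}^{n} |v_j(i) − w_j(i)| ≤ ε·∑_{j=1}^{n} v_j(i), and (b) the set {w_1, …, w_n} contains at most k vectors up to positive rescaling (i.e., there exist vectors u_1, …, u_k such that each w_j is a nonnegative scalar multiple of some u_t). -/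
/-- Grid rounding: index of the rounded value. `0` means rounded to zero;
`s+1` means rounded to `δ * (1+ε')^s`. -/
def rgrid (δ ε' : ℚ) (N : ℕ) (x : ℚ) : ℕ :=
  if x < δ then 0 else Nat.findGreatest (fun s => δ * (1 + ε') ^ s ≤ x) N + 1

/-- Grid values. -/
def rval (δ ε' : ℚ) : ℕ → ℚ
  | 0 => 0
  | s + 1 => δ * (1 + ε') ^ s

lemma rval_nonneg {δ ε' : ℚ} (hδ : 0 ≤ δ) (hε' : 0 ≤ ε') (t : ℕ) :
    0 ≤ rval δ ε' t := by
  cases t with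
  | zero => simp [rval]
  | succ s => exact mul_nonneg hδ (pow_nonneg (by linarith) s)

lemma rgrid_le (δ ε' : ℚ) (N : ℕ) (x : ℚ) : rgrid δ ε' N x ≤ N + 1 := by
  unfold rgrid
  split
  · exact Nat.zero_le _
  · exact Nat.succ_le_succ (Nat.findGreatest_le N)

lemma rval_rgrid_le {δ ε' : ℚ} (N : ℕ) {x : ℚ} (hx : 0 ≤ x) :
    rval δ ε' (rgrid δ ε' N x) ≤ x := by
  unfold rgrid
  split
  · simpa [rval] using hx
  · next h =>
    have h0 : δ * (1 + ε') ^ 0 ≤ x := by simpa using not_lt.mp h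
    have := Nat.findGreatest_spec (P := fun s => δ * (1 + ε') ^ s ≤ x) (Nat.zero_le N) h0
    simpa [rval] using this

lemma rval_rgrid_err {δ ε' : ℚ} {N : ℕ} {x : ℚ} (hδ : 0 < δ) (hε' : 0 < ε')
    (hx0 : 0 ≤ x) (hx1 : x ≤ 1) (hN : 1 < δ * (1 + ε') ^ N) :
    x - rval δ ε' (rgrid δ ε' N x) ≤ δ + ε' * x := by
  unfold rgrid
  split
  · next h => simp only [rval]; nlinarith
  · next h =>
    have hδx : δ ≤ x := not_lt.mp h
    set P : ℕ → Prop := fun s => δ * (1 + ε') ^ s ≤ x with hP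
    have h0 : P 0 := by simpa [hP] using hδx
    set s := Nat.findGreatest P N with hs
    have hPs : P s := hs ▸ Nat.findGreatest_spec (P := P) (Nat.zero_le N) h0
    have hsN : s < N := by
      rcases lt_or_eq_of_le (Nat.findGreatest_le (P := P) N) with h' | h'
      · exact h'
      · exfalso
        have : P N := h' ▸ hPs
        simp only [hP] at this
        linarith
    have hnot : ¬ P (s + 1) := Nat.findGreatest_is_greatest (P := P) (n := N) (by rw [← hs]; omega) (by omega)
    simp only [hP, not_le] at hnot hPs
    -- x < δ (1+ε')^(s+1) = rval (s+1) * (1+ε')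
    have hval : rval δ ε' (s + 1) = δ * (1 + ε') ^ s := rfl
    rw [hval]
    have hexp : δ * (1 + ε') ^ (s + 1) = δ * (1 + ε') ^ s * (1 + ε') := by ring
    rw [hexp] at hnot
    nlinarith [hPs, hnot]

/-- For every dimension `d` and `ε > 0` there is a `k` such that every finite
sequence of vectors in `ℚ≥0^d` can be approximated, coordinatewise within a
relative `ε` in `ℓ¹`, by a sequence containing at most `k` distinct vectors up
to nonnegative rescaling. -/
theorem stmt_19 (d : ℕ) (ε : ℚ) (hε : 0 < ε) :
    ∃ k : ℕ, ∀ (n : ℕ) (v : Fin n → Fin d → ℚ), (∀ j i, 0 ≤ v j i) →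
      ∃ w : Fin n → Fin d → ℚ, (∀ j i, 0 ≤ w j i) ∧
        (∀ i : Fin d, ∑ j : Fin n, |v j i - w j i| ≤ ε * ∑ j : Fin n, v j i) ∧
        ∃ u : Fin k → (Fin d → ℚ),
          ∀ j : Fin n, ∃ (t : Fin k) (c : ℚ), 0 ≤ c ∧ w j = c • u t := by
  rcases Nat.eq_zero_or_pos d with hd | hd
  · subst hd
    refine ⟨1, fun n v hv => ⟨v, hv, fun i => i.elim0, fun _ _ => 0, fun j => ⟨0, 0, le_refl 0, ?_⟩⟩⟩
    funext i; exact i.elim0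
  · have hdQ : (0:ℚ) < d := by exact_mod_cast hd
    set ε' : ℚ := ε / 2 with hε'def
    set δ : ℚ := ε / (2 * d) with hδdef
    have hε' : 0 < ε' := by positivity
    have hδ : 0 < δ := div_pos hε (by positivity)
    set N : ℕ := ⌈(δ * ε')⁻¹⌉₊ with hNdef
    have hN : 1 < δ * (1 + ε') ^ N := by
      have hber : 1 + (N:ℚ) * ε' ≤ (1 + ε') ^ N := one_add_mul_le_pow (by linarith) N
      have hle : (δ * ε')⁻¹ ≤ (N:ℚ) := Nat.le_ceil _
      have hinv : (δ * ε')⁻¹ * ε' = 1 / δ := by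
        rw [mul_inv, mul_assoc, inv_mul_cancel₀ (ne_of_gt hε'), mul_one, one_div]
      have h1 : 1 / δ ≤ (N:ℚ) * ε' := by
        rw [← hinv]; exact mul_le_mul_of_nonneg_right hle hε'.le
      have h2 : δ * (1 / δ) = 1 := by field_simp
      nlinarith
    refine ⟨Fintype.card (Fin d → Fin (N+2)), fun n v hv => ?_⟩
    set S : Fin d → ℚ := fun i => ∑ j, v j i with hSdef
    have hS : ∀ i, 0 ≤ S i := fun i => Finset.sum_nonneg fun j _ => hv j i
    set r : Fin n → Fin d → ℚ := fun j i => v j i / S i with hrdef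
    have hr : ∀ j i, 0 ≤ r j i := fun j i => div_nonneg (hv j i) (hS i)
    set M : Fin n → ℚ := fun j => ∑ i, r j i with hMdef
    have hM : ∀ j, 0 ≤ M j := fun j => Finset.sum_nonneg fun i _ => hr j i
    have hrM : ∀ j i, r j i ≤ M j := fun j i =>
      Finset.single_le_sum (fun i _ => hr j i) (Finset.mem_univ i)
    have hrvnn : ∀ t, 0 ≤ rval δ ε' t := rval_nonneg hδ.le hε'.le
    set w : Fin n → Fin d → ℚ :=
      fun j i => S i * (M j * rval δ ε' (rgrid δ ε' N (r j i / M j))) with hwdef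
    -- per-entry bounds
    have key : ∀ j i, 0 ≤ r j i - M j * rval δ ε' (rgrid δ ε' N (r j i / M j)) ∧
        r j i - M j * rval δ ε' (rgrid δ ε' N (r j i / M j)) ≤ δ * M j + ε' * r j i := by
      intro j i
      rcases eq_or_lt_of_le (hM j) with hMj | hMj
      · have hrj : r j i = 0 := le_antisymm (hMj ▸ hrM j i) (hr j i)
        constructor
        · rw [hrj, ← hMj]; ring_nf; exact le_refl 0
        · rw [hrj, ← hMj]; ring_nf; exact le_refl 0
      · have hx0 : 0 ≤ r j i / M j := div_nonneg (hr j i) (hM j)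
        have hx1 : r j i / M j ≤ 1 := (div_le_one hMj).mpr (hrM j i)
        have hfle := rval_rgrid_le (δ := δ) (ε' := ε') N hx0
        have herr := rval_rgrid_err hδ hε' hx0 hx1 hN
        have hxr : r j i = M j * (r j i / M j) := by field_simp
        constructor
        · nlinarith [mul_le_mul_of_nonneg_left hfle hMj.le, hxr]
        · nlinarith [mul_le_mul_of_nonneg_left herr hMj.le, hxr]
    refine ⟨w, ?_, ?_, ?_⟩
    · intro j i
      exact mul_nonneg (hS i) (mul_nonneg (hM j) (hrvnn _))
    · intro i
      have hSi_eq : S i = ∑ j, v j i := rfl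
      rcases eq_or_lt_of_le (hS i) with hSi | hSi
      · -- S i = 0, so all entries are 0
        have hv0 : ∀ j, v j i = 0 := by
          intro j
          exact (Finset.sum_eq_zero_iff_of_nonneg (fun j _ => hv j i)).mp hSi.symm j
            (Finset.mem_univ j)
        have hterm : ∀ j : Fin n, |v j i - w j i| = 0 := by
          intro j
          have hw0 : w j i = 0 := by
            show S i * _ = 0
            rw [← hSi, zero_mul]
          rw [hv0 j, hw0]; simp
        rw [Finset.sum_congr rfl fun j _ => hterm j, ← hSi_eq, ← hSi]
        simp
      · have hSne : S i ≠ 0 := ne_of_gt hSi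
        have hv_eq : ∀ j, v j i = S i * r j i := by
          intro j
          show v j i = S i * (v j i / S i)
          field_simp
        have h1 : ∑ j, r j i = 1 := by
          show ∑ j, v j i / S i = 1
          rw [← Finset.sum_div, ← hSi_eq, div_self hSne]
        have h2 : ∑ j, M j ≤ (d:ℚ) := by
          have hcomm : ∑ j, M j = ∑ i' : Fin d, ∑ j, r j i' := Finset.sum_comm
          rw [hcomm]
          have hbd : ∀ i' : Fin d, ∑ j, r j i' ≤ 1 := by
            intro i'
            show ∑ j, v j i' / S i' ≤ 1
            rw [← Finset.sum_div]
            show S i' / S i' ≤ 1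
            rcases eq_or_ne (S i') 0 with h | h
            · rw [h]; norm_num
            · rw [div_self h]
          calc ∑ i' : Fin d, ∑ j, r j i' ≤ ∑ i' : Fin d, (1:ℚ) :=
                Finset.sum_le_sum fun i' _ => hbd i'
            _ = (d:ℚ) := by simp
        calc ∑ j, |v j i - w j i|
            = ∑ j, S i * (r j i - M j * rval δ ε' (rgrid δ ε' N (r j i / M j))) := by
              refine Finset.sum_congr rfl fun j _ => ?_
              rw [hv_eq j, show w j i = S i * (M j * rval δ ε' (rgrid δ ε' N (r j i / M j))) from rfl,
                ← mul_sub, abs_mul, abs_of_pos hSi, abs_of_nonneg (key j i).1]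
          _ = S i * ∑ j, (r j i - M j * rval δ ε' (rgrid δ ε' N (r j i / M j))) :=
              (Finset.mul_sum _ _ _).symm
          _ ≤ S i * (δ * (d:ℚ) + ε' * 1) := by
              refine mul_le_mul_of_nonneg_left ?_ (hS i)
              calc ∑ j, (r j i - M j * rval δ ε' (rgrid δ ε' N (r j i / M j)))
                  ≤ ∑ j, (δ * M j + ε' * r j i) := Finset.sum_le_sum fun j _ => (key j i).2
                _ = δ * (∑ j, M j) + ε' * (∑ j, r j i) := by
                    rw [Finset.sum_add_distrib, ← Finset.mul_sum, ← Finset.mul_sum]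
                _ ≤ δ * (d:ℚ) + ε' * 1 := by
                    rw [h1]
                    exact add_le_add (mul_le_mul_of_nonneg_left h2 hδ.le) (le_refl _)
          _ = ε * ∑ j, v j i := by
              rw [← hSi_eq, hδdef, hε'def]
              field_simp
              ring
    · -- bounded number of directions
      set e := Fintype.equivFin (Fin d → Fin (N+2)) with hedef
      refine ⟨fun t i => S i * rval δ ε' ((e.symm t) i), fun j => ?_⟩
      refine ⟨e (fun i => ⟨rgrid δ ε' N (r j i / M j), by
        have := rgrid_le δ ε' N (r j i / M j); omega⟩), M j, hM j, ?_⟩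
      funext i
      simp only [Pi.smul_apply, smul_eq_mul, Equiv.symm_apply_apply]
      show S i * (M j * rval δ ε' (rgrid δ ε' N (r j i / M j)))
        = M j * (S i * rval δ ε' (rgrid δ ε' N (r j i / M j)))
      ring
end
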